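/- arXiv:2001.04115 — 5 statements merged into one kernel-verified Lean document; each statement's English description precedes it below -/
import Mathlib

section
/- Weighted exponential integral estimate: let a < x, ℓ ∈ ℕ₀, let ε be a smooth positive function with ε'(t) ≥ σ₀ ≥ 0 for t ∈ [a,x], set e_a(t) = ∫ₐᵗ 1/ε(z) dz, and let γ > −(ℓ+1)σ₀. Then ∫ₐˣ ε(t)^ℓ e^{γ e_a(t)} dt ≤ (1/(γ + (ℓ+1)σ₀)) ( ε(x)^{ℓ+1} e^{γ e_a(x)} − ε(a)^{ℓ+1} ). -/
/-- Weighted exponential integral estimate (Lemma 3 of the paper):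
if `ε' ≥ σ₀ ≥ 0` on `[a,x]` and `γ > -(ℓ+1)σ₀`, then
`∫ₐˣ ε(t)^ℓ e^{γ e_a(t)} dt ≤ (γ + (ℓ+1)σ₀)⁻¹ (ε(x)^{ℓ+1} e^{γ e_a(x)} − ε(a)^{ℓ+1})`,
where `e_a(t) = ∫ₐᵗ 1/ε(z) dz`. -/
theorem weighted_exponential_integral_estimate
    (a x σ₀ γ : ℝ) (ℓ : ℕ) (ε ea : ℝ → ℝ)
    (hax : a < x)
    (hε : ContDiff ℝ (⊤ : ℕ∞) ε)
    (hpos : ∀ t ∈ Set.Icc a x, 0 < ε t)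
    (hσ₀ : 0 ≤ σ₀)
    (hder : ∀ t ∈ Set.Icc a x, σ₀ ≤ deriv ε t)
    (hγ : -((ℓ : ℝ) + 1) * σ₀ < γ)
    (hea : ∀ t, ea t = ∫ z in a..t, 1 / ε z) :
    (∫ t in a..x, ε t ^ ℓ * Real.exp (γ * ea t))
      ≤ (1 / (γ + ((ℓ : ℝ) + 1) * σ₀)) *
        (ε x ^ (ℓ + 1) * Real.exp (γ * ea x) - ε a ^ (ℓ + 1)) := by
  set c : ℝ := γ + ((ℓ : ℝ) + 1) * σ₀ with hc_def
  have hc : 0 < c := by simp only [hc_def]; nlinarith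
  have haxle : a ≤ x := hax.le
  have hεcont : Continuous ε := hε.continuous
  -- open set where ε ≠ 0
  set U : Set ℝ := {z | ε z ≠ 0} with hU_def
  have hUopen : IsOpen U := isOpen_ne_fun hεcont continuous_const
  have hIccU : Set.Icc a x ⊆ U := fun t ht => (hpos t ht).ne'
  have hcontU : ContinuousOn (fun z => 1 / ε z) U := by
    intro z hz
    exact ((continuousAt_const.div (hεcont.continuousAt) hz).continuousWithinAt)
  -- interval integrability of 1/ε on subintervals
  have hii : ∀ t ∈ Set.Icc a x, IntervalIntegrable (fun z => 1 / ε z) MeasureTheory.volume a t := by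
    intro t ht
    apply ContinuousOn.intervalIntegrable
    apply hcontU.mono
    refine subset_trans ?_ hIccU
    rw [Set.uIcc_of_le ht.1]
    exact Set.Icc_subset_Icc le_rfl ht.2
  -- ea has derivative 1/ε t at each t ∈ [a,x]
  have hea_deriv : ∀ t ∈ Set.Icc a x, HasDerivAt ea (1 / ε t) t := by
    intro t ht
    have : HasDerivAt (fun u => ∫ z in a..u, 1 / ε z) (1 / ε t) t := by
      apply intervalIntegral.integral_hasDerivAt_right (hii t ht)
      · exact hcontU.stronglyMeasurableAtFilter hUopen t (hIccU ht)
      · exact continuousAt_const.div hεcont.continuousAt (hIccU ht)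
    convert this using 1
    funext u; exact hea u
  -- the antiderivative F
  set F : ℝ → ℝ := fun t => ε t ^ (ℓ + 1) * Real.exp (γ * ea t) with hF_def
  set F' : ℝ → ℝ := fun t => (((ℓ : ℝ) + 1) * deriv ε t + γ) * (ε t ^ ℓ * Real.exp (γ * ea t))
    with hF'_def
  have hεder : ∀ t : ℝ, HasDerivAt ε (deriv ε t) t :=
    fun t => (hε.differentiable (by simp) t).hasDerivAt
  have hF : ∀ t ∈ Set.Icc a x, HasDerivAt F (F' t) t := by
    intro t ht
    have h1 : HasDerivAt (fun s => ε s ^ (ℓ + 1))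
        ((↑(ℓ + 1) : ℝ) * ε t ^ ℓ * deriv ε t) t := by
      have := (hεder t).pow (ℓ + 1)
      simpa [Pi.pow_def] using this
    have h2 : HasDerivAt (fun s => Real.exp (γ * ea s))
        (Real.exp (γ * ea t) * (γ * (1 / ε t))) t := by
      exact (Real.hasDerivAt_exp _).comp t ((hea_deriv t ht).const_mul γ)
    have : HasDerivAt (fun s => ε s ^ (ℓ + 1) * Real.exp (γ * ea s)) _ t := h1.fun_mul h2
    convert this using 1
    have hεt : ε t ≠ 0 := (hpos t ht).ne'
    simp only [hF'_def]
    field_simp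
    push_cast
    ring
  -- continuity facts
  have hea_contOn : ContinuousOn ea (Set.Icc a x) :=
    fun t ht => ((hea_deriv t ht).continuousAt).continuousWithinAt
  have hg_contOn : ContinuousOn (fun t => ε t ^ ℓ * Real.exp (γ * ea t)) (Set.Icc a x) :=
    ((hεcont.continuousOn.pow ℓ).mul
      (Real.continuous_exp.comp_continuousOn (continuousOn_const.mul hea_contOn)))
  have hF'_contOn : ContinuousOn F' (Set.Icc a x) := by
    apply ContinuousOn.mul
    · exact (continuousOn_const.mul (hε.continuous_deriv (by simp)).continuousOn).add
        continuousOn_const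
    · exact hg_contOn
  have hg_ii : IntervalIntegrable (fun t => ε t ^ ℓ * Real.exp (γ * ea t))
      MeasureTheory.volume a x := by
    apply ContinuousOn.intervalIntegrable
    rwa [Set.uIcc_of_le haxle]
  have hF'_ii : IntervalIntegrable F' MeasureTheory.volume a x := by
    apply ContinuousOn.intervalIntegrable
    rwa [Set.uIcc_of_le haxle]
  -- FTC
  have hFTC : (∫ t in a..x, F' t) = F x - F a := by
    apply intervalIntegral.integral_eq_sub_of_hasDerivAt
    · intro t ht
      rw [Set.uIcc_of_le haxle] at ht
      exact hF t ht
    · exact hF'_ii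
  have hea_a : ea a = 0 := by rw [hea a, intervalIntegral.integral_same]
  have hFa : F a = ε a ^ (ℓ + 1) := by simp [hF_def, hea_a]
  -- pointwise bound
  have hmono : ∀ t ∈ Set.Icc a x,
      c * (ε t ^ ℓ * Real.exp (γ * ea t)) ≤ F' t := by
    intro t ht
    have h1 : c ≤ ((ℓ : ℝ) + 1) * deriv ε t + γ := by
      have := hder t ht
      have hl1 : (0:ℝ) ≤ (ℓ : ℝ) + 1 := by positivity
      nlinarith
    have h2 : 0 ≤ ε t ^ ℓ * Real.exp (γ * ea t) := by
      have := (hpos t ht).le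
      positivity
    exact mul_le_mul_of_nonneg_right h1 h2
  have hint : c * (∫ t in a..x, ε t ^ ℓ * Real.exp (γ * ea t)) ≤ F x - F a := by
    rw [← hFTC, ← intervalIntegral.integral_const_mul]
    apply intervalIntegral.integral_mono_on haxle (hg_ii.const_mul c) hF'_ii hmono
  rw [one_div, inv_mul_eq_div, le_div_iff₀ hc]
  have hFx : F x = ε x ^ (ℓ + 1) * Real.exp (γ * ea x) := rfl
  rw [hFa, hFx] at hint
  linarith
end

section
/- Uniform bound on the extended domain: suppose (ε*)' ≥ 0 on [a,1]. Then the solution w of the problem −(ε* w')' − b* w' + c* w = f* on (a,1), w(a) = 0, w(1) = u₁, satisfies |w(x)| ≤ (1/β)‖f*‖_∞ (1 − x) + |u₁| for all x ∈ [a,1]; in particular |w(x)| ≤ C with C depending only on β, ‖f*‖_∞ and |u₁|. -/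
open Set

/-- Weak maximum principle helper: if `L u > 0` strictly on `(a,1)` and `u ≥ 0`
at both endpoints, then `u ≥ 0` on `[a,1]`. -/
lemma ube_helper_nonneg (a : ℝ) (εs bs cs u : ℝ → ℝ) (ha1 : a < 1)
    (hε : ∀ x ∈ Set.Icc a 1, 0 < εs x) (hc : ∀ x ∈ Set.Icc a 1, 0 ≤ cs x)
    (hu : Continuous u)
    (hg : Differentiable ℝ (fun t => εs t * deriv u t))
    (hpos : ∀ x ∈ Set.Ioo a 1,
      0 < -(deriv (fun t => εs t * deriv u t) x) - bs x * deriv u x + cs x * u x)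
    (hua : 0 ≤ u a) (hu1 : 0 ≤ u 1) : ∀ x ∈ Set.Icc a 1, 0 ≤ u x := by
  intro x hx
  by_contra hneg
  push_neg at hneg
  obtain ⟨x₀, hx₀, hmin⟩ := isCompact_Icc.exists_isMinOn (nonempty_Icc.mpr ha1.le)
    hu.continuousOn
  have hx₀neg : u x₀ < 0 := lt_of_le_of_lt (hmin hx) hneg
  have hx₀a : x₀ ≠ a := by rintro rfl; linarith
  have hx₀1 : x₀ ≠ 1 := by rintro rfl; linarith
  have hx₀io : x₀ ∈ Set.Ioo a 1 :=
    ⟨lt_of_le_of_ne hx₀.1 (Ne.symm hx₀a), lt_of_le_of_ne hx₀.2 hx₀1⟩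
  have hloc : IsLocalMin u x₀ := hmin.isLocalMin (Icc_mem_nhds hx₀io.1 hx₀io.2)
  have hdu0 : deriv u x₀ = 0 := hloc.deriv_eq_zero
  set g := fun t => εs t * deriv u t with hgdef
  have hg0 : g x₀ = 0 := by simp [hgdef, hdu0]
  have hgd : deriv g x₀ < 0 := by
    have h1 := hpos x₀ hx₀io
    have h2 : cs x₀ * u x₀ ≤ 0 :=
      mul_nonpos_of_nonneg_of_nonpos (hc x₀ (Ioo_subset_Icc_self hx₀io)) hx₀neg.le
    rw [hdu0] at h1
    simp only [mul_zero, sub_zero] at h1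
    linarith
  have hgderiv : HasDerivAt g (deriv g x₀) x₀ := (hg x₀).hasDerivAt
  have hslope := hasDerivAt_iff_tendsto_slope.mp hgderiv
  have hev : ∀ᶠ y in nhdsWithin x₀ (Set.Iio x₀), 0 < g y := by
    have h1 : ∀ᶠ y in nhdsWithin x₀ {x₀}ᶜ, slope g x₀ y < 0 :=
      hslope.eventually_lt_const hgd
    have h2 : ∀ᶠ y in nhdsWithin x₀ (Set.Iio x₀), slope g x₀ y < 0 :=
      h1.filter_mono (nhdsWithin_mono x₀ (fun y hy => ne_of_lt hy))
    filter_upwards [h2, self_mem_nhdsWithin] with y hy hy'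
    rw [slope_def_field, hg0] at hy
    have hy0 : y - x₀ < 0 := sub_neg.mpr hy'
    rcases div_neg_iff.mp hy with h | h
    · linarith [h.1]
    · linarith [h.2]
  obtain ⟨l, hl, hls⟩ := mem_nhdsLT_iff_exists_Ioo_subset.mp hev
  set c := max l ((a + x₀) / 2) with hcdef
  have hca : a < c := lt_max_of_lt_right (by linarith [hx₀io.1])
  have hcx : c < x₀ := max_lt hl (by linarith [hx₀io.1])
  have hmono : StrictMonoOn u (Set.Icc c x₀) := by
    apply strictMonoOn_of_deriv_pos (convex_Icc c x₀) hu.continuousOn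
    intro y hy
    rw [interior_Icc] at hy
    have hgy : 0 < g y := hls ⟨lt_of_le_of_lt (le_max_left _ _) hy.1, hy.2⟩
    have hεy : 0 < εs y := hε y ⟨(hca.trans hy.1).le, hy.2.le.trans hx₀.2⟩
    by_contra h
    push_neg at h
    have hgy' : 0 < εs y * deriv u y := hgy
    nlinarith [mul_nonpos_of_nonneg_of_nonpos hεy.le h]
  have h3 : u c < u x₀ := hmono ⟨le_refl c, hcx.le⟩ ⟨hcx.le, le_refl x₀⟩ hcx
  have h4 : u x₀ ≤ u c := hmin ⟨hca.le, hcx.le.trans hx₀.2⟩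
  linarith


lemma ube_side (a β epsLow F δ B : ℝ) (εs bs cs fs w : ℝ → ℝ)
    (ha1 : a < 1) (hβ : 0 < β) (hεlow : 0 < epsLow)
    (hεs : ContDiff ℝ (⊤ : ℕ∞) εs)
    (hbnd : ∀ x ∈ Set.Icc a 1, epsLow ≤ εs x ∧ β ≤ bs x ∧ 0 ≤ cs x)
    (hmono : ∀ x ∈ Set.Icc a 1, 0 ≤ deriv εs x)
    (hw : ContDiff ℝ 2 w)
    (hode : ∀ x ∈ Set.Ioo a 1,
      -(deriv (fun t => εs t * deriv w t) x) - bs x * deriv w x + cs x * w x = fs x)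
    (hF : ∀ x ∈ Set.Icc a 1, fs x ≤ F) (hF0 : 0 ≤ F) (hδ : 0 < δ) (hB : 0 ≤ B)
    (hwa : w a ≤ B) (hw1 : w 1 ≤ B) :
    ∀ x ∈ Set.Icc a 1, w x ≤ (1 / β) * (F + δ) * (1 - x) + B := by
  have hwdiff : Differentiable ℝ w ∧ ContDiff ℝ 1 (deriv w) := by
    have hw' : ContDiff ℝ ((1 : ℕ) + 1) w := by exact_mod_cast hw
    obtain ⟨h1, -, h2⟩ := contDiff_succ_iff_deriv.mp hw'
    exact ⟨h1, by exact_mod_cast h2⟩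
  have hdw : Differentiable ℝ (deriv w) := hwdiff.2.differentiable one_ne_zero
  have hεd : Differentiable ℝ εs := hεs.differentiable (by simp)
  set c : ℝ := (1 / β) * (F + δ) with hcdef
  have hc0 : 0 < c := by
    apply mul_pos (by positivity); linarith
  set u : ℝ → ℝ := fun x => c * (1 - x) + B - w x with hudef
  have hderiv_u : deriv u = fun t => -c - deriv w t := by
    funext t
    have h1 : HasDerivAt u (-c - deriv w t) t := by
      have h2 := ((((hasDerivAt_id t).const_sub 1).const_mul c).add_const B).sub
        ((hwdiff.1 t).hasDerivAt)
      exact h2.congr_deriv (by ring)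
    exact h1.deriv
  have hG : Differentiable ℝ (fun t => εs t * deriv w t) := hεd.mul hdw
  have e2 : (fun t => εs t * deriv u t) = fun t => (-c) * εs t - εs t * deriv w t := by
    funext t
    simp only [hderiv_u]
    ring
  have hg : Differentiable ℝ (fun t => εs t * deriv u t) := by
    rw [e2]
    exact (hεd.const_mul (-c)).sub hG
  have key : ∀ x ∈ Set.Icc a 1, 0 ≤ u x := by
    apply ube_helper_nonneg a εs bs cs u ha1
      (fun x hx => lt_of_lt_of_le hεlow (hbnd x hx).1)
      (fun x hx => (hbnd x hx).2.2)
    · exact ((continuous_const.mul (continuous_const.sub continuous_id)).add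
        continuous_const).sub hw.continuous
    · exact hg
    swap
    · simp only [hudef]; nlinarith [hc0, ha1, hwa]
    swap
    · simp only [hudef]; nlinarith [hw1]
    · intro x hx
      have hxI : x ∈ Set.Icc a 1 := Ioo_subset_Icc_self hx
      have e3 : deriv (fun t => εs t * deriv u t) x
          = (-c) * deriv εs x - deriv (fun t => εs t * deriv w t) x := by
        rw [e2, deriv_fun_sub ((hεd.const_mul (-c)) x) (hG x), deriv_const_mul _ (hεd x)]
      have hodex := hode x hx
      have hcb : F + δ ≤ c * bs x := by
        have h1 : c * β = F + δ := by
          rw [hcdef]; field_simp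
        calc F + δ = c * β := h1.symm
          _ ≤ c * bs x := mul_le_mul_of_nonneg_left (hbnd x hxI).2.1 hc0.le
      have hcε : 0 ≤ c * deriv εs x := mul_nonneg hc0.le (hmono x hxI)
      have hcs : 0 ≤ cs x * (c * (1 - x) + B) := by
        apply mul_nonneg (hbnd x hxI).2.2
        nlinarith [hx.2, hc0]
      have hfx : fs x ≤ F := hF x hxI
      rw [e3, hderiv_u]
      simp only [hudef]
      nlinarith [hcb, hcε, hcs, hfx, hδ, hodex]
  intro x hx
  have := key x hx
  simp only [hudef] at this
  linarith



/-- Uniform bound on the extended domain (Lemma 4 of the paper): if `(ε*)' ≥ 0` on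
`[a,1]`, then the solution `w` of `−(ε* w')' − b* w' + c* w = f*` on `(a,1)` with
`w(a) = 0`, `w(1) = u₁` satisfies
`|w(x)| ≤ (1/β) ‖f*‖_∞ (1 − x) + |u₁|` for all `x ∈ [a,1]`. -/
theorem uniform_bound_on_extended_domain
    (a β epsLow epsHigh u₁ : ℝ)
    (εs bs cs fs w : ℝ → ℝ)
    (ha : a ≤ 0) (hβ : 0 < β) (hεlow : 0 < epsLow)
    (hεs : ContDiff ℝ (⊤ : ℕ∞) εs) (hbs : ContDiff ℝ (⊤ : ℕ∞) bs)
    (hcs : ContDiff ℝ (⊤ : ℕ∞) cs) (hfs : ContDiff ℝ (⊤ : ℕ∞) fs)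
    (hbnd : ∀ x ∈ Set.Icc a 1, epsLow ≤ εs x ∧ εs x ≤ epsHigh ∧ β ≤ bs x ∧ 0 ≤ cs x)
    (hmono : ∀ x ∈ Set.Icc a 1, 0 ≤ deriv εs x)
    (hw : ContDiff ℝ 2 w)
    (hode : ∀ x ∈ Set.Ioo a 1,
      -(deriv (fun t => εs t * deriv w t) x) - bs x * deriv w x + cs x * w x = fs x)
    (hwa : w a = 0) (hw1 : w 1 = u₁) :
    ∀ x ∈ Set.Icc a 1,
      |w x| ≤ (1 / β) * sSup ((fun t => |fs t|) '' Set.Icc a 1) * (1 - x) + |u₁| := by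
  have ha1 : a < 1 := lt_of_le_of_lt ha one_pos
  set F := sSup ((fun t => |fs t|) '' Set.Icc a 1) with hFdef
  have hbdd : BddAbove ((fun t => |fs t|) '' Set.Icc a 1) :=
    (isCompact_Icc.image_of_continuousOn (hfs.continuous.abs.continuousOn)).bddAbove
  have hFle : ∀ x ∈ Set.Icc a 1, |fs x| ≤ F := fun x hx => le_csSup hbdd ⟨x, hx, rfl⟩
  have hF0 : 0 ≤ F := le_trans (abs_nonneg _) (hFle a ⟨le_refl _, ha1.le⟩)
  have hbnd' : ∀ x ∈ Set.Icc a 1, epsLow ≤ εs x ∧ β ≤ bs x ∧ 0 ≤ cs x :=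
    fun x hx => ⟨(hbnd x hx).1, (hbnd x hx).2.2.1, (hbnd x hx).2.2.2⟩
  -- derivative of -w
  have hdnw : deriv (fun t => -w t) = fun t => -deriv w t := by
    funext t; exact deriv.neg
  have hode_neg : ∀ x ∈ Set.Ioo a 1,
      -(deriv (fun t => εs t * deriv (fun s => -w s) t) x)
        - bs x * deriv (fun s => -w s) x + cs x * (-w x) = -fs x := by
    intro x hx
    have e1 : (fun t => εs t * deriv (fun s => -w s) t)
        = fun t => -(εs t * deriv w t) := by
      funext t; simp only [hdnw]; ring
    rw [e1, hdnw]
    simp only [deriv.fun_neg]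
    linarith [hode x hx]
  have key : ∀ δ, 0 < δ → ∀ x ∈ Set.Icc a 1,
      |w x| ≤ (1 / β) * (F + δ) * (1 - x) + |u₁| := by
    intro δ hδ x hx
    have h1 := ube_side a β epsLow F δ |u₁| εs bs cs fs w ha1 hβ hεlow hεs hbnd' hmono hw
      hode (fun y hy => le_trans (le_abs_self _) (hFle y hy)) hF0 hδ (abs_nonneg _)
      (by rw [hwa]; exact abs_nonneg _) (by rw [hw1]; exact le_abs_self _) x hx
    have h2 := ube_side a β epsLow F δ |u₁| εs bs cs (fun t => -fs t) (fun t => -w t)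
      ha1 hβ hεlow hεs hbnd' hmono hw.neg hode_neg
      (fun y hy => le_trans (neg_le_abs _) (hFle y hy)) hF0 hδ (abs_nonneg _)
      (by simp [hwa]) (by simp [hw1]; exact neg_le_abs _) x hx
    rw [abs_le]
    constructor
    · linarith
    · exact h1
  intro x hx
  refine le_of_forall_pos_le_add ?_
  intro ε hε
  have h2x : (0 : ℝ) < 2 - x := by linarith [hx.2]
  set δ := ε * β / (2 - x) with hδdef
  have hδ : 0 < δ := div_pos (mul_pos hε hβ) h2x
  have hkey := key δ hδ x hx
  have h3 : δ * (1 - x) / β ≤ ε := by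
    rw [div_le_iff₀ hβ, hδdef, div_mul_eq_mul_div, div_le_iff₀ h2x]
    nlinarith [mul_pos hε hβ, hx.2]
  have hexp : (1 / β) * (F + δ) * (1 - x) = (1 / β) * F * (1 - x) + δ * (1 - x) / β := by
    field_simp
  linarith
end

section
/- First-derivative bound on the extended domain: suppose (ε*)' ≥ 0 on [a,1] and set e_a(t) = ∫ₐᵗ 1/ε*(z) dz. Then there is a constant C independent of ε* such that the solution w of −(ε* w')' − b* w' + c* w = f* on (a,1), w(a) = 0, w(1) = u₁, satisfies |w'(x)| ≤ C (1 + (1/ε*(x)) e^{−β e_a(x)}) for all x ∈ [a,1]. -/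
open Set Real Filter MeasureTheory intervalIntegral

lemma pos_left_of_neg_deriv {q : ℝ → ℝ} {y m : ℝ} (hq : HasDerivAt q m y) (hqy : q y = 0)
    (hm : m < 0) : ∀ᶠ t in nhdsWithin y (Iio y), 0 < q t := by
  have hslope := hasDerivAt_iff_tendsto_slope.mp hq
  have h2 : ∀ᶠ t in nhdsWithin y {y}ᶜ, slope q y t < m / 2 :=
    hslope.eventually_lt_const (by linarith)
  have hsub : nhdsWithin y (Iio y) ≤ nhdsWithin y {y}ᶜ :=
    nhdsWithin_mono _ (fun t ht => ne_of_lt ht)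
  filter_upwards [h2.filter_mono hsub, self_mem_nhdsWithin] with t ht hty
  have hty' : t - y < 0 := sub_neg.mpr hty
  have hs : slope q y t = q t / (t - y) := by rw [slope_def_field, hqy, sub_zero]
  have : q t / (t - y) < 0 := by rw [← hs]; linarith
  rcases div_neg_iff.mp this with ⟨h1, _⟩ | ⟨_, h2⟩
  · exact h1
  · linarith

lemma maxprin (a β : ℝ) (ha1 : a < 1) (hβ : 0 < β)
    (εs bs cs z : ℝ → ℝ) (hεs : ContDiff ℝ (⊤ : ℕ∞) εs) (hz : ContDiff ℝ 2 z)
    (hεpos : ∀ x ∈ Icc a 1, 0 < εs x) (hεle : ∀ x ∈ Icc a 1, εs x ≤ 1)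
    (hεd : ∀ x ∈ Icc a 1, 0 ≤ deriv εs x)
    (hbβ : ∀ x ∈ Icc a 1, β ≤ bs x) (hc : ∀ x ∈ Icc a 1, 0 ≤ cs x)
    (hL : ∀ x ∈ Ioo a 1,
      0 ≤ -(deriv (fun t => εs t * deriv z t) x) - bs x * deriv z x + cs x * z x)
    (hza : 0 ≤ z a) (hz1 : 0 ≤ z 1) :
    ∀ x ∈ Icc a 1, 0 ≤ z x := by
  by_contra hcon
  push_neg at hcon
  obtain ⟨x₀, hx₀Icc, hx₀⟩ := hcon
  -- perturbation ψ
  obtain ⟨ψ, hψ⟩ : ∃ ψ : ℝ → ℝ, ∀ t, ψ t = Real.exp (-(β/2) * t) := ⟨_, fun _ => rfl⟩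
  have hψfun : ψ = fun t => Real.exp (-(β/2) * t) := funext hψ
  have hψpos : ∀ t, 0 < ψ t := fun t => by rw [hψ]; exact Real.exp_pos _
  have hψd : ∀ t, HasDerivAt ψ (-(β/2) * ψ t) t := by
    intro t
    have h1 : HasDerivAt (fun s : ℝ => -(β/2) * s) (-(β/2)) t := by
      simpa using (hasDerivAt_id t).const_mul (-(β/2))
    simpa [hψfun, mul_comm] using h1.exp
  have hψmono : ∀ t ∈ Icc a 1, ψ t ≤ ψ a := by
    intro t ht
    rw [hψ, hψ]
    exact Real.exp_le_exp.mpr (by nlinarith [ht.1])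
  have hψc : Continuous ψ := by
    rw [hψfun]; exact Real.continuous_exp.comp (continuous_const.mul continuous_id)
  obtain ⟨δ, hδ⟩ : ∃ δ : ℝ, δ = -z x₀ / (2 * ψ a) := ⟨_, rfl⟩
  have hδpos : 0 < δ := by
    rw [hδ]; exact div_pos (by linarith) (by have := hψpos a; linarith)
  have hδψa : δ * ψ a = -z x₀ / 2 := by
    have hψa : ψ a ≠ 0 := (hψpos a).ne'
    rw [hδ]; field_simp
  obtain ⟨h, hh⟩ : ∃ h : ℝ → ℝ, ∀ t, h t = z t + δ * ψ t := ⟨_, fun _ => rfl⟩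
  have hhfun : h = fun t => z t + δ * ψ t := funext hh
  have hzc : Continuous z := hz.continuous
  have hhc : Continuous h := by rw [hhfun]; exact hzc.add (continuous_const.mul hψc)
  obtain ⟨y, hyIcc, hymin⟩ := isCompact_Icc.exists_isMinOn (nonempty_Icc.mpr ha1.le)
    hhc.continuousOn
  have hhx₀ : h x₀ ≤ z x₀ / 2 := by
    have h1 : δ * ψ x₀ ≤ δ * ψ a := mul_le_mul_of_nonneg_left (hψmono x₀ hx₀Icc) hδpos.le
    rw [hh]; linarith
  have hyneg : h y < 0 := lt_of_le_of_lt (hymin hx₀Icc) (by linarith)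
  have hha : 0 < h a := by
    have := mul_pos hδpos (hψpos a); rw [hh]; linarith
  have hh1 : 0 < h 1 := by
    have := mul_pos hδpos (hψpos 1); rw [hh]; linarith
  have hyIoo : y ∈ Ioo a 1 := by
    rcases hyIcc.1.lt_or_eq with hlt | heq
    · rcases hyIcc.2.lt_or_eq with hlt2 | heq2
      · exact ⟨hlt, hlt2⟩
      · exact absurd (heq2 ▸ hyneg) (not_lt.mpr hh1.le)
    · exact absurd (heq ▸ hyneg) (not_lt.mpr hha.le)
  -- differentiability
  have hzd : Differentiable ℝ z := hz.differentiable (by norm_num)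
  have hz2 : ContDiff ℝ ((1 : ℕ) + 1) z := by exact_mod_cast hz
  have hzd1 : ContDiff ℝ ((1 : ℕ) : ℕ∞) (deriv z) := (contDiff_succ_iff_deriv.mp hz2).2.2
  have hzdd : Differentiable ℝ (deriv z) := hzd1.differentiable (by norm_num)
  have hεdiff : Differentiable ℝ εs := hεs.differentiable (by simp)
  have hhd : ∀ t, HasDerivAt h (deriv z t + δ * (-(β/2) * ψ t)) t := by
    intro t
    rw [hhfun]
    exact ((hzd t).hasDerivAt).add ((hψd t).const_mul δ)
  have hderivh : ∀ t, deriv h t = deriv z t + δ * (-(β/2) * ψ t) := fun t => (hhd t).deriv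
  -- local min facts
  have hlocmin : IsLocalMin h y := hymin.isLocalMin (Icc_mem_nhds hyIoo.1 hyIoo.2)
  have hdh0 : deriv h y = 0 := hlocmin.deriv_eq_zero
  -- q and its derivative at y
  obtain ⟨q, hq⟩ : ∃ q : ℝ → ℝ, ∀ t, q t = εs t * deriv h t := ⟨_, fun _ => rfl⟩
  have hq0 : q y = 0 := by rw [hq, hdh0, mul_zero]
  have hP : ∀ t, HasDerivAt (fun s => εs s * (-(β/2) * ψ s))
      (deriv εs t * (-(β/2) * ψ t) + εs t * (-(β/2) * (-(β/2) * ψ t))) t := by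
    intro t
    exact ((hεdiff t).hasDerivAt).mul ((hψd t).const_mul (-(β/2)))
  have hQz : ∀ t, HasDerivAt (fun s => εs s * deriv z s)
      (deriv εs t * deriv z t + εs t * deriv (deriv z) t) t := by
    intro t
    exact ((hεdiff t).hasDerivAt).mul ((hzdd t).hasDerivAt)
  have hqd : HasDerivAt q
      ((deriv εs y * deriv z y + εs y * deriv (deriv z) y) +
        δ * (deriv εs y * (-(β/2) * ψ y) + εs y * (-(β/2) * (-(β/2) * ψ y)))) y := by
    have hder : HasDerivAt (fun t => εs t * deriv z t + δ * (εs t * (-(β/2) * ψ t)))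
        ((deriv εs y * deriv z y + εs y * deriv (deriv z) y) +
          δ * (deriv εs y * (-(β/2) * ψ y) + εs y * (-(β/2) * (-(β/2) * ψ y)))) y :=
      (hQz y).add ((hP y).const_mul δ)
    refine hder.congr_of_eventuallyEq ?_
    filter_upwards with t
    rw [hq, hderivh t]
    ring
  -- m < 0
  have hmneg : (deriv εs y * deriv z y + εs y * deriv (deriv z) y) +
      δ * (deriv εs y * (-(β/2) * ψ y) + εs y * (-(β/2) * (-(β/2) * ψ y))) < 0 := by
    have hLy := hL y hyIoo
    have hA : deriv (fun t => εs t * deriv z t) y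
        = deriv εs y * deriv z y + εs y * deriv (deriv z) y := (hQz y).deriv
    rw [hA] at hLy
    have hψy := hψpos y
    have hεy := hεpos y (mem_Icc_of_Ioo hyIoo)
    have hεley := hεle y (mem_Icc_of_Ioo hyIoo)
    have hεdy := hεd y (mem_Icc_of_Ioo hyIoo)
    have hby := hbβ y (mem_Icc_of_Ioo hyIoo)
    have hcy := hc y (mem_Icc_of_Ioo hyIoo)
    have hzy' : deriv z y = δ * (β/2) * ψ y := by
      have h0 := hderivh y
      rw [hdh0] at h0
      linarith [h0]
    have hzyneg : z y < 0 := by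
      have h0 := hh y
      nlinarith [mul_pos hδpos hψy]
    have hczy : cs y * z y ≤ 0 := mul_nonpos_of_nonneg_of_nonpos hcy hzyneg.le
    have hbz' : β * (δ * (β/2) * ψ y) ≤ bs y * deriv z y := by
      rw [hzy']
      exact mul_le_mul_of_nonneg_right hby (by positivity)
    have hkey : deriv εs y * deriv z y + εs y * deriv (deriv z) y
        ≤ -(β * (δ * (β/2) * ψ y)) := by linarith
    have h1 : deriv εs y * (-(β/2) * ψ y) ≤ 0 := by
      have e1 : deriv εs y * (-(β/2) * ψ y) = -(deriv εs y * ((β/2) * ψ y)) := by ring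
      have : 0 ≤ deriv εs y * ((β/2) * ψ y) := mul_nonneg hεdy (by positivity)
      rw [e1]; linarith
    have h2 : εs y * (-(β/2) * (-(β/2) * ψ y)) ≤ (β/2) * ((β/2) * ψ y) := by
      have e2 : εs y * (-(β/2) * (-(β/2) * ψ y)) = εs y * ((β/2) * ((β/2) * ψ y)) := by ring
      rw [e2]
      exact mul_le_of_le_one_left (by positivity) hεley
    have hterm : δ * (deriv εs y * (-(β/2) * ψ y) + εs y * (-(β/2) * (-(β/2) * ψ y)))
        ≤ δ * ((β/2) * ((β/2) * ψ y)) :=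
      mul_le_mul_of_nonneg_left (by linarith) hδpos.le
    have hsum : -(β * (δ * (β/2) * ψ y)) + δ * ((β/2) * ((β/2) * ψ y))
        = -((δ * ψ y) * (β * β / 4)) := by ring
    have hps : 0 < (δ * ψ y) * (β * β / 4) := by positivity
    linarith
  -- q > 0 to the left of y, hence deriv h > 0 there
  have hev : ∀ᶠ t in nhdsWithin y (Iio y), 0 < q t := pos_left_of_neg_deriv hqd hq0 hmneg
  have hevIoo : ∀ᶠ t in nhdsWithin y (Iio y), t ∈ Ioo a 1 :=
    eventually_nhdsWithin_of_eventually_nhds (isOpen_Ioo.eventually_mem hyIoo)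
  have hev2 : ∀ᶠ t in nhdsWithin y (Iio y), 0 < deriv h t := by
    filter_upwards [hev, hevIoo] with t hqt htIoo
    have hεt := hεpos t (mem_Icc_of_Ioo htIoo)
    rw [hq] at hqt
    by_contra hle
    push_neg at hle
    nlinarith
  obtain ⟨l, hl, hsub2⟩ := mem_nhdsLT_iff_exists_Ioo_subset.mp hev2
  have hcy : max l a < y := max_lt hl hyIoo.1
  have hcIcc : max l a ∈ Icc a 1 := ⟨le_max_right _ _, le_trans hcy.le hyIcc.2⟩
  have hmono : StrictMonoOn h (Icc (max l a) y) := by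
    apply strictMonoOn_of_deriv_pos (convex_Icc _ y) hhc.continuousOn
    intro t ht
    rw [interior_Icc] at ht
    exact hsub2 ⟨lt_of_le_of_lt (le_max_left l a) ht.1, ht.2⟩
  have hlt : h (max l a) < h y :=
    hmono (left_mem_Icc.mpr hcy.le) (right_mem_Icc.mpr hcy.le) hcy
  exact absurd (hymin hcIcc) (not_le.mpr hlt)

lemma sup_bound (a β B u₁ K : ℝ) (ha1 : a < 1) (hβ : 0 < β) (hB : 0 < B)
    (hK1 : B ≤ K * β) (hK2 : |u₁| ≤ K) (hK0 : 0 ≤ K)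
    (εs bs cs fs w : ℝ → ℝ) (hεs : ContDiff ℝ (⊤ : ℕ∞) εs) (hw : ContDiff ℝ 2 w)
    (hεpos : ∀ x ∈ Icc a 1, 0 < εs x) (hεle : ∀ x ∈ Icc a 1, εs x ≤ 1)
    (hεd : ∀ x ∈ Icc a 1, 0 ≤ deriv εs x)
    (hbβ : ∀ x ∈ Icc a 1, β ≤ bs x) (hc : ∀ x ∈ Icc a 1, 0 ≤ cs x)
    (hf : ∀ x ∈ Icc a 1, |fs x| ≤ B)
    (hode : ∀ x ∈ Ioo a 1,
      -(deriv (fun t => εs t * deriv w t) x) - bs x * deriv w x + cs x * w x = fs x)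
    (hwa : w a = 0) (hw1 : w 1 = u₁) :
    ∀ x ∈ Icc a 1, |w x| ≤ K * (2 - a) := by
  have hεdiff : Differentiable ℝ εs := hεs.differentiable (by simp)
  have hwd : Differentiable ℝ w := hw.differentiable (by norm_num)
  have hw2 : ContDiff ℝ ((1 : ℕ) + 1) w := by exact_mod_cast hw
  have hwd1 : ContDiff ℝ ((1 : ℕ) : ℕ∞) (deriv w) := (contDiff_succ_iff_deriv.mp hw2).2.2
  have hwdd : Differentiable ℝ (deriv w) := hwd1.differentiable (by norm_num)
  have hφd : ∀ t : ℝ, HasDerivAt (fun t : ℝ => K * (2 - t)) (-K) t := by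
    intro t
    have : HasDerivAt (fun t : ℝ => 2 - t) (-1) t := by
      simpa using (hasDerivAt_id t).const_sub 2
    simpa using this.const_mul K
  have key : ∀ s : ℝ, s = 1 ∨ s = -1 → ∀ x ∈ Icc a 1, 0 ≤ K * (2 - x) + s * w x := by
    intro s hs
    have hz : ContDiff ℝ 2 (fun t => K * (2 - t) + s * w t) := by
      exact (contDiff_const.mul (contDiff_const.sub contDiff_id)).add (contDiff_const.mul hw)
    apply maxprin a β ha1 hβ εs bs cs _ hεs hz hεpos hεle hεd hbβ hc
    · intro x hx
      have hxIcc := mem_Icc_of_Ioo hx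
      have hzd : ∀ t, HasDerivAt (fun t => K * (2 - t) + s * w t) (-K + s * deriv w t) t :=
        fun t => (hφd t).add ((hwd t).hasDerivAt.const_mul s)
      have hderivz : deriv (fun t => K * (2 - t) + s * w t) = fun t => -K + s * deriv w t :=
        funext fun t => (hzd t).deriv
      have hEw : HasDerivAt (fun t => εs t * deriv w t)
          (deriv (fun t => εs t * deriv w t) x) x :=
        (((hεdiff x).mul (hwdd x)).hasDerivAt).congr_deriv rfl
      have hA : HasDerivAt (fun t => εs t * (-K)) (deriv εs x * (-K)) x :=
        (hεdiff x).hasDerivAt.mul_const (-K)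
      have hD : HasDerivAt (fun t => εs t * deriv (fun t => K * (2 - t) + s * w t) t)
          (deriv εs x * (-K) + s * deriv (fun t => εs t * deriv w t) x) x := by
        have h0 : HasDerivAt (fun t => εs t * (-K) + s * (εs t * deriv w t))
            (deriv εs x * (-K) + s * deriv (fun t => εs t * deriv w t) x) x :=
          hA.add (hEw.const_mul s)
        refine h0.congr_of_eventuallyEq ?_
        filter_upwards with t
        rw [hderivz]
        ring
      rw [hD.deriv, hderivz]
      have hodex := hode x hx
      have hbx := hbβ x hxIcc
      have hcx := hc x hxIcc
      have hεdx := hεd x hxIcc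
      have hfx := hf x hxIcc
      have h1 : 0 ≤ K * deriv εs x := mul_nonneg hK0 hεdx
      have h2 : K * β ≤ K * bs x := mul_le_mul_of_nonneg_left hbx hK0
      have h3 : 0 ≤ cs x * (K * (2 - x)) :=
        mul_nonneg hcx (mul_nonneg hK0 (by linarith [hx.2]))
      have habs := abs_le.mp hfx
      beta_reduce
      rcases hs with rfl | rfl
      · nlinarith [hodex]
      · nlinarith [hodex]
    · rcases hs with rfl | rfl <;> simp [hwa] <;> nlinarith
    · have := abs_le.mp hK2
      rcases hs with rfl | rfl <;> simp [hw1] <;> nlinarith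
  intro x hx
  have k1 := key 1 (Or.inl rfl) x hx
  have k2 := key (-1) (Or.inr rfl) x hx
  rw [abs_le]
  constructor <;> nlinarith [hx.1]

lemma deriv_bound_core (a β B u₁ M₀ : ℝ) (ha1 : a < 1) (ha0 : a ≤ 0) (hβ : 0 < β) (hB : 0 < B)
    (hM₀ : 0 ≤ M₀)
    (εs bs cs fs w : ℝ → ℝ) (hεs : ContDiff ℝ (⊤ : ℕ∞) εs) (hw : ContDiff ℝ 2 w)
    (hεpos : ∀ x ∈ Icc a 1, 0 < εs x) (hεle : ∀ x ∈ Icc a 1, εs x ≤ 1)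
    (hεmono : MonotoneOn εs (Icc a 1))
    (hbβ : ∀ x ∈ Icc a 1, β ≤ bs x) (hbB : ∀ x ∈ Icc a 1, |bs x| ≤ B)
    (hcB : ∀ x ∈ Icc a 1, |cs x| ≤ B) (hfB : ∀ x ∈ Icc a 1, |fs x| ≤ B)
    (hbc : Continuous bs) (hcc : Continuous cs) (hfc : Continuous fs)
    (hwM : ∀ x ∈ Icc a 1, |w x| ≤ M₀)
    (hode : ∀ x ∈ Ioo a 1,
      -(deriv (fun t => εs t * deriv w t) x) - bs x * deriv w x + cs x * w x = fs x)
    (hwa : w a = 0) (hw1 : w 1 = u₁) :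
    ∀ x ∈ Icc a 1, |deriv w x| ≤
      (B * (M₀ + 1) / β + (|u₁| + B * (M₀ + 1) * (1 - a) / β) * (B / (1 - Real.exp (-β))) + 1)
        * (1 + (1 / εs x) * Real.exp (-β * ∫ z in a..x, 1 / εs z)) := by
  have hεc : Continuous εs := hεs.continuous
  have hεdiff : Differentiable ℝ εs := hεs.differentiable (by simp)
  have hwd : Differentiable ℝ w := hw.differentiable (by norm_num)
  have hw2 : ContDiff ℝ ((1 : ℕ) + 1) w := by exact_mod_cast hw
  have hwd1 : ContDiff ℝ ((1 : ℕ) : ℕ∞) (deriv w) := (contDiff_succ_iff_deriv.mp hw2).2.2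
  have hwdd : Differentiable ℝ (deriv w) := hwd1.differentiable (by norm_num)
  have hw'c : Continuous (deriv w) := hwd1.continuous
  have hεne : ∀ x ∈ Icc a 1, εs x ≠ 0 := fun x hx => (hεpos x hx).ne'
  obtain ⟨C₁, hC₁def⟩ : ∃ C₁ : ℝ, C₁ = B * (M₀ + 1) := ⟨_, rfl⟩
  have hC₁pos : 0 < C₁ := by rw [hC₁def]; positivity
  -- ρ = b/ε and its properties
  have hρcont : ContinuousOn (fun t => bs t / εs t) (Icc a 1) :=
    hbc.continuousOn.div hεc.continuousOn hεne
  have hρint : ∀ s x, s ∈ Icc a 1 → x ∈ Icc a 1 →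
      IntervalIntegrable (fun t => bs t / εs t) volume s x := by
    intro s x hs hx
    apply ContinuousOn.intervalIntegrable
    exact hρcont.mono (uIcc_subset_Icc hs hx)
  -- E
  obtain ⟨E, hE⟩ : ∃ E : ℝ → ℝ, ∀ x, E x = ∫ t in a..x, bs t / εs t := ⟨_, fun _ => rfl⟩
  have hEdef : E = fun x => ∫ t in a..x, bs t / εs t := funext hE
  have haIcc : a ∈ Icc a 1 := left_mem_Icc.mpr ha1.le
  have h1Icc : (1 : ℝ) ∈ Icc a 1 := right_mem_Icc.mpr ha1.le
  have hEa : E a = 0 := by rw [hE]; exact integral_same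
  have hEcont : ContinuousOn E (Icc a 1) := by
    rw [hEdef]
    have := continuousOn_primitive_interval
      (f := fun t => bs t / εs t) (μ := volume) (a := a) (b := 1) ?_
    · rwa [uIcc_of_le ha1.le] at this
    · rw [uIcc_of_le ha1.le]
      exact hρcont.integrableOn_Icc
  have hU : IsOpen {t : ℝ | εs t ≠ 0} := isOpen_ne.preimage hεc
  have hρcontU : ContinuousOn (fun t => bs t / εs t) {t : ℝ | εs t ≠ 0} :=
    hbc.continuousOn.div hεc.continuousOn (fun x hx => hx)
  have hEd : ∀ x ∈ Ioo a 1, HasDerivAt E (bs x / εs x) x := by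
    intro x hx
    have hxIcc := mem_Icc_of_Ioo hx
    rw [hEdef]
    exact integral_hasDerivAt_right (hρint a x haIcc hxIcc)
      (hρcontU.stronglyMeasurableAtFilter hU x (hεne x hxIcc))
      ((hbc.continuousAt).div (hεc.continuousAt) (hεne x hxIcc))
  -- E x - E s = ∫ s..x ρ
  have hEsub : ∀ s x, s ∈ Icc a 1 → x ∈ Icc a 1 →
      E x - E s = ∫ t in s..x, bs t / εs t := by
    intro s x hs hx
    rw [hE, hE]
    exact integral_interval_sub_left (hρint a x haIcc hx) (hρint a s haIcc hs)
  -- lower bound for E x - E s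
  have hEgap : ∀ s x, s ∈ Icc a 1 → x ∈ Icc a 1 → s ≤ x →
      β / εs x * (x - s) ≤ E x - E s := by
    intro s x hs hx hsx
    rw [hEsub s x hs hx]
    have hi1 : IntervalIntegrable (fun _ : ℝ => β / εs x) volume s x :=
      intervalIntegrable_const
    have hmono : ∀ t ∈ Icc s x, β / εs x ≤ bs t / εs t := by
      intro t ht
      have htIcc : t ∈ Icc a 1 := ⟨le_trans hs.1 ht.1, le_trans ht.2 hx.2⟩
      have h1 : εs t ≤ εs x := hεmono htIcc hx ht.2
      have h2 : 0 < εs t := hεpos t htIcc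
      have h3 : β ≤ bs t := hbβ t htIcc
      exact div_le_div₀ (by linarith) h3 h2 h1
    calc β / εs x * (x - s) = ∫ t in s..x, β / εs x := by
          rw [intervalIntegral.integral_const, smul_eq_mul]; ring
      _ ≤ ∫ t in s..x, bs t / εs t :=
          integral_mono_on hsx hi1 (hρint s x hs hx) hmono
  -- v and F
  obtain ⟨v, hv⟩ : ∃ v : ℝ → ℝ, ∀ t, v t = εs t * deriv w t := ⟨_, fun _ => rfl⟩
  have hvfun : v = fun t => εs t * deriv w t := funext hv
  have hvc : Continuous v := by rw [hvfun]; exact hεc.mul hw'c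
  have hvd : Differentiable ℝ v := by rw [hvfun]; exact hεdiff.mul hwdd
  obtain ⟨F, hF⟩ : ∃ F : ℝ → ℝ, ∀ t, F t = v t * Real.exp (E t) := ⟨_, fun _ => rfl⟩
  have hFfun : F = fun t => v t * Real.exp (E t) := funext hF
  have hFcont : ContinuousOn F (Icc a 1) := by
    rw [hFfun]
    exact hvc.continuousOn.mul (Real.continuous_exp.comp_continuousOn hEcont)
  have hFd : ∀ x ∈ Ioo a 1, HasDerivAt F ((cs x * w x - fs x) * Real.exp (E x)) x := by
    intro x hx
    have hxIcc := mem_Icc_of_Ioo hx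
    have hvdx : HasDerivAt v (deriv v x) x := (hvd x).hasDerivAt
    have hexpd : HasDerivAt (fun t => Real.exp (E t)) (Real.exp (E x) * (bs x / εs x)) x :=
      (hEd x hx).exp
    have hFdx : HasDerivAt F
        (deriv v x * Real.exp (E x) + v x * (Real.exp (E x) * (bs x / εs x))) x := by
      rw [hFfun]
      exact hvdx.mul hexpd
    have hodex := hode x hx
    have hvx : deriv v x = cs x * w x - fs x - bs x * deriv w x := by
      rw [hvfun]
      linarith [hodex]
    have hεx := hεne x hxIcc
    convert hFdx using 1
    rw [hvx, hv]
    field_simp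
    ring
  -- FTC identity on [a,x]
  have hgcont : ContinuousOn (fun t => (cs t * w t - fs t) * Real.exp (E t)) (Icc a 1) :=
    (((hcc.mul hw.continuous).sub hfc).continuousOn).mul
      (Real.continuous_exp.comp_continuousOn hEcont)
  have hkey : ∀ x ∈ Icc a 1,
      F x - F a = ∫ t in a..x, (cs t * w t - fs t) * Real.exp (E t) := by
    intro x hx
    rw [eq_comm]
    apply integral_eq_sub_of_hasDerivAt_of_le hx.1
      (hFcont.mono (Icc_subset_Icc_right hx.2))
      (fun t ht => hFd t ⟨ht.1, lt_of_lt_of_le ht.2 hx.2⟩)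
    apply ContinuousOn.intervalIntegrable
    exact hgcont.mono (uIcc_subset_Icc haIcc hx)
  -- pointwise bound on g
  have hgB : ∀ t ∈ Icc a 1, |cs t * w t - fs t| ≤ C₁ := by
    intro t ht
    have h1 := hcB t ht
    have h2 := hwM t ht
    have h3 := hfB t ht
    have h4 : |cs t * w t| ≤ B * M₀ := by
      rw [abs_mul]
      exact mul_le_mul h1 h2 (abs_nonneg _) hB.le
    calc |cs t * w t - fs t| ≤ |cs t * w t| + |fs t| := abs_sub _ _
      _ ≤ B * M₀ + B := add_le_add h4 h3
      _ = C₁ := by rw [hC₁def]; ring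
  -- main integral estimate
  have hIbound : ∀ x ∈ Icc a 1,
      |∫ t in a..x, (cs t * w t - fs t) * Real.exp (E t)|
        ≤ C₁ * Real.exp (E x) * (εs x / β) := by
    intro x hx
    have hax := hx.1
    have hεx := hεpos x hx
    have hexpb : ∀ s ∈ Icc a x, Real.exp (E s)
        ≤ Real.exp (E x) * Real.exp (β / εs x * (s - x)) := by
      intro s hs
      have hsIcc : s ∈ Icc a 1 := ⟨hs.1, le_trans hs.2 hx.2⟩
      have hgap := hEgap s x hsIcc hx hs.2
      rw [← Real.exp_add]
      apply Real.exp_le_exp.mpr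
      nlinarith [hgap]
    have hPder : ∀ s : ℝ, HasDerivAt (fun s => εs x / β * Real.exp (β / εs x * (s - x)))
        (Real.exp (β / εs x * (s - x))) s := by
      intro s
      have h1 : HasDerivAt (fun s : ℝ => β / εs x * (s - x)) (β / εs x) s := by
        simpa using ((hasDerivAt_id s).sub_const x).const_mul (β / εs x)
      have h3 := h1.exp.const_mul (εs x / β)
      refine h3.congr_deriv ?_
      have hεx' := (hεne x hx)
      field_simp
    have hPint : ∫ s in a..x, Real.exp (β / εs x * (s - x))
        = εs x / β * Real.exp (β / εs x * (x - x)) - εs x / β * Real.exp (β / εs x * (a - x)) :=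
      integral_eq_sub_of_hasDerivAt (fun s _ => hPder s)
        (Continuous.intervalIntegrable (by fun_prop) _ _)
    have hPle : ∫ s in a..x, Real.exp (β / εs x * (s - x)) ≤ εs x / β := by
      rw [hPint, sub_self, mul_zero, Real.exp_zero, mul_one]
      have := Real.exp_pos (β / εs x * (a - x))
      have hq : 0 < εs x / β := by positivity
      nlinarith
    have hint1 : IntervalIntegrable (fun t => |(cs t * w t - fs t) * Real.exp (E t)|)
        volume a x := by
      apply ContinuousOn.intervalIntegrable
      exact (hgcont.mono (uIcc_subset_Icc haIcc hx)).abs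
    have hint2 : IntervalIntegrable
        (fun s => C₁ * Real.exp (E x) * Real.exp (β / εs x * (s - x))) volume a x :=
      Continuous.intervalIntegrable (by fun_prop) _ _
    calc |∫ t in a..x, (cs t * w t - fs t) * Real.exp (E t)|
        ≤ ∫ t in a..x, |(cs t * w t - fs t) * Real.exp (E t)| :=
          abs_integral_le_integral_abs hax
      _ ≤ ∫ s in a..x, C₁ * Real.exp (E x) * Real.exp (β / εs x * (s - x)) := by
          apply integral_mono_on hax hint1 hint2
          intro s hs
          have hsIcc : s ∈ Icc a 1 := ⟨hs.1, le_trans hs.2 hx.2⟩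
          rw [abs_mul, abs_of_pos (Real.exp_pos _)]
          calc |cs s * w s - fs s| * Real.exp (E s)
              ≤ C₁ * (Real.exp (E x) * Real.exp (β / εs x * (s - x))) :=
                mul_le_mul (hgB s hsIcc) (hexpb s hs) (Real.exp_pos _).le hC₁pos.le
            _ = C₁ * Real.exp (E x) * Real.exp (β / εs x * (s - x)) := by ring
      _ = C₁ * Real.exp (E x) * ∫ s in a..x, Real.exp (β / εs x * (s - x)) := by
          rw [← intervalIntegral.integral_const_mul]
      _ ≤ C₁ * Real.exp (E x) * (εs x / β) := by
          apply mul_le_mul_of_nonneg_left hPle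
          positivity
  -- bound on |v|
  have hexpprod : ∀ y : ℝ, Real.exp y * Real.exp (-y) = 1 := by
    intro y; rw [← Real.exp_add]; simp
  have hvFa : ∀ x ∈ Icc a 1, |v x| ≤ |F a| * Real.exp (-E x) + C₁ * (εs x / β) := by
    intro x hx
    have hεx := hεpos x hx
    have hFx : |F x| ≤ |F a| + C₁ * Real.exp (E x) * (εs x / β) := by
      have h1 := hkey x hx
      have h2 := hIbound x hx
      rw [← h1] at h2
      have h3 : |F x| - |F a| ≤ |F x - F a| := abs_sub_abs_le_abs_sub _ _
      linarith
    have hvx : v x = F x * Real.exp (-E x) := by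
      rw [hF x, Real.exp_neg]
      field_simp
    calc |v x| = |F x| * Real.exp (-E x) := by
          rw [hvx, abs_mul, abs_of_pos (Real.exp_pos _)]
      _ ≤ (|F a| + C₁ * Real.exp (E x) * (εs x / β)) * Real.exp (-E x) :=
          mul_le_mul_of_nonneg_right hFx (Real.exp_pos _).le
      _ = |F a| * Real.exp (-E x) + C₁ * (εs x / β) * (Real.exp (E x) * Real.exp (-E x)) := by
          ring
      _ = |F a| * Real.exp (-E x) + C₁ * (εs x / β) := by rw [hexpprod, mul_one]
  -- bound on |w'|
  have hw'bound : ∀ x ∈ Icc a 1,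
      |deriv w x| ≤ |F a| * Real.exp (-E x) / εs x + C₁ / β := by
    intro x hx
    have hεx := hεpos x hx
    have hdw : deriv w x = v x / εs x := by
      rw [hv]
      field_simp
    have h1 := hvFa x hx
    calc |deriv w x| = |v x| / εs x := by
          rw [hdw, abs_div, abs_of_pos hεx]
      _ ≤ (|F a| * Real.exp (-E x) + C₁ * (εs x / β)) / εs x := by gcongr
      _ = |F a| * Real.exp (-E x) / εs x + C₁ / β := by
          rw [div_add_div _ _ hεx.ne' hβ.ne',
            div_eq_div_iff hεx.ne' (by positivity : εs x * β ≠ 0)]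
          field_simp
  -- lower bound for E 1
  have hE1 : β ≤ E 1 := by
    rw [hE 1]
    have hmono : ∀ t ∈ Icc a 1, β ≤ bs t / εs t := by
      intro t ht
      have h1 := hbβ t ht
      have h2 := hεpos t ht
      have h3 := hεle t ht
      calc β ≤ bs t := h1
        _ = bs t / 1 := by rw [div_one]
        _ ≤ bs t / εs t := by
            apply div_le_div_of_nonneg_left (by linarith) h2 h3
    calc β = β * 1 := by ring
      _ ≤ β * (1 - a) := by nlinarith
      _ = ∫ t in a..(1:ℝ), β := by
          rw [intervalIntegral.integral_const, smul_eq_mul]; ring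
      _ ≤ ∫ t in a..(1:ℝ), bs t / εs t :=
          integral_mono_on ha1.le intervalIntegrable_const (hρint a 1 haIcc h1Icc) hmono
  -- the weighted integral identity
  have hNder : ∀ s ∈ Ioo a 1, HasDerivAt (fun t => -Real.exp (-E t))
      ((bs s / εs s) * Real.exp (-E s)) s := by
    intro s hs
    have h1 := ((hEd s hs).neg).exp.neg
    refine h1.congr_deriv ?_
    simp only [Pi.neg_apply]
    ring
  have hNcont : ContinuousOn (fun t => -Real.exp (-E t)) (Icc a 1) :=
    ((Real.continuous_exp.comp_continuousOn hEcont.neg)).neg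
  have hwint : ContinuousOn (fun s => (bs s / εs s) * Real.exp (-E s)) (Icc a 1) :=
    hρcont.mul (Real.continuous_exp.comp_continuousOn hEcont.neg)
  have hG : ∫ s in a..(1:ℝ), (bs s / εs s) * Real.exp (-E s) = 1 - Real.exp (-E 1) := by
    have := integral_eq_sub_of_hasDerivAt_of_le ha1.le hNcont hNder
      (hwint.intervalIntegrable_of_Icc ha1.le)
    rw [this, hEa, neg_zero, Real.exp_zero]
    ring
  -- J and its lower bound
  have hJcont : ContinuousOn (fun s => Real.exp (-E s) / εs s) (Icc a 1) :=
    (Real.continuous_exp.comp_continuousOn hEcont.neg).div hεc.continuousOn hεne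
  have hJlow : (1 - Real.exp (-β)) / B ≤ ∫ s in a..(1:ℝ), Real.exp (-E s) / εs s := by
    have hmono : ∀ s ∈ Icc a 1, (bs s / εs s) * Real.exp (-E s)
        ≤ B * (Real.exp (-E s) / εs s) := by
      intro s hs
      have h1 := hbB s hs
      have h2 := hεpos s hs
      have h3 := (abs_le.mp h1).2
      have h4 := Real.exp_pos (-E s)
      have hX : 0 ≤ Real.exp (-E s) / εs s := (div_pos h4 h2).le
      calc bs s / εs s * Real.exp (-E s) = bs s * (Real.exp (-E s) / εs s) := by ring
        _ ≤ B * (Real.exp (-E s) / εs s) := mul_le_mul_of_nonneg_right h3 hX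
    have hstep : 1 - Real.exp (-E 1) ≤ B * ∫ s in a..(1:ℝ), Real.exp (-E s) / εs s := by
      rw [← hG, ← intervalIntegral.integral_const_mul]
      refine integral_mono_on ha1.le (hwint.intervalIntegrable_of_Icc ha1.le) ?_ hmono
      exact (continuous_const.continuousOn.mul hJcont).intervalIntegrable_of_Icc ha1.le
    rw [div_le_iff₀ hB]
    have h5 : Real.exp (-E 1) ≤ Real.exp (-β) := Real.exp_le_exp.mpr (by linarith)
    calc 1 - Real.exp (-β) ≤ 1 - Real.exp (-E 1) := by linarith
      _ ≤ B * ∫ s in a..(1:ℝ), Real.exp (-E s) / εs s := hstep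
      _ = (∫ s in a..(1:ℝ), Real.exp (-E s) / εs s) * B := mul_comm _ _
  -- representation of u₁
  have hu₁ : ∫ s in a..(1:ℝ), deriv w s = u₁ := by
    rw [integral_deriv_eq_sub (fun t _ => hwd t) (hw'c.intervalIntegrable _ _), hw1, hwa,
      sub_zero]
  have hwrep : ∀ s ∈ Icc a 1, deriv w s
      = F a * (Real.exp (-E s) / εs s) + (F s - F a) * (Real.exp (-E s) / εs s) := by
    intro s hs
    have hεs' := hεpos s hs
    have hv2 : v s = F s * Real.exp (-E s) := by
      rw [hF s, Real.exp_neg, mul_assoc, mul_inv_cancel₀ (Real.exp_pos _).ne', mul_one]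
    have hdw : deriv w s = v s / εs s := by
      rw [hv]
      field_simp
    rw [hdw, hv2]
    field_simp
    ring
  have hFacont : ContinuousOn (fun s => F a * (Real.exp (-E s) / εs s)) (Icc a 1) :=
    continuous_const.continuousOn.mul hJcont
  have hScont : ContinuousOn (fun s => (F s - F a) * (Real.exp (-E s) / εs s)) (Icc a 1) :=
    (hFcont.sub continuousOn_const).mul hJcont
  have hsplit : u₁ = F a * (∫ s in a..(1:ℝ), Real.exp (-E s) / εs s)
      + ∫ s in a..(1:ℝ), (F s - F a) * (Real.exp (-E s) / εs s) := by
    rw [← hu₁]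
    rw [show (∫ s in a..(1:ℝ), deriv w s) = ∫ s in a..(1:ℝ),
        (F a * (Real.exp (-E s) / εs s) + (F s - F a) * (Real.exp (-E s) / εs s)) from
      intervalIntegral.integral_congr (by
        intro s hs
        rw [uIcc_of_le ha1.le] at hs
        exact hwrep s hs)]
    rw [intervalIntegral.integral_add (hFacont.intervalIntegrable_of_Icc ha1.le)
      (hScont.intervalIntegrable_of_Icc ha1.le), intervalIntegral.integral_const_mul]
  have hSb : |∫ s in a..(1:ℝ), (F s - F a) * (Real.exp (-E s) / εs s)| ≤ C₁ / β * (1 - a) := by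
    calc |∫ s in a..(1:ℝ), (F s - F a) * (Real.exp (-E s) / εs s)|
        ≤ ∫ s in a..(1:ℝ), |(F s - F a) * (Real.exp (-E s) / εs s)| :=
          abs_integral_le_integral_abs ha1.le
      _ ≤ ∫ s in a..(1:ℝ), C₁ / β := by
          apply integral_mono_on ha1.le (hScont.abs.intervalIntegrable_of_Icc ha1.le)
            intervalIntegrable_const
          intro s hs
          have hεs' := hεpos s hs
          have h2 := hIbound s hs
          rw [← hkey s hs] at h2
          rw [abs_mul, abs_of_pos (div_pos (Real.exp_pos _) hεs')]
          calc |F s - F a| * (Real.exp (-E s) / εs s)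
              ≤ C₁ * Real.exp (E s) * (εs s / β) * (Real.exp (-E s) / εs s) :=
                mul_le_mul_of_nonneg_right h2 (div_pos (Real.exp_pos _) hεs').le
            _ = C₁ / β * (Real.exp (E s) * Real.exp (-E s)) * (εs s / εs s) := by ring
            _ = C₁ / β := by rw [hexpprod, div_self hεs'.ne', mul_one, mul_one]
      _ = C₁ / β * (1 - a) := by
          rw [intervalIntegral.integral_const, smul_eq_mul, mul_comm]
  -- bound |F a|
  have hJ0pos : 0 < (1 - Real.exp (-β)) / B := by
    have : Real.exp (-β) < 1 := by
      rw [Real.exp_lt_one_iff]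
      linarith
    exact div_pos (by linarith) hB
  have hJpos : 0 < ∫ s in a..(1:ℝ), Real.exp (-E s) / εs s := lt_of_lt_of_le hJ0pos hJlow
  have hFa : |F a| ≤ (|u₁| + C₁ * (1 - a) / β) * (B / (1 - Real.exp (-β))) := by
    have h3 : F a * (∫ s in a..(1:ℝ), Real.exp (-E s) / εs s)
        = u₁ - ∫ s in a..(1:ℝ), (F s - F a) * (Real.exp (-E s) / εs s) := by
      linarith [hsplit]
    have h4 : |F a| * (∫ s in a..(1:ℝ), Real.exp (-E s) / εs s)
        ≤ |u₁| + C₁ / β * (1 - a) := by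
      have h5 : |F a| * (∫ s in a..(1:ℝ), Real.exp (-E s) / εs s)
          = |F a * (∫ s in a..(1:ℝ), Real.exp (-E s) / εs s)| := by
        rw [abs_mul, abs_of_pos hJpos]
      rw [h5, h3]
      calc |u₁ - ∫ s in a..(1:ℝ), (F s - F a) * (Real.exp (-E s) / εs s)|
          ≤ |u₁| + |∫ s in a..(1:ℝ), (F s - F a) * (Real.exp (-E s) / εs s)| := abs_sub _ _
        _ ≤ |u₁| + C₁ / β * (1 - a) := by linarith [hSb]
    have h6 : |F a| * ((1 - Real.exp (-β)) / B)
        ≤ |u₁| + C₁ / β * (1 - a) := by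
      calc |F a| * ((1 - Real.exp (-β)) / B)
          ≤ |F a| * (∫ s in a..(1:ℝ), Real.exp (-E s) / εs s) :=
            mul_le_mul_of_nonneg_left hJlow (abs_nonneg _)
        _ ≤ |u₁| + C₁ / β * (1 - a) := h4
    rw [← le_div_iff₀ hJ0pos] at h6
    calc |F a| ≤ (|u₁| + C₁ / β * (1 - a)) / ((1 - Real.exp (-β)) / B) := h6
      _ = (|u₁| + C₁ * (1 - a) / β) * (B / (1 - Real.exp (-β))) := by
          rw [div_div_eq_mul_div, mul_div_assoc]
          ring_nf
  -- final assembly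
  intro x hx
  have h1 := hw'bound x hx
  have hεx := hεpos x hx
  have hIcomp : β * ∫ z in a..x, 1 / εs z ≤ E x := by
    rw [hE x, ← intervalIntegral.integral_const_mul]
    apply integral_mono_on hx.1 ?_ (hρint a x haIcc hx)
    · intro t ht
      have htIcc : t ∈ Icc a 1 := ⟨ht.1, le_trans ht.2 hx.2⟩
      have h2 := hεpos t htIcc
      have h3 := hbβ t htIcc
      rw [mul_one_div]
      exact div_le_div₀ (by linarith) h3 h2 le_rfl
    · apply ContinuousOn.intervalIntegrable
      apply ContinuousOn.mono _ (uIcc_subset_Icc haIcc hx)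
      exact continuous_const.continuousOn.mul
        (continuous_const.continuousOn.div hεc.continuousOn hεne)
  have hexpcmp : Real.exp (-E x) ≤ Real.exp (-β * ∫ z in a..x, 1 / εs z) :=
    Real.exp_le_exp.mpr (by linarith)
  have hC₂nn : 0 ≤ (|u₁| + C₁ * (1 - a) / β) * (B / (1 - Real.exp (-β))) :=
    le_trans (abs_nonneg _) hFa
  have hYnn : 0 ≤ 1 / εs x * Real.exp (-β * ∫ z in a..x, 1 / εs z) := by positivity
  have hterm1 : |F a| * Real.exp (-E x) / εs x
      ≤ (|u₁| + C₁ * (1 - a) / β) * (B / (1 - Real.exp (-β)))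
        * (1 / εs x * Real.exp (-β * ∫ z in a..x, 1 / εs z)) := by
    have e1 : |F a| * Real.exp (-E x) / εs x
        = |F a| * Real.exp (-E x) * (1 / εs x) := by ring
    rw [e1]
    calc |F a| * Real.exp (-E x) * (1 / εs x)
        ≤ ((|u₁| + C₁ * (1 - a) / β) * (B / (1 - Real.exp (-β)))
            * Real.exp (-β * ∫ z in a..x, 1 / εs z)) * (1 / εs x) := by
          apply mul_le_mul_of_nonneg_right _ (by positivity)
          exact mul_le_mul hFa hexpcmp (Real.exp_pos _).le hC₂nn
      _ = (|u₁| + C₁ * (1 - a) / β) * (B / (1 - Real.exp (-β)))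
            * (1 / εs x * Real.exp (-β * ∫ z in a..x, 1 / εs z)) := by ring
  rw [show B * (M₀ + 1) = C₁ from hC₁def.symm]
  have hCb : 0 ≤ C₁ / β := (div_pos hC₁pos hβ).le
  have hprod : 0 ≤ C₁ / β * (1 / εs x * Real.exp (-β * ∫ z in a..x, 1 / εs z)) :=
    mul_nonneg hCb hYnn
  nlinarith [h1, hterm1, hYnn, hC₂nn, hCb, hprod,
    mul_nonneg hC₂nn hYnn]


/-- First-derivative bound on the extended domain (Lemma 5 of the paper): if
`(ε*)' ≥ 0` on `[a,1]` and `e_a(t) = ∫ₐᵗ 1/ε*(z) dz`, then the solution `w` of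
`−(ε* w')' − b* w' + c* w = f*` on `(a,1)`, `w(a) = 0`, `w(1) = u₁`, satisfies
`|w'(x)| ≤ C (1 + (1/ε*(x)) e^{−β e_a(x)})` on `[a,1]`, where `C` may depend on
`β`, bounds for `b*, c*, f*` and `|u₁|` but not on `ε*`. -/
theorem first_derivative_bound_on_extended_domain
    (a β B u₁ : ℝ) (ha : a ≤ 0) (hβ : 0 < β) (hB : 0 < B) :
    ∃ C : ℝ, 0 < C ∧
      ∀ (εs bs cs fs w : ℝ → ℝ) (epsLow epsHigh : ℝ),
        0 < epsLow → epsHigh < 1 →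
        ContDiff ℝ (⊤ : ℕ∞) εs → ContDiff ℝ (⊤ : ℕ∞) bs → ContDiff ℝ (⊤ : ℕ∞) cs → ContDiff ℝ (⊤ : ℕ∞) fs →
        (∀ x ∈ Set.Icc a 1, epsLow ≤ εs x ∧ εs x ≤ epsHigh) →
        (∀ x ∈ Set.Icc a 1, β ≤ bs x ∧ 0 ≤ cs x) →
        (∀ x ∈ Set.Icc a 1, |bs x| ≤ B ∧ |cs x| ≤ B ∧ |fs x| ≤ B) →
        (∀ x ∈ Set.Icc a 1, 0 ≤ deriv εs x) →
        ContDiff ℝ 2 w →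
        (∀ x ∈ Set.Ioo a 1,
          -(deriv (fun t => εs t * deriv w t) x) - bs x * deriv w x + cs x * w x
            = fs x) →
        w a = 0 → w 1 = u₁ →
        ∀ x ∈ Set.Icc a 1,
          |deriv w x| ≤ C * (1 + (1 / εs x) *
            Real.exp (-β * ∫ z in a..x, 1 / εs z)) := by
  have ha1 : a < 1 := lt_of_le_of_lt ha one_pos
  have h2a : (0:ℝ) < 2 - a := by linarith
  have h1a : (0:ℝ) ≤ 1 - a := by linarith
  have hBβ : 0 < B / β := div_pos hB hβ
  have hK0 : 0 < B / β + |u₁| + 1 := by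
    have := abs_nonneg u₁
    linarith
  have hM0 : 0 ≤ (B / β + |u₁| + 1) * (2 - a) := by positivity
  have he : 0 < 1 - Real.exp (-β) := by
    have : Real.exp (-β) < 1 := by
      rw [Real.exp_lt_one_iff]
      linarith
    linarith
  refine ⟨B * ((B / β + |u₁| + 1) * (2 - a) + 1) / β
      + (|u₁| + B * ((B / β + |u₁| + 1) * (2 - a) + 1) * (1 - a) / β)
          * (B / (1 - Real.exp (-β))) + 1, ?_, ?_⟩
  · have ht1 : 0 ≤ B * ((B / β + |u₁| + 1) * (2 - a) + 1) / β :=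
      div_nonneg (mul_nonneg hB.le (by linarith)) hβ.le
    have ht2 : 0 ≤ (|u₁| + B * ((B / β + |u₁| + 1) * (2 - a) + 1) * (1 - a) / β)
        * (B / (1 - Real.exp (-β))) := by
      apply mul_nonneg
      · have : 0 ≤ B * ((B / β + |u₁| + 1) * (2 - a) + 1) * (1 - a) / β :=
          div_nonneg (mul_nonneg (mul_nonneg hB.le (by linarith)) h1a) hβ.le
        linarith [abs_nonneg u₁]
      · exact div_nonneg hB.le he.le
    linarith
  intro εs bs cs fs w epsLow epsHigh hel heh hεs hbs hcs hfs hεB hbc0 hbnd hεd hw hode hwa hw1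
  have hεpos : ∀ x ∈ Set.Icc a 1, 0 < εs x := fun x hx => lt_of_lt_of_le hel (hεB x hx).1
  have hεle : ∀ x ∈ Set.Icc a 1, εs x ≤ 1 := fun x hx => le_trans (hεB x hx).2 heh.le
  have hbβ : ∀ x ∈ Set.Icc a 1, β ≤ bs x := fun x hx => (hbc0 x hx).1
  have hc : ∀ x ∈ Set.Icc a 1, 0 ≤ cs x := fun x hx => (hbc0 x hx).2
  have hbB : ∀ x ∈ Set.Icc a 1, |bs x| ≤ B := fun x hx => (hbnd x hx).1
  have hcB : ∀ x ∈ Set.Icc a 1, |cs x| ≤ B := fun x hx => (hbnd x hx).2.1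
  have hfB : ∀ x ∈ Set.Icc a 1, |fs x| ≤ B := fun x hx => (hbnd x hx).2.2
  have hεmono : MonotoneOn εs (Set.Icc a 1) := by
    apply monotoneOn_of_deriv_nonneg (convex_Icc a 1) hεs.continuous.continuousOn
      ((hεs.differentiable (by simp)).differentiableOn)
    intro x hx
    rw [interior_Icc] at hx
    exact hεd x (mem_Icc_of_Ioo hx)
  have hK1 : B ≤ (B / β + |u₁| + 1) * β := by
    have hcan : B / β * β = B := div_mul_cancel₀ B hβ.ne'
    nlinarith [abs_nonneg u₁]
  have hK2 : |u₁| ≤ B / β + |u₁| + 1 := by linarith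
  have hwM := sup_bound a β B u₁ (B / β + |u₁| + 1) ha1 hβ hB hK1 hK2 hK0.le
    εs bs cs fs w hεs hw hεpos hεle hεd hbβ hc hfB hode hwa hw1
  exact deriv_bound_core a β B u₁ ((B / β + |u₁| + 1) * (2 - a)) ha1 ha hβ hB hM0
    εs bs cs fs w hεs hw hεpos hεle hεmono hbβ hbB hcB hfB
    hbs.continuous hcs.continuous hfs.continuous hwM hode hwa hw1
end

section
/- Refined second-derivative bound on the extended domain: suppose (ε*)' ≥ 0 on [a,1], set e_a(t) = ∫ₐᵗ 1/ε*(z) dz, and define K₄(x) = ε*(x)^{−2} e^{−β e_a(x)} ∫ₐˣ |(ε*)''(t)| ε*(t) e^{β e_a(t)} dt. Then (i) there is a constant C independent of ε* such that the solution w of −(ε* w')' − b* w' + c* w = f* on (a,1), w(a) = 0, w(1) = u₁, satisfies |w''(x)| ≤ C ( 1 + K₄(x) + (1/ε*(x)²)(1 + (ε*)'(a) + ‖(ε*)''‖_{L¹(a,x)}) e^{−β e_a(x)} ) for all x ∈ [a,1]; and (ii) K₄(x) ≤ C min{ ‖(ε*)''‖_{L^∞(a,x)}, (1/√(ε*(x)))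 ‖(ε*)''‖_{L²(a,x)} }. -/
open Set Filter MeasureTheory intervalIntegral


theorem second_deriv_test_min (v : ℝ → ℝ) (x : ℝ) (hd : Differentiable ℝ (deriv v))
    (hv : Differentiable ℝ v) (h : IsLocalMin v x) : 0 ≤ deriv (deriv v) x := by
  by_contra hneg
  push_neg at hneg
  have h1 : deriv v x = 0 := h.deriv_eq_zero
  have hd2 : HasDerivAt (deriv v) (deriv (deriv v) x) x := (hd x).hasDerivAt
  rw [hasDerivAt_iff_tendsto_slope] at hd2
  have hev : ∀ᶠ y in nhdsWithin x {x}ᶜ, slope (deriv v) x y < 0 :=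
    hd2.eventually_lt_const hneg
  rw [eventually_nhdsWithin_iff, Metric.eventually_nhds_iff] at hev
  obtain ⟨δ, hδ, hball⟩ := hev
  have h' : ∀ᶠ y in nhds x, v x ≤ v y := h
  obtain ⟨δ', hδ', hmin⟩ := Metric.eventually_nhds_iff.mp h'
  set t := x + min δ δ' / 2 with ht
  have hmd : min δ δ' ≤ δ := min_le_left _ _
  have hmd' : min δ δ' ≤ δ' := min_le_right _ _
  have htpos : 0 < min δ δ' / 2 := by
    have : 0 < min δ δ' := lt_min hδ hδ'
    linarith
  have hxt : x < t := by rw [ht]; linarith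
  have hderivneg : ∀ y ∈ Ioo x t, deriv v y < 0 := by
    intro y hy
    have hy1 := hy.1
    have hy2 := hy.2
    rw [ht] at hy2
    have hyx : dist y x < δ := by
      rw [Real.dist_eq, abs_of_pos (by linarith)]
      linarith
    have hs := hball hyx (by simp; intro hc; rw [hc] at hy1; exact lt_irrefl x hy1)
    rw [slope_def_field, h1, sub_zero] at hs
    have hyx0 : 0 < y - x := by linarith
    by_contra hge
    push_neg at hge
    have : 0 ≤ deriv v y / (y - x) := div_nonneg hge hyx0.le
    linarith
  have hanti : StrictAntiOn v (Icc x t) := by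
    apply strictAntiOn_of_deriv_neg (convex_Icc x t) (hv.continuous.continuousOn)
    intro y hy
    rw [interior_Icc] at hy
    exact hderivneg y hy
  have hvt : v t < v x := hanti ⟨le_refl x, hxt.le⟩ ⟨hxt.le, le_refl t⟩ hxt
  have : v x ≤ v t := by
    apply hmin
    rw [ht, Real.dist_eq]
    rw [abs_of_pos (by linarith)]
    linarith
  linarith



/-- weak maximum principle for `L v = -(ε v')' - b v' + c v` with strict positivity. -/
theorem max_principle (a : ℝ) (ha : a < 1) (ε b c v : ℝ → ℝ)
    (hεd : Differentiable ℝ ε) (hvd : Differentiable ℝ v) (hvd2 : Differentiable ℝ (deriv v))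
    (hvc : Continuous v)
    (hεpos : ∀ x ∈ Ioo a 1, 0 < ε x) (hc : ∀ x ∈ Ioo a 1, 0 ≤ c x)
    (hL : ∀ x ∈ Ioo a 1,
      0 < -(deriv (fun t => ε t * deriv v t) x) - b x * deriv v x + c x * v x)
    (hva : 0 ≤ v a) (hv1 : 0 ≤ v 1) :
    ∀ x ∈ Icc a 1, 0 ≤ v x := by
  obtain ⟨x₀, hx₀mem, hx₀min⟩ :=
    (isCompact_Icc : IsCompact (Icc a 1)).exists_isMinOn ⟨a, le_refl a, ha.le⟩
      hvc.continuousOn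
  intro x hx
  rcases le_or_gt 0 (v x₀) with h0 | h0
  · exact le_trans h0 (hx₀min hx)
  · exfalso
    have hx₀Ioo : x₀ ∈ Ioo a 1 := by
      rcases eq_or_lt_of_le hx₀mem.1 with h | h
      · exact absurd (h ▸ hva) (not_le.mpr h0)
      rcases eq_or_lt_of_le hx₀mem.2 with h2 | h2
      · exact absurd (h2 ▸ hv1) (not_le.mpr h0)
      exact ⟨h, h2⟩
    have hloc : IsLocalMin v x₀ := by
      apply hx₀min.isLocalMin
      exact Filter.mem_of_superset (isOpen_Ioo.mem_nhds hx₀Ioo) Ioo_subset_Icc_self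
    have h1 : deriv v x₀ = 0 := hloc.deriv_eq_zero
    have h2 : 0 ≤ deriv (deriv v) x₀ := second_deriv_test_min v x₀ hvd2 hvd hloc
    have hprod : deriv (fun t => ε t * deriv v t) x₀
        = deriv ε x₀ * deriv v x₀ + ε x₀ * deriv (deriv v) x₀ :=
      deriv_mul (hεd x₀) (hvd2 x₀)
    have := hL x₀ hx₀Ioo
    rw [hprod, h1] at this
    nlinarith [hεpos x₀ hx₀Ioo, mul_nonneg (hc x₀ hx₀Ioo) (neg_nonneg.mpr h0.le), mul_nonneg (hεpos x₀ hx₀Ioo).le h2]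



/-- one-sided barrier bound -/
theorem barrier_bound (a β B U : ℝ) (ha : a < 1) (hβ : 0 < β) (hB : 0 < B)
    (ε b c g u : ℝ → ℝ)
    (hεd : Differentiable ℝ ε) (hud : Differentiable ℝ u) (hud2 : Differentiable ℝ (deriv u))
    (huc : Continuous u)
    (hεpos : ∀ x ∈ Ioo a 1, 0 < ε x) (hεmono : ∀ x ∈ Ioo a 1, 0 ≤ deriv ε x)
    (hb : ∀ x ∈ Ioo a 1, β ≤ b x) (hc : ∀ x ∈ Ioo a 1, 0 ≤ c x)
    (hg : ∀ x ∈ Ioo a 1, -B ≤ g x)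
    (hEq : ∀ x ∈ Ioo a 1,
      -(deriv (fun t => ε t * deriv u t) x) - b x * deriv u x + c x * u x = g x)
    (hua : u a = 0) (hu1 : -U ≤ u 1) (hU : 0 ≤ U) :
    ∀ x ∈ Icc a 1, -(U + ((B+1)/β) * (1 - x)) ≤ u x := by
  set M := (B+1)/β with hM
  have hMpos : 0 < M := by positivity
  set ψ : ℝ → ℝ := fun x => U + M * (1 - x) with hψ
  have hψd : ∀ x, HasDerivAt ψ (-M) x := by
    intro x
    have h1 : HasDerivAt (fun y : ℝ => 1 - y) (-1) x := by
      simpa using (hasDerivAt_id x).const_sub 1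
    have h2 := (h1.const_mul M).const_add U
    exact h2.congr_deriv (by ring)
  set v : ℝ → ℝ := fun x => ψ x + u x with hv
  have hψdiff : Differentiable ℝ ψ := fun x => (hψd x).differentiableAt
  have hvd' : Differentiable ℝ v := hψdiff.add hud
  have hdv : ∀ x, deriv v x = -M + deriv u x := by
    intro x
    have : HasDerivAt v (-M + deriv u x) x := (hψd x).add (hud x).hasDerivAt
    exact this.deriv
  have hdvfun : deriv v = fun x => -M + deriv u x := funext hdv
  have hvd2' : Differentiable ℝ (deriv v) := by
    rw [hdvfun]; exact (differentiable_const _).add hud2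
  have key : ∀ x ∈ Icc a 1, 0 ≤ v x := by
    apply max_principle a ha ε b c v hεd hvd' hvd2' (hψdiff.continuous.add huc)
      hεpos hc _ _ _
    · -- hL
      intro x hx
      have hfuneq : (fun t => ε t * deriv v t) = fun t => ε t * (-M) + ε t * deriv u t := by
        funext t; rw [hdv t]; ring
      have hd1 : HasDerivAt (fun t => ε t * (-M)) (deriv ε x * (-M)) x :=
        (hεd x).hasDerivAt.mul_const (-M)
      have hd2 : DifferentiableAt ℝ (fun t => ε t * deriv u t) x :=
        (hεd x).mul (hud2 x)
      have hder : deriv (fun t => ε t * deriv v t) x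
          = deriv ε x * (-M) + deriv (fun t => ε t * deriv u t) x := by
        rw [hfuneq]
        rw [deriv_fun_add hd1.differentiableAt hd2, hd1.deriv]
      rw [hder, hdv x]
      have heq := hEq x hx
      have h1 : β ≤ b x := hb x hx
      have h2 : 0 ≤ c x := hc x hx
      have h3 : -B ≤ g x := hg x hx
      have h4 : 0 ≤ deriv ε x := hεmono x hx
      have h5 : 0 ≤ ψ x := by
        have : 0 ≤ 1 - x := by linarith [hx.2]
        have : 0 ≤ M * (1-x) := mul_nonneg hMpos.le this
        simp only [hψ]; linarith
      have hMb : M * β ≤ M * b x := by nlinarith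
      have hMβ : M * β = B + 1 := by rw [hM, div_mul_cancel₀ _ hβ.ne']
      have hcψ : 0 ≤ c x * ψ x := mul_nonneg h2 h5
      have hvx : v x = ψ x + u x := rfl
      rw [hvx]
      nlinarith [hεmono x hx, mul_nonneg h4 hMpos.le]
    · -- v a ≥ 0
      have : 0 ≤ ψ a := by
        have : 0 ≤ 1 - a := by linarith
        have := mul_nonneg hMpos.le this
        simp only [hψ]; linarith
      simp only [hv, hua]; linarith
    · -- v 1 ≥ 0
      have : ψ 1 = U := by simp [hψ]
      simp only [hv, this]; linarith
  intro x hx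
  have := key x hx
  simp only [hv, hψ] at this ⊢
  linarith

theorem w_sup_bound (a β B u₁ : ℝ) (ha : a < 1) (hβ : 0 < β) (hB : 0 < B)
    (ε b c f w : ℝ → ℝ)
    (hεd : Differentiable ℝ ε) (hwd : Differentiable ℝ w) (hwd2 : Differentiable ℝ (deriv w))
    (hwc : Continuous w)
    (hεpos : ∀ x ∈ Ioo a 1, 0 < ε x) (hεmono : ∀ x ∈ Ioo a 1, 0 ≤ deriv ε x)
    (hb : ∀ x ∈ Ioo a 1, β ≤ b x) (hc : ∀ x ∈ Ioo a 1, 0 ≤ c x)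
    (hf : ∀ x ∈ Ioo a 1, |f x| ≤ B)
    (hEq : ∀ x ∈ Ioo a 1,
      -(deriv (fun t => ε t * deriv w t) x) - b x * deriv w x + c x * w x = f x)
    (hwa : w a = 0) (hw1 : w 1 = u₁) :
    ∀ x ∈ Icc a 1, |w x| ≤ |u₁| + ((B+1)/β) * (1 - a) := by
  have hlow := barrier_bound a β B |u₁| ha hβ hB ε b c f w hεd hwd hwd2 hwc hεpos hεmono hb hc
    (fun x hx => neg_le_of_abs_le (hf x hx)) hEq hwa (by rw [hw1]; exact neg_abs_le u₁)
    (abs_nonneg u₁)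
  have hupp := barrier_bound a β B |u₁| ha hβ hB ε b c (fun x => -f x) (fun x => -w x) hεd
    hwd.neg ?_ hwc.neg hεpos hεmono hb hc
    (fun x hx => by simpa using neg_abs_le (f x) |>.trans (le_abs_self (f x)) |> fun _ => neg_le_neg (le_of_abs_le (hf x hx)))
    ?_ (by simp [hwa]) (by simp [hw1]; exact le_abs_self u₁) (abs_nonneg u₁)
  · intro x hx
    have h1 := hlow x hx
    have h2 := hupp x hx
    have hx2 := hx.1
    have hmono : ((B+1)/β) * (1 - x) ≤ ((B+1)/β) * (1 - a) := by
      apply mul_le_mul_of_nonneg_left (by linarith) (by positivity)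
    rw [abs_le]
    constructor <;> nlinarith
  · -- Differentiable (deriv (-w))
    have : deriv (fun x => -w x) = fun x => -(deriv w x) := by
      funext x; exact deriv.neg
    rw [this]; exact hwd2.neg
  · -- equation for -w
    intro x hx
    have heq := hEq x hx
    have hdnw : deriv (fun x => -w x) = fun x => -(deriv w x) := by
      funext x; exact deriv.neg
    have hfun : (fun t => ε t * deriv (fun y => -w y) t) = fun t => -(ε t * deriv w t) := by
      funext t; rw [hdnw]; ring
    have : deriv (fun t => ε t * deriv (fun y => -w y) t) x = -(deriv (fun t => ε t * deriv w t) x) := by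
      rw [hfun]; exact deriv.neg
    rw [this, hdnw]
    simp only
    linarith


/-- FTC-2 convenience wrapper -/
theorem ftc2 (a x : ℝ) (hax : a ≤ x) (F h : ℝ → ℝ)
    (hF : ContinuousOn F (Icc a x))
    (hd : ∀ t ∈ Ioo a x, HasDerivAt F (h t) t)
    (hi : IntervalIntegrable h volume a x) :
    ∫ t in a..x, h t = F x - F a :=
  integral_eq_sub_of_hasDeriv_right_of_le hax hF
    (fun t ht => (hd t ht).hasDerivWithinAt) hi

/-- exponential-weight integral bound -/
theorem expint (a x γ Pmax : ℝ) (hax : a ≤ x) (hγ : 0 < γ) (hPmax : 0 ≤ Pmax)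
    (ε p E r : ℝ → ℝ)
    (hεpos : ∀ t ∈ Icc a x, 0 < ε t)
    (hr : ∀ t ∈ Icc a x, γ / ε t ≤ r t)
    (hE : ∀ t ∈ Icc a x, HasDerivAt E (r t) t)
    (hrc : ContinuousOn r (Icc a x)) (hpc : ContinuousOn p (Icc a x))
    (hp : ∀ t ∈ Icc a x, 0 ≤ p t ∧ p t * ε t ≤ Pmax) :
    ∫ t in a..x, p t * Real.exp (E t) ≤ Pmax / γ * Real.exp (E x) := by
  have hEcont : ContinuousOn E (Icc a x) := fun t ht => ((hE t ht).continuousAt).continuousWithinAt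
  have hexpc : ContinuousOn (fun t => Real.exp (E t)) (Icc a x) :=
    Real.continuous_exp.comp_continuousOn hEcont
  set F : ℝ → ℝ := fun t => Pmax / γ * Real.exp (E t) with hF
  set h : ℝ → ℝ := fun t => Pmax / γ * (r t * Real.exp (E t)) with hh
  have hhc : ContinuousOn h (Icc a x) := (continuousOn_const.mul (hrc.mul hexpc))
  have hptle : ∀ t ∈ Icc a x, p t * Real.exp (E t) ≤ h t := by
    intro t ht
    have h1 : 0 < ε t := hεpos t ht
    have h2 : p t ≤ Pmax / γ * (γ / ε t) := by
      rw [div_mul_div_comm]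
      rw [le_div_iff₀ (by positivity)]
      calc p t * (γ * ε t) = (p t * ε t) * γ := by ring
      _ ≤ Pmax * γ := by nlinarith [(hp t ht).2]
    calc p t * Real.exp (E t) ≤ (Pmax / γ * (γ / ε t)) * Real.exp (E t) := by
          apply mul_le_mul_of_nonneg_right h2 (Real.exp_pos _).le
    _ ≤ Pmax / γ * (r t * Real.exp (E t)) := by
          have := hr t ht
          have h3 : γ / ε t * Real.exp (E t) ≤ r t * Real.exp (E t) :=
            mul_le_mul_of_nonneg_right this (Real.exp_pos _).le
          have h4 : 0 ≤ Pmax / γ := by positivity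
          nlinarith
  have hFi : ∫ t in a..x, h t = F x - F a := by
    apply ftc2 a x hax F h (continuousOn_const.mul hexpc) _ ((hhc.mono (by rw [uIcc_of_le hax])).intervalIntegrable)
    intro t ht
    have ht' : t ∈ Icc a x := Ioo_subset_Icc_self ht
    have := (hE t ht').exp.const_mul (Pmax / γ)
    refine this.congr_deriv (Eq.symm ?_)
    simp only [hh]; ring
  have hmono : ∫ t in a..x, p t * Real.exp (E t) ≤ ∫ t in a..x, h t := by
    apply integral_mono_on hax
      (((hpc.mul hexpc).mono (by rw [uIcc_of_le hax])).intervalIntegrable)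
      ((hhc.mono (by rw [uIcc_of_le hax])).intervalIntegrable)
      hptle
  rw [hFi] at hmono
  have : 0 ≤ F a := by positivity
  calc ∫ t in a..x, p t * Real.exp (E t) ≤ F x - F a := hmono
  _ ≤ F x := by linarith

theorem grad_bound_crude (a β B C₀ u₁ : ℝ) (ha : a ≤ 0) (hβ : 0 < β) (hB : 0 < B)
    (hC₀ : 0 ≤ C₀)
    (ε b c f w : ℝ → ℝ)
    (hεd : Differentiable ℝ ε)
    (hbd : Differentiable ℝ b) (hbdc : Continuous (deriv b))
    (hcc : Continuous c) (hfc : Continuous f)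
    (hwd : Differentiable ℝ w) (hwd2 : Differentiable ℝ (deriv w))
    (hεb : ∀ x ∈ Icc a 1, 0 < ε x ∧ ε x ≤ 1)
    (hbB : ∀ x ∈ Icc a 1, |b x| ≤ B) (hbdB : ∀ x ∈ Icc a 1, |deriv b x| ≤ B)
    (hcB : ∀ x ∈ Icc a 1, |c x| ≤ B) (hfB : ∀ x ∈ Icc a 1, |f x| ≤ B)
    (hwsup : ∀ x ∈ Icc a 1, |w x| ≤ C₀)
    (hEq : ∀ x ∈ Ioo a 1,
      -(deriv (fun t => ε t * deriv w t) x) - b x * deriv w x + c x * w x = f x)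
    (hwa : w a = 0) (hw1 : w 1 = u₁) :
    ∀ x ∈ Icc a 1, |ε x * deriv w x| ≤ |u₁| + 2 * ((2*B*C₀ + B) * (1-a) + B*C₀) := by
  have ha1 : a < 1 := lt_of_le_of_lt ha one_pos
  set G : ℝ → ℝ := fun t => ε t * deriv w t with hG
  set H : ℝ → ℝ := fun t => ε t * deriv w t + b t * w t with hH
  set q : ℝ → ℝ := fun t => c t * w t - f t + deriv b t * w t with hq
  have hGd : ∀ t, DifferentiableAt ℝ G t := fun t => (hεd t).mul (hwd2 t)
  have hwc : Continuous w := hwd.continuous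
  have hqc : Continuous q := by
    apply Continuous.add (Continuous.sub (hcc.mul hwc) hfc) (hbdc.mul hwc)
  have hHc : Continuous H := by
    apply Continuous.add (hεd.continuous.mul (hwd2.continuous)) (hbd.continuous.mul hwc)
  have hHd : ∀ t ∈ Ioo a 1, HasDerivAt H (q t) t := by
    intro t ht
    have h1 : HasDerivAt G (deriv G t) t := (hGd t).hasDerivAt
    have h2 : HasDerivAt (fun s => b s * w s) (deriv b t * w t + b t * deriv w t) t :=
      (hbd t).hasDerivAt.mul (hwd t).hasDerivAt
    have heq := hEq t ht
    have h3 : deriv G t = -(b t * deriv w t) + c t * w t - f t := by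
      simp only [hG]; linarith
    have := h1.fun_add h2
    rw [h3] at this
    refine this.congr_deriv (Eq.symm ?_)
    simp only [hq]; ring
  -- FTC bound for any x in Icc
  have key : ∀ x ∈ Icc a 1, |H x - H a| ≤ (2*B*C₀ + B) * (1-a) := by
    intro x hx
    have hax : a ≤ x := hx.1
    have hsub : Icc a x ⊆ Icc a 1 := Icc_subset_Icc (le_refl a) hx.2
    have hint : ∫ t in a..x, q t = H x - H a := by
      apply ftc2 a x hax H q hHc.continuousOn
        (fun t ht => hHd t ⟨ht.1, lt_of_lt_of_le ht.2 hx.2⟩)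
        (hqc.intervalIntegrable a x)
    rw [← hint]
    have hqbound : ∀ t ∈ Icc a x, |q t| ≤ 2*B*C₀ + B := by
      intro t ht
      have ht' := hsub ht
      have h1 := hcB t ht'; have h2 := hfB t ht'; have h3 := hbdB t ht'
      have h4 := hwsup t ht'
      simp only [hq]
      have e1 : |c t * w t| ≤ B * C₀ := by
        rw [abs_mul]; exact mul_le_mul h1 h4 (abs_nonneg _) hB.le
      have e2 : |deriv b t * w t| ≤ B * C₀ := by
        rw [abs_mul]; exact mul_le_mul h3 h4 (abs_nonneg _) hB.le
      calc |c t * w t - f t + deriv b t * w t| ≤ |c t * w t| + |f t| + |deriv b t * w t| := by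
            apply le_trans (abs_add_le _ _) (by gcongr; exact abs_sub _ _)
      _ ≤ B*C₀ + B + B*C₀ := by gcongr
      _ = 2*B*C₀ + B := by ring
    calc |∫ t in a..x, q t| ≤ ∫ t in a..x, |q t| :=
          intervalIntegral.abs_integral_le_integral_abs hax
    _ ≤ ∫ t in a..x, (2*B*C₀ + B) := by
          apply integral_mono_on hax (hqc.abs.intervalIntegrable a x)
            (intervalIntegrable_const) hqbound
    _ = (2*B*C₀ + B) * (x - a) := by rw [intervalIntegral.integral_const]; ring_nf
    _ ≤ (2*B*C₀ + B) * (1 - a) := by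
          have : 0 ≤ 2*B*C₀ + B := by positivity
          nlinarith [hx.2]
  -- mean value point
  obtain ⟨ξ, hξ, hslope⟩ := exists_hasDerivAt_eq_slope w (deriv w) ha1
    hwc.continuousOn (fun t _ => (hwd t).hasDerivAt)
  have hξIcc : ξ ∈ Icc a 1 := Ioo_subset_Icc_self hξ
  have hGξ : |G ξ| ≤ |u₁| := by
    have h1 : deriv w ξ = u₁ / (1 - a) := by rw [hslope, hw1, hwa]; ring_nf
    have h2 := hεb ξ hξIcc
    simp only [hG, h1, abs_mul, abs_div]
    have h3 : |1 - a| = 1 - a := abs_of_pos (by linarith)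
    rw [h3]
    have h4 : |u₁| / (1 - a) ≤ |u₁| := by
      apply div_le_self (abs_nonneg _) (by linarith)
    have h1a : (0:ℝ) < 1 - a := by linarith
    calc |ε ξ| * (|u₁| / (1-a)) ≤ 1 * (|u₁| / (1-a)) := by
          apply mul_le_mul_of_nonneg_right _ (by positivity)
          
          rw [abs_of_pos h2.1]; exact h2.2
    _ = |u₁| / (1-a) := by ring
    _ ≤ |u₁| := h4
  -- combine
  intro x hx
  have hKa := key ξ hξIcc
  have hKx := key x hx
  have hHa : H a = G a := by simp only [hH, hG, hwa]; ring
  have hHGξ : H ξ = G ξ + b ξ * w ξ := rfl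
  have hHGx : H x = G x + b x * w x := rfl
  have hbwξ : |b ξ * w ξ| ≤ B * C₀ := by
    rw [abs_mul]; exact mul_le_mul (hbB ξ hξIcc) (hwsup ξ hξIcc) (abs_nonneg _) hB.le
  have hbwx : |b x * w x| ≤ B * C₀ := by
    rw [abs_mul]; exact mul_le_mul (hbB x hx) (hwsup x hx) (abs_nonneg _) hB.le
  have h5 : |G a| ≤ |u₁| + (2*B*C₀ + B) * (1-a) + B*C₀ := by
    rw [hHa] at hKa
    rw [hHGξ] at hKa
    have := abs_sub_abs_le_abs_sub (G ξ + b ξ * w ξ) (G a)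
    have h6 := abs_add_le (G ξ) (b ξ * w ξ)
    calc |G a| ≤ |G ξ + b ξ * w ξ| + (2*B*C₀+B)*(1-a) := by
          have := abs_sub_abs_le_abs_sub (G a) (G ξ + b ξ * w ξ)
          rw [abs_sub_comm] at hKa
          linarith
    _ ≤ |u₁| + (2*B*C₀+B)*(1-a) + B*C₀ := by linarith [abs_add_le (G ξ) (b ξ * w ξ), hGξ, hbwξ]
  have h7 : |G x| ≤ |G a| + (2*B*C₀+B)*(1-a) + B*C₀ := by
    rw [hHa, hHGx] at hKx
    have := abs_add_le (G x + b x * w x - G a) (-(b x * w x))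
    simp only [add_sub_assoc] at this
    calc |G x| = |(G x + b x * w x - G a) + (G a - b x * w x)| := by ring_nf
    _ ≤ |G x + b x * w x - G a| + |G a - b x * w x| := abs_add_le _ _
    _ ≤ (2*B*C₀+B)*(1-a) + (|G a| + |b x * w x|) := by
          have h8 : |G a - b x * w x| ≤ |G a| + |b x * w x| := abs_sub _ _
          linarith
    _ ≤ |G a| + (2*B*C₀+B)*(1-a) + B*C₀ := by linarith
  simp only [hG] at h7 h5 ⊢
  linarith

theorem grad_bound_refined (a β B C₀ C₁ : ℝ) (ha : a ≤ 0) (hβ : 0 < β) (hB : 0 < B)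
    (hC₀ : 0 ≤ C₀) (hC₁ : 0 ≤ C₁)
    (ε b c f w E φ : ℝ → ℝ)
    (hεd : Differentiable ℝ ε)
    (hbc : Continuous b) (hcc : Continuous c) (hfc : Continuous f)
    (hwd : Differentiable ℝ w) (hwd2 : Differentiable ℝ (deriv w))
    (hεb : ∀ x ∈ Icc a 1, 0 < ε x ∧ ε x ≤ 1)
    (hbβ : ∀ x ∈ Icc a 1, β ≤ b x)
    (hcB : ∀ x ∈ Icc a 1, |c x| ≤ B) (hfB : ∀ x ∈ Icc a 1, |f x| ≤ B)
    (hwsup : ∀ x ∈ Icc a 1, |w x| ≤ C₀)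
    (hεmono : MonotoneOn ε (Icc a 1))
    (hE : ∀ t ∈ Icc a 1, HasDerivAt E (1 / ε t) t) (hEa : E a = 0)
    (hφ : ∀ t ∈ Icc a 1, HasDerivAt φ (b t / ε t) t) (hφa : φ a = 0)
    (hEq : ∀ x ∈ Ioo a 1,
      -(deriv (fun t => ε t * deriv w t) x) - b x * deriv w x + c x * w x = f x)
    (hG1 : ∀ x ∈ Icc a 1, |ε x * deriv w x| ≤ C₁)
    (hcomp : MonotoneOn (fun t => φ t - β * E t) (Icc a 1)) :
    ∀ x ∈ Icc a 1, |ε x * deriv w x| ≤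
      C₁ * Real.exp (-β * E x) + ((B*C₀ + B)/β) * ε x := by
  intro x hx
  have hax : a ≤ x := hx.1
  have hsub : Icc a x ⊆ Icc a 1 := Icc_subset_Icc (le_refl a) hx.2
  set G : ℝ → ℝ := fun t => ε t * deriv w t with hGdef
  have hGd : ∀ t, DifferentiableAt ℝ G t := fun t => (hεd t).mul (hwd2 t)
  have hφc : ContinuousOn φ (Icc a x) := fun t ht =>
    ((hφ t (hsub ht)).continuousAt).continuousWithinAt
  have hexpφc : ContinuousOn (fun t => Real.exp (φ t)) (Icc a x) :=
    Real.continuous_exp.comp_continuousOn hφc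
  set F : ℝ → ℝ := fun t => ε t * deriv w t * Real.exp (φ t) with hFdef
  set q : ℝ → ℝ := fun t => (c t * w t - f t) * Real.exp (φ t) with hqdef
  have hqc : ContinuousOn q (Icc a x) := by
    apply ContinuousOn.mul _ hexpφc
    exact ((hcc.mul hwd.continuous).sub hfc).continuousOn
  have hqint : IntervalIntegrable q volume a x :=
    (hqc.mono (by rw [uIcc_of_le hax])).intervalIntegrable
  have hFTC : ∫ t in a..x, q t = F x - F a := by
    apply ftc2 a x hax F q (hi := hqint)
    · exact ((hεd.continuous.mul hwd2.continuous).continuousOn).mul hexpφc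
    · intro t ht
      have ht' : t ∈ Icc a 1 := hsub (Ioo_subset_Icc_self ht)
      have htIoo : t ∈ Ioo a 1 := ⟨ht.1, lt_of_lt_of_le ht.2 hx.2⟩
      have hεt : 0 < ε t := (hεb t ht').1
      have hd1 : HasDerivAt G (deriv G t) t := (hGd t).hasDerivAt
      have heq := hEq t htIoo
      have h3 : deriv G t = -(b t * deriv w t) + c t * w t - f t := by
        simp only [hGdef]; linarith
      have hd2 : HasDerivAt (fun s => Real.exp (φ s)) (b t / ε t * Real.exp (φ t)) t := by
        have := (hφ t ht').exp
        convert this using 1; ring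
      have := hd1.fun_mul hd2
      refine this.congr_deriv (Eq.symm ?_)
      rw [h3]
      simp only [hqdef, hGdef]
      field_simp
      ring
  have hFa : F a = ε a * deriv w a := by simp [hFdef, hφa]
  -- bound the integral
  have hqb : ∀ t ∈ Icc a x, |q t| ≤ (B*C₀ + B) * Real.exp (φ t) := by
    intro t ht
    have ht' := hsub ht
    simp only [hqdef, abs_mul, Real.abs_exp]
    apply mul_le_mul_of_nonneg_right _ (Real.exp_pos _).le
    calc |c t * w t - f t| ≤ |c t * w t| + |f t| := abs_sub _ _
    _ ≤ B * C₀ + B := by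
        have := hwsup t ht'
        have h1 := hcB t ht'
        have h2 := hfB t ht'
        rw [abs_mul]
        have : |c t| * |w t| ≤ B * C₀ := mul_le_mul h1 this (abs_nonneg _) hB.le
        linarith
  have hintb : |∫ t in a..x, q t| ≤ ((B*C₀+B) * ε x / β) * Real.exp (φ x) := by
    have h1 : |∫ t in a..x, q t| ≤ ∫ t in a..x, |q t| :=
      intervalIntegral.abs_integral_le_integral_abs hax
    have h2 : ∫ t in a..x, |q t| ≤ ∫ t in a..x, (B*C₀+B) * Real.exp (φ t) := by
      apply integral_mono_on hax
        ((hqc.abs.mono (by rw [uIcc_of_le hax])).intervalIntegrable)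
        (((continuousOn_const.mul hexpφc).mono (by rw [uIcc_of_le hax])).intervalIntegrable)
        hqb
    have h3 : ∫ t in a..x, (B*C₀+B) * Real.exp (φ t) ≤ ((B*C₀+B) * ε x / β) * Real.exp (φ x) := by
      have hεx : 0 < ε x := (hεb x hx).1
      have := expint a x β ((B*C₀+B) * ε x) hax hβ (by positivity)
        ε (fun _ => B*C₀+B) φ (fun t => b t / ε t)
        (fun t ht => (hεb t (hsub ht)).1)
        (fun t ht => by
          have h4 := hbβ t (hsub ht)
          have h5 := (hεb t (hsub ht)).1
          exact (div_le_div_iff_of_pos_right h5).mpr h4)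
        (fun t ht => hφ t (hsub ht))
        ((hbc.continuousOn).div (hεd.continuous.continuousOn)
          (fun t ht => ne_of_gt (hεb t (hsub ht)).1))
        continuousOn_const
        (fun t ht => by
          have hm := hεmono (hsub ht) hx ht.2
          refine ⟨by positivity, ?_⟩
          show (B*C₀+B) * ε t ≤ (B*C₀+B) * ε x
          exact mul_le_mul_of_nonneg_left hm (by positivity))
      calc ∫ t in a..x, (B*C₀+B) * Real.exp (φ t) ≤ ((B*C₀+B) * ε x) / β * Real.exp (φ x) := this
      _ = ((B*C₀+B) * ε x / β) * Real.exp (φ x) := by ring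
    linarith
  -- conclude
  have hεx : 0 < ε x := (hεb x hx).1
  have hGa : |ε a * deriv w a| ≤ C₁ := hG1 a ⟨le_refl a, by linarith⟩
  have hFx : |F x| ≤ C₁ + ((B*C₀+B) * ε x / β) * Real.exp (φ x) := by
    have : F x = F a + ∫ t in a..x, q t := by linarith [hFTC]
    rw [this]
    calc |F a + ∫ t in a..x, q t| ≤ |F a| + |∫ t in a..x, q t| := abs_add_le _ _
    _ ≤ C₁ + ((B*C₀+B) * ε x / β) * Real.exp (φ x) := by
        rw [hFa]; gcongr
  have hφβE : β * E x ≤ φ x := by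
    have h1 := hcomp (show a ∈ Icc a 1 from ⟨le_refl a, by linarith⟩) hx hax
    simp only [hφa, hEa] at h1
    linarith
  have hFxG : |F x| = |G x| * Real.exp (φ x) := by
    simp only [hFdef, hGdef, abs_mul, Real.abs_exp]
  have hGxb : |G x| ≤ C₁ * Real.exp (-(φ x)) + (B*C₀+B) * ε x / β := by
    have hep : 0 < Real.exp (φ x) := Real.exp_pos _
    rw [hFxG] at hFx
    have := mul_le_mul_of_nonneg_right hFx (Real.exp_pos (-(φ x))).le
    rw [mul_assoc, ← Real.exp_add, add_neg_cancel, Real.exp_zero, mul_one] at this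
    calc |G x| ≤ (C₁ + (B*C₀+B) * ε x / β * Real.exp (φ x)) * Real.exp (-(φ x)) := this
    _ = C₁ * Real.exp (-(φ x)) + (B*C₀+B) * ε x / β * (Real.exp (φ x) * Real.exp (-(φ x))) := by ring
    _ = C₁ * Real.exp (-(φ x)) + (B*C₀+B) * ε x / β := by
        rw [← Real.exp_add, add_neg_cancel, Real.exp_zero, mul_one]
  have hexpmono : Real.exp (-(φ x)) ≤ Real.exp (-β * E x) := by
    apply Real.exp_le_exp.mpr; linarith
  calc |G x| ≤ C₁ * Real.exp (-(φ x)) + (B*C₀+B) * ε x / β := hGxb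
  _ ≤ C₁ * Real.exp (-β * E x) + ((B*C₀+B)/β) * ε x := by
      have := mul_le_mul_of_nonneg_left hexpmono hC₁
      have heq : (B*C₀+B) * ε x / β = ((B*C₀+B)/β) * ε x := by ring
      linarith [heq ▸ le_refl ((B*C₀+B) * ε x / β)]

set_option maxHeartbeats 1000000 in
theorem second_deriv_bound (a β B C₀ C₂ : ℝ) (ha : a ≤ 0) (hβ : 0 < β) (hB : 0 < B)
    (hC₀ : 0 ≤ C₀) (hC₂ : 0 ≤ C₂)
    (ε b c f w E φ : ℝ → ℝ)
    (hεd : Differentiable ℝ ε) (hεd2 : Differentiable ℝ (deriv ε))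
    (hεddc : Continuous (deriv (deriv ε)))
    (hbd : Differentiable ℝ b) (hbdc : Continuous (deriv b))
    (hcd : Differentiable ℝ c) (hcdc : Continuous (deriv c))
    (hfd : Differentiable ℝ f) (hfdc : Continuous (deriv f))
    (hwd : Differentiable ℝ w) (hwd2 : Differentiable ℝ (deriv w))
    (hwddc : Continuous (deriv (deriv w)))
    (hεb : ∀ x ∈ Icc a 1, 0 < ε x ∧ ε x ≤ 1)
    (hbβ : ∀ x ∈ Icc a 1, β ≤ b x)
    (hbB : ∀ x ∈ Icc a 1, |b x| ≤ B) (hcB : ∀ x ∈ Icc a 1, |c x| ≤ B)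
    (hfB : ∀ x ∈ Icc a 1, |f x| ≤ B)
    (hbdB : ∀ x ∈ Icc a 1, |deriv b x| ≤ B) (hcdB : ∀ x ∈ Icc a 1, |deriv c x| ≤ B)
    (hfdB : ∀ x ∈ Icc a 1, |deriv f x| ≤ B)
    (hε'pos : ∀ x ∈ Icc a 1, 0 ≤ deriv ε x)
    (hεmono : MonotoneOn ε (Icc a 1))
    (hE : ∀ t ∈ Icc a 1, HasDerivAt E (1 / ε t) t) (hEa : E a = 0)
    (hφ : ∀ t ∈ Icc a 1, HasDerivAt φ (b t / ε t) t) (hφa : φ a = 0)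
    (hcomp : MonotoneOn (fun t => φ t - β * E t) (Icc a 1))
    (hEq : ∀ x ∈ Ioo a 1,
      -(deriv (fun t => ε t * deriv w t) x) - b x * deriv w x + c x * w x = f x)
    (hwa : w a = 0)
    (hwsup : ∀ x ∈ Icc a 1, |w x| ≤ C₀)
    (hG2 : ∀ x ∈ Icc a 1, |ε x * deriv w x| ≤ C₂ * (Real.exp (-β * E x) + ε x)) :
    ∀ x ∈ Icc a 1, |deriv (deriv w) x| ≤
      (C₂ + (2*B*C₂ + B*C₀ + B)/β + (2*B*C₂ + B*C₀ + B)*(1-a) + 2*C₂*B + B + 2*C₂) *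
        (1 + ((1/(ε x)^2) * Real.exp (-β * E x) *
              ∫ t in a..x, |deriv (deriv ε) t| * ε t * Real.exp (β * E t)) +
          (1/(ε x)^2) * (1 + deriv ε a + ∫ t in a..x, |deriv (deriv ε) t|) *
            Real.exp (-β * E x)) := by
  have ha1 : a < 1 := lt_of_le_of_lt ha one_pos
  set K₅ : ℝ := 2*B*C₂ + B*C₀ + B with hK₅
  have hK₅pos : 0 < K₅ := by positivity
  set CD : ℝ := C₂ + K₅/β + K₅*(1-a) + 2*C₂*B + B + 2*C₂ with hCD
  set R : ℝ → ℝ := fun t => -(deriv ε t + b t) * deriv w t + c t * w t - f t with hRdef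
  set y : ℝ → ℝ := fun t => deriv (deriv w) t with hydef
  have hwc : Continuous w := hwd.continuous
  have hw'c : Continuous (deriv w) := hwd2.continuous
  have hε'c : Continuous (deriv ε) := hεd2.continuous
  have hRc : Continuous R := by
    apply Continuous.sub
    apply Continuous.add
    · exact (((hε'c.add hbd.continuous).neg).mul hw'c)
    · exact hcd.continuous.mul hwc
    · exact hfd.continuous
  -- R = ε y on Icc a 1
  have hR : ∀ t ∈ Icc a 1, ε t * y t = R t := by
    have heqon : EqOn (fun t => ε t * y t) R (Ioo a 1) := by
      intro t ht
      have hprod : deriv (fun s => ε s * deriv w s) t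
          = deriv ε t * deriv w t + ε t * y t :=
        deriv_mul (hεd t) (hwd2 t)
      have heq := hEq t ht
      rw [hprod] at heq
      simp only [hRdef]
      ring_nf
      ring_nf at heq
      linarith
    have hclos : EqOn (fun t => ε t * y t) R (closure (Ioo a 1)) :=
      heqon.closure (hεd.continuous.mul hwddc) hRc
    rw [closure_Ioo (ne_of_lt ha1)] at hclos
    exact hclos
  -- derivative of R
  set R' : ℝ → ℝ := fun t => -(deriv (deriv ε) t + deriv b t) * deriv w t
      - (deriv ε t + b t) * y t + deriv c t * w t + c t * deriv w t - deriv f t with hR'def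
  have hRd : ∀ t, HasDerivAt R (R' t) t := by
    intro t
    have h1 : HasDerivAt (fun s => -(deriv ε s + b s) * deriv w s)
        (-(deriv (deriv ε) t + deriv b t) * deriv w t + -(deriv ε t + b t) * y t) t := by
      exact (((hεd2 t).hasDerivAt.add (hbd t).hasDerivAt).neg).mul (hwd2 t).hasDerivAt
    have h2 : HasDerivAt (fun s => c s * w s) (deriv c t * w t + c t * deriv w t) t :=
      (hcd t).hasDerivAt.mul (hwd t).hasDerivAt
    have h3 := (h1.fun_add h2).fun_sub (hfd t).hasDerivAt
    refine h3.congr_deriv (Eq.symm ?_)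
    simp only [hR'def]; ring
  have hR'c : Continuous R' := by
    refine Continuous.sub (Continuous.add (Continuous.add (Continuous.sub ?_ ?_) ?_) ?_) hfdc
    · exact ((hεddc.add hbdc).neg).mul hw'c
    · exact (hε'c.add hbd.continuous).mul hwddc
    · exact hcdc.mul hwc
    · exact hcd.continuous.mul hw'c
  intro x hx
  have hax : a ≤ x := hx.1
  have hsub : Icc a x ⊆ Icc a 1 := Icc_subset_Icc (le_refl a) hx.2
  have hεx : 0 < ε x := (hεb x hx).1
  have haIcc : a ∈ Icc a 1 := ⟨le_refl a, ha1.le⟩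
  -- continuity of E, φ on Icc a 1
  have hEc : ContinuousOn E (Icc a 1) := fun t ht => (hE t ht).continuousAt.continuousWithinAt
  have hφc : ContinuousOn φ (Icc a 1) := fun t ht => (hφ t ht).continuousAt.continuousWithinAt
  have hexpφc : ContinuousOn (fun t => Real.exp (φ t)) (Icc a 1) :=
    Real.continuous_exp.comp_continuousOn hφc
  have hexpEc : ContinuousOn (fun t => Real.exp (β * E t)) (Icc a 1) :=
    Real.continuous_exp.comp_continuousOn (continuousOn_const.mul hEc)
  have hexpnEc : ContinuousOn (fun t => Real.exp (-β * E t)) (Icc a 1) :=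
    Real.continuous_exp.comp_continuousOn (continuousOn_const.mul hEc)
  -- FTC identity
  set F₂ : ℝ → ℝ := fun t => R t * ε t * Real.exp (φ t) with hF₂def
  set h₂ : ℝ → ℝ := fun t => (R' t * ε t + R t * (deriv ε t + b t)) * Real.exp (φ t) with hh₂def
  have hh₂c : ContinuousOn h₂ (Icc a 1) := by
    apply ContinuousOn.mul _ hexpφc
    exact ((hR'c.mul hεd.continuous).add (hRc.mul (hε'c.add hbd.continuous))).continuousOn
  have hFTC : ∫ t in a..x, h₂ t = F₂ x - F₂ a := by
    apply ftc2 a x hax F₂ h₂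
    · exact ((hRc.mul hεd.continuous).continuousOn).mul (hexpφc.mono hsub)
    · intro t ht
      have ht' : t ∈ Icc a 1 := hsub (Ioo_subset_Icc_self ht)
      have hεt : 0 < ε t := (hεb t ht').1
      have hd1 : HasDerivAt (fun s => R s * ε s) (R' t * ε t + R t * deriv ε t) t :=
        (hRd t).mul (hεd t).hasDerivAt
      have hd2 : HasDerivAt (fun s => Real.exp (φ s)) (b t / ε t * Real.exp (φ t)) t := by
        have := (hφ t ht').exp; convert this using 1; ring
      have := hd1.fun_mul hd2
      refine this.congr_deriv (Eq.symm ?_)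
      simp only [hh₂def]
      field_simp
      ring
    · exact ((hh₂c.mono hsub).mono (by rw [uIcc_of_le hax])).intervalIntegrable
  -- pointwise bound for h₂
  set g₁ : ℝ → ℝ := fun t => |deriv (deriv ε) t| * ε t * Real.exp (φ t) with hg₁
  set g₂ : ℝ → ℝ := fun t => |deriv (deriv ε) t| * Real.exp (-β * E t) * Real.exp (φ t) with hg₂
  set g₄ : ℝ → ℝ := fun t => Real.exp (-β * E t) * Real.exp (φ t) with hg₄
  set gA : ℝ → ℝ := fun t => C₂ * g₁ t + C₂ * g₂ t + K₅ * g₄ t with hgA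
  set gB : ℝ → ℝ := fun t => K₅ * (ε t * Real.exp (φ t)) with hgB
  have hptw : ∀ t ∈ Icc a 1, |h₂ t| ≤ gA t + gB t := by
    intro t ht
    have hεt := (hεb t ht).1
    have hεt1 := (hεb t ht).2
    have hRt := hR t ht
    have hid : R' t * ε t + R t * (deriv ε t + b t)
        = (-(deriv (deriv ε) t + deriv b t) * (ε t * deriv w t)
           + deriv c t * (ε t * w t) + c t * (ε t * deriv w t) - ε t * deriv f t) := by
      rw [← hRt]
      simp only [hR'def]
      ring
    have hEb := hG2 t ht
    have hexpE : (0:ℝ) < Real.exp (-β * E t) := Real.exp_pos _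
    have hw0 := hwsup t ht
    have hb' := hbdB t ht; have hc' := hcdB t ht; have hf' := hfdB t ht
    have hcB' := hcB t ht
    set e₀ : ℝ := Real.exp (-β * E t)
    set d₂ : ℝ := |deriv (deriv ε) t|
    have hd₂ : 0 ≤ d₂ := abs_nonneg _
    have hkey : |R' t * ε t + R t * (deriv ε t + b t)|
        ≤ C₂ * (d₂ * ε t) + C₂ * (d₂ * e₀) + K₅ * e₀ + K₅ * ε t := by
      rw [hid]
      have t1 : |(-(deriv (deriv ε) t + deriv b t)) * (ε t * deriv w t)|
          ≤ (d₂ + B) * (C₂ * (e₀ + ε t)) := by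
        rw [abs_mul]
        apply mul_le_mul _ hEb (abs_nonneg _) (by positivity)
        rw [abs_neg]
        calc |deriv (deriv ε) t + deriv b t| ≤ d₂ + |deriv b t| := abs_add_le _ _
        _ ≤ d₂ + B := by linarith
      have t2 : |deriv c t * (ε t * w t)| ≤ B * C₀ * ε t := by
        rw [abs_mul, abs_mul]
        have : |deriv c t| * (|ε t| * |w t|) ≤ B * (ε t * C₀) := by
          apply mul_le_mul hc' _ (by positivity) hB.le
          rw [abs_of_pos hεt]
          exact mul_le_mul_of_nonneg_left hw0 hεt.le
        calc |deriv c t| * (|ε t| * |w t|) ≤ B * (ε t * C₀) := this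
        _ = B * C₀ * ε t := by ring
      have t3 : |c t * (ε t * deriv w t)| ≤ B * (C₂ * (e₀ + ε t)) := by
        rw [abs_mul]
        exact mul_le_mul hcB' hEb (abs_nonneg _) hB.le
      have t4 : |ε t * deriv f t| ≤ B * ε t := by
        rw [abs_mul, abs_of_pos hεt]
        calc ε t * |deriv f t| ≤ ε t * B := mul_le_mul_of_nonneg_left hf' hεt.le
        _ = B * ε t := by ring
      calc |(-(deriv (deriv ε) t + deriv b t)) * (ε t * deriv w t)
            + deriv c t * (ε t * w t) + c t * (ε t * deriv w t) - ε t * deriv f t|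
          ≤ |(-(deriv (deriv ε) t + deriv b t)) * (ε t * deriv w t)|
            + |deriv c t * (ε t * w t)| + |c t * (ε t * deriv w t)| + |ε t * deriv f t| := by
            have u1 := abs_add_le ((-(deriv (deriv ε) t + deriv b t)) * (ε t * deriv w t))
              (deriv c t * (ε t * w t))
            have u2 := abs_add_le ((-(deriv (deriv ε) t + deriv b t)) * (ε t * deriv w t)
              + deriv c t * (ε t * w t)) (c t * (ε t * deriv w t))
            have u3 := abs_sub ((-(deriv (deriv ε) t + deriv b t)) * (ε t * deriv w t)
              + deriv c t * (ε t * w t) + c t * (ε t * deriv w t)) (ε t * deriv f t)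
            linarith
      _ ≤ C₂ * (d₂ * ε t) + C₂ * (d₂ * e₀) + K₅ * e₀ + K₅ * ε t := by
            simp only [hK₅]
            nlinarith [mul_nonneg hd₂ hεt.le, mul_nonneg hd₂ hexpE.le,
              mul_nonneg (mul_nonneg hB.le hC₀) hexpE.le, mul_nonneg hB.le hexpE.le,
              mul_nonneg (mul_nonneg hB.le hC₂) hexpE.le]
    have habs : |h₂ t| = |R' t * ε t + R t * (deriv ε t + b t)| * Real.exp (φ t) := by
      simp only [hh₂def, abs_mul, Real.abs_exp]
    have hrw : |R' t * ε t + R t * (deriv ε t + b t)| * Real.exp (φ t)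
        ≤ (C₂ * (d₂ * ε t) + C₂ * (d₂ * e₀) + K₅ * e₀ + K₅ * ε t) * Real.exp (φ t) :=
      mul_le_mul_of_nonneg_right hkey (Real.exp_pos _).le
    have hgoal : gA t + gB t = C₂ * (d₂ * ε t * Real.exp (φ t)) + C₂ * (d₂ * e₀ * Real.exp (φ t))
          + K₅ * (e₀ * Real.exp (φ t)) + K₅ * (ε t * Real.exp (φ t)) := by
      simp only [hgA, hgB, hg₁, hg₂, hg₄]
      try ring
    rw [habs, hgoal]
    calc |R' t * ε t + R t * (deriv ε t + b t)| * Real.exp (φ t)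
        ≤ (C₂ * (d₂ * ε t) + C₂ * (d₂ * e₀) + K₅ * e₀ + K₅ * ε t) * Real.exp (φ t) := hrw
    _ = C₂ * (d₂ * ε t * Real.exp (φ t)) + C₂ * (d₂ * e₀ * Real.exp (φ t))
          + K₅ * (e₀ * Real.exp (φ t)) + K₅ * (ε t * Real.exp (φ t)) := by ring
  -- notation
  set S : ℝ := Real.exp (-β * E x) with hSdef
  set S' : ℝ := Real.exp (-(φ x)) with hS'def
  set IK : ℝ := ∫ t in a..x, |deriv (deriv ε) t| * ε t * Real.exp (β * E t) with hIKdef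
  set I₁ : ℝ := ∫ t in a..x, |deriv (deriv ε) t| with hI₁def
  have hS : (0:ℝ) < S := Real.exp_pos _
  have hS' : (0:ℝ) < S' := Real.exp_pos _
  have hu : uIcc a x ⊆ Icc a x := by rw [uIcc_of_le hax]
  have hφβx : β * E x ≤ φ x := by
    have h1 := hcomp haIcc hx hax
    simp only [hφa, hEa] at h1
    linarith
  have hS'S : S' ≤ S := by
    rw [hSdef, hS'def]
    exact Real.exp_le_exp.mpr (by linarith)
  have hc_abs : ContinuousOn (fun t => |deriv (deriv ε) t|) (Icc a 1) :=
    hεddc.abs.continuousOn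
  have hg₁c : ContinuousOn g₁ (Icc a 1) :=
    (hc_abs.mul hεd.continuous.continuousOn).mul hexpφc
  have hg₂c : ContinuousOn g₂ (Icc a 1) := (hc_abs.mul hexpnEc).mul hexpφc
  have hg₄c : ContinuousOn g₄ (Icc a 1) := hexpnEc.mul hexpφc
  have hgAc : ContinuousOn gA (Icc a 1) :=
    ((continuousOn_const.mul hg₁c).add (continuousOn_const.mul hg₂c)).add
      (continuousOn_const.mul hg₄c)
  have hgBc : ContinuousOn gB (Icc a 1) :=
    continuousOn_const.mul (hεd.continuous.continuousOn.mul hexpφc)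
  have hgAint : IntervalIntegrable gA volume a x :=
    ((hgAc.mono hsub).mono hu).intervalIntegrable
  have hgBint : IntervalIntegrable gB volume a x :=
    ((hgBc.mono hsub).mono hu).intervalIntegrable
  -- split the integral of |h₂|
  have hsplit : ∫ t in a..x, |h₂ t| ≤ (∫ t in a..x, gA t) + ∫ t in a..x, gB t := by
    have h1 : ∫ t in a..x, |h₂ t| ≤ ∫ t in a..x, (gA t + gB t) := by
      apply integral_mono_on hax (((hh₂c.mono hsub).mono hu).intervalIntegrable.abs)
        (hgAint.add hgBint)
      intro t ht
      exact hptw t (hsub ht)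
    rw [integral_add hgAint hgBint] at h1
    exact h1
  -- term B
  have htermB : (∫ t in a..x, gB t) * S' ≤ K₅ * ((ε x)^2 / β) := by
    have hbig : ∫ t in a..x, gB t ≤ K₅ * ((ε x)^2 / β * Real.exp (φ x)) := by
      have hKint : ∫ t in a..x, gB t = K₅ * ∫ t in a..x, ε t * Real.exp (φ t) := by
        simp only [hgB]
        exact integral_const_mul _ _
      rw [hKint]
      apply mul_le_mul_of_nonneg_left _ hK₅pos.le
      have := expint a x β ((ε x)^2) hax hβ (by positivity)
        ε ε φ (fun t => b t / ε t)
        (fun t ht => (hεb t (hsub ht)).1)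
        (fun t ht => by
          have h4 := hbβ t (hsub ht)
          have h5 := (hεb t (hsub ht)).1
          exact (div_le_div_iff_of_pos_right h5).mpr h4)
        (fun t ht => hφ t (hsub ht))
        ((hbd.continuous.continuousOn.mono hsub).div
          (hεd.continuous.continuousOn.mono hsub)
          (fun t ht => ne_of_gt (hεb t (hsub ht)).1))
        (hεd.continuous.continuousOn.mono hsub)
        (fun t ht => by
          have h5 := (hεb t (hsub ht)).1
          have hm := hεmono (hsub ht) hx ht.2
          constructor
          · exact h5.le
          · show ε t * ε t ≤ (ε x)^2
            nlinarith)
      exact this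
    calc (∫ t in a..x, gB t) * S' ≤ (K₅ * ((ε x)^2 / β * Real.exp (φ x))) * S' :=
          mul_le_mul_of_nonneg_right hbig hS'.le
    _ = K₅ * ((ε x)^2/β) * (Real.exp (φ x) * S') := by ring
    _ = K₅ * ((ε x)^2/β) := by
          rw [hS'def, ← Real.exp_add, add_neg_cancel, Real.exp_zero, mul_one]
  -- term A pointwise
  have hqA : ∀ t ∈ Icc a x, gA t * S' ≤
      C₂ * (|deriv (deriv ε) t| * ε t * Real.exp (β * E t)) * S
        + C₂ * |deriv (deriv ε) t| * S + K₅ * S := by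
    intro t ht
    have ht' : t ∈ Icc a 1 := hsub ht
    have hm := hcomp ht' hx ht.2
    simp only at hm
    have hεt := (hεb t ht').1
    have hd₂ : (0:ℝ) ≤ |deriv (deriv ε) t| := abs_nonneg _
    have p1 : g₁ t * S' ≤ |deriv (deriv ε) t| * ε t * Real.exp (β * E t) * S := by
      have he : Real.exp (φ t) * S' ≤ Real.exp (β * E t) * S := by
        rw [hS'def, hSdef, ← Real.exp_add, ← Real.exp_add]
        exact Real.exp_le_exp.mpr (by linarith)
      calc g₁ t * S' = (|deriv (deriv ε) t| * ε t) * (Real.exp (φ t) * S') := by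
            simp only [hg₁]; ring
      _ ≤ (|deriv (deriv ε) t| * ε t) * (Real.exp (β * E t) * S) :=
            mul_le_mul_of_nonneg_left he (by positivity)
      _ = |deriv (deriv ε) t| * ε t * Real.exp (β * E t) * S := by ring
    have p2 : g₂ t * S' ≤ |deriv (deriv ε) t| * S := by
      have he : Real.exp (-β * E t) * Real.exp (φ t) * S' ≤ S := by
        rw [hS'def, hSdef, ← Real.exp_add, ← Real.exp_add]
        exact Real.exp_le_exp.mpr (by linarith)
      calc g₂ t * S' = |deriv (deriv ε) t| * (Real.exp (-β * E t) * Real.exp (φ t) * S') := by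
            simp only [hg₂]; ring
      _ ≤ |deriv (deriv ε) t| * S := mul_le_mul_of_nonneg_left he hd₂
    have p4 : g₄ t * S' ≤ S := by
      have he : Real.exp (-β * E t) * Real.exp (φ t) * S' ≤ S := by
        rw [hS'def, hSdef, ← Real.exp_add, ← Real.exp_add]
        exact Real.exp_le_exp.mpr (by linarith)
      calc g₄ t * S' = Real.exp (-β * E t) * Real.exp (φ t) * S' := by
            simp only [hg₄]
      _ ≤ S := he
    have q1 := mul_le_mul_of_nonneg_left p1 hC₂
    have q2 := mul_le_mul_of_nonneg_left p2 hC₂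
    have q4 := mul_le_mul_of_nonneg_left p4 hK₅pos.le
    have hsum := add_le_add (add_le_add q1 q2) q4
    calc gA t * S' = C₂ * (g₁ t * S') + C₂ * (g₂ t * S') + K₅ * (g₄ t * S') := by
          simp only [hgA]; ring
    _ ≤ C₂ * (|deriv (deriv ε) t| * ε t * Real.exp (β * E t) * S)
          + C₂ * (|deriv (deriv ε) t| * S) + K₅ * S := hsum
    _ = C₂ * (|deriv (deriv ε) t| * ε t * Real.exp (β * E t)) * S
          + C₂ * |deriv (deriv ε) t| * S + K₅ * S := by ring
  -- term A integral
  have int1 : IntervalIntegrable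
      (fun t => C₂ * (|deriv (deriv ε) t| * ε t * Real.exp (β * E t)) * S) volume a x := by
    apply ContinuousOn.intervalIntegrable
    apply ContinuousOn.mono _ hu
    exact ((continuousOn_const.mul (((hc_abs.mul hεd.continuous.continuousOn).mul hexpEc))).mul
      continuousOn_const).mono hsub
  have int2 : IntervalIntegrable (fun t => C₂ * |deriv (deriv ε) t| * S) volume a x := by
    apply ContinuousOn.intervalIntegrable
    apply ContinuousOn.mono _ hu
    exact (((continuousOn_const.mul hc_abs).mul continuousOn_const)).mono hsub
  have int3 : IntervalIntegrable (fun _ : ℝ => K₅ * S) volume a x := intervalIntegrable_const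
  have htermA : (∫ t in a..x, gA t) * S' ≤ C₂ * IK * S + C₂ * I₁ * S + K₅ * (x - a) * S := by
    have h1 : (∫ t in a..x, gA t) * S' = ∫ t in a..x, gA t * S' := by
      rw [intervalIntegral.integral_mul_const]
    rw [h1]
    have h2 : ∫ t in a..x, gA t * S' ≤
        ∫ t in a..x, (C₂ * (|deriv (deriv ε) t| * ε t * Real.exp (β * E t)) * S
          + C₂ * |deriv (deriv ε) t| * S + K₅ * S) := by
      apply integral_mono_on hax (hgAint.mul_const S') ((int1.add int2).add int3) hqA
    have h3 : ∫ t in a..x, (C₂ * (|deriv (deriv ε) t| * ε t * Real.exp (β * E t)) * S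
          + C₂ * |deriv (deriv ε) t| * S + K₅ * S)
        = C₂ * IK * S + C₂ * I₁ * S + K₅ * S * (x - a) := by
      rw [integral_add (int1.add int2) int3, integral_add int1 int2]
      have e1 : ∫ t in a..x, C₂ * (|deriv (deriv ε) t| * ε t * Real.exp (β * E t)) * S
          = C₂ * IK * S := by
        rw [intervalIntegral.integral_mul_const, intervalIntegral.integral_const_mul]
      have e2 : ∫ t in a..x, C₂ * |deriv (deriv ε) t| * S = C₂ * I₁ * S := by
        rw [intervalIntegral.integral_mul_const, intervalIntegral.integral_const_mul]
      have e3 : ∫ _ in a..x, K₅ * S = (x - a) * (K₅ * S) := by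
        rw [intervalIntegral.integral_const, smul_eq_mul]
      rw [e1, e2, e3]; ring
    calc ∫ t in a..x, gA t * S' ≤ _ := h2
    _ = C₂ * IK * S + C₂ * I₁ * S + K₅ * S * (x-a) := h3
    _ = C₂ * IK * S + C₂ * I₁ * S + K₅ * (x-a) * S := by ring
  -- boundary term
  have hεa := hεb a haIcc
  have hε'a : 0 ≤ deriv ε a := hε'pos a haIcc
  have hF₂a : |F₂ a| ≤ 2*C₂*(deriv ε a) + 2*C₂*B + B := by
    have h1 : F₂ a = -(deriv ε a + b a) * (ε a * deriv w a) - f a * ε a := by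
      simp only [hF₂def, hRdef, hφa, Real.exp_zero, hwa]
      ring
    rw [h1]
    have h2 : |ε a * deriv w a| ≤ 2 * C₂ := by
      have := hG2 a haIcc
      rw [hEa] at this
      simp only [mul_zero, neg_zero, Real.exp_zero] at this
      nlinarith [hεa.2, hεa.1]
    have h3 : |(-(deriv ε a + b a)) * (ε a * deriv w a)| ≤ (deriv ε a + B) * (2*C₂) := by
      rw [abs_mul, abs_neg]
      apply mul_le_mul _ h2 (abs_nonneg _) (by linarith)
      calc |deriv ε a + b a| ≤ |deriv ε a| + |b a| := abs_add_le _ _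
      _ ≤ deriv ε a + B := by
          rw [abs_of_nonneg hε'a]
          have := hbB a haIcc
          linarith
    have h4 : |f a * ε a| ≤ B := by
      rw [abs_mul]
      calc |f a| * |ε a| ≤ B * 1 := by
            apply mul_le_mul (hfB a haIcc) _ (abs_nonneg _) hB.le
            rw [abs_of_pos hεa.1]; exact hεa.2
      _ = B := by ring
    calc |(-(deriv ε a + b a)) * (ε a * deriv w a) - f a * ε a|
        ≤ |(-(deriv ε a + b a)) * (ε a * deriv w a)| + |f a * ε a| := abs_sub _ _
    _ ≤ (deriv ε a + B) * (2*C₂) + B := by linarith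
    _ = 2*C₂*(deriv ε a) + 2*C₂*B + B := by ring
  -- assemble
  have hIKnn : 0 ≤ IK := by
    rw [hIKdef]
    apply integral_nonneg hax
    intro t ht
    have h5 := (hεb t (hsub ht)).1
    positivity
  have hI₁nn : 0 ≤ I₁ := by
    rw [hI₁def]
    apply integral_nonneg hax
    intro t _; positivity
  have hyR : ε x * y x = R x := hR x hx
  have hmain : (ε x)^2 * |y x| ≤ (2*C₂*(deriv ε a) + 2*C₂*B + B) * S
      + (C₂ * IK * S + C₂ * I₁ * S + K₅ * (x - a) * S) + K₅ * ((ε x)^2 / β) := by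
    have hF₂x : |F₂ x| ≤ |F₂ a| + ∫ t in a..x, |h₂ t| := by
      have h1 : F₂ x = F₂ a + ∫ t in a..x, h₂ t := by linarith [hFTC]
      rw [h1]
      have h2 : |∫ t in a..x, h₂ t| ≤ ∫ t in a..x, |h₂ t| :=
        intervalIntegral.abs_integral_le_integral_abs hax
      calc |F₂ a + ∫ t in a..x, h₂ t| ≤ |F₂ a| + |∫ t in a..x, h₂ t| := abs_add_le _ _
      _ ≤ |F₂ a| + ∫ t in a..x, |h₂ t| := by linarith
    have hFyx : (ε x)^2 * |y x| = |F₂ x| * S' := by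
      have : |F₂ x| = |R x| * ε x * Real.exp (φ x) := by
        simp only [hF₂def, abs_mul, Real.abs_exp, abs_of_pos hεx]
      rw [this, hS'def]
      rw [← hyR, abs_mul, abs_of_pos hεx]
      rw [mul_assoc, ← Real.exp_add, add_neg_cancel, Real.exp_zero, mul_one]
      ring
    rw [hFyx]
    calc |F₂ x| * S' ≤ (|F₂ a| + ∫ t in a..x, |h₂ t|) * S' :=
          mul_le_mul_of_nonneg_right hF₂x hS'.le
    _ = |F₂ a| * S' + (∫ t in a..x, |h₂ t|) * S' := by ring
    _ ≤ (2*C₂*(deriv ε a) + 2*C₂*B + B) * S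
          + ((∫ t in a..x, gA t) + ∫ t in a..x, gB t) * S' := by
        have u1 : |F₂ a| * S' ≤ (2*C₂*(deriv ε a) + 2*C₂*B + B) * S := by
          have u2 : |F₂ a| * S' ≤ (2*C₂*(deriv ε a) + 2*C₂*B + B) * S' :=
            mul_le_mul_of_nonneg_right hF₂a hS'.le
          have u3 : (2*C₂*(deriv ε a) + 2*C₂*B + B) * S' ≤
              (2*C₂*(deriv ε a) + 2*C₂*B + B) * S :=
            mul_le_mul_of_nonneg_left hS'S (by positivity)
          linarith
        have u4 := mul_le_mul_of_nonneg_right hsplit hS'.le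
        linarith
    _ ≤ (2*C₂*(deriv ε a) + 2*C₂*B + B) * S
          + (C₂ * IK * S + C₂ * I₁ * S + K₅ * (x - a) * S) + K₅ * ((ε x)^2/β) := by
        have u5 : ((∫ t in a..x, gA t) + ∫ t in a..x, gB t) * S'
            = (∫ t in a..x, gA t) * S' + (∫ t in a..x, gB t) * S' := by ring
        rw [u5]
        have := add_le_add htermA htermB
        linarith
  -- final algebra
  have hP : (0:ℝ) < (ε x)^2 := by positivity
  have h1a : (0:ℝ) < 1 - a := by linarith
  have hxa1 : x - a ≤ 1 - a := by linarith [hx.2]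
  have hn1 : 0 ≤ K₅/β := by positivity
  have hn2 : 0 ≤ K₅*(1-a) := mul_nonneg hK₅pos.le h1a.le
  have hn3 : 0 ≤ 2*C₂*B := by positivity
  have hn4 : 0 ≤ 2*C₂ := by positivity
  have hCDb1 : C₂ ≤ CD := by rw [hCD]; linarith
  have hCDb2 : K₅/β ≤ CD := by rw [hCD]; linarith
  have hCDb3 : K₅*(1-a) + 2*C₂*B + B ≤ CD := by rw [hCD]; linarith
  have hCDb4 : 2*C₂ ≤ CD := by rw [hCD]; linarith
  have hkey2 : (ε x)^2 * |y x| ≤ CD * ((ε x)^2 + S * IK + (1 + deriv ε a + I₁) * S) := by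
    have v1 : C₂ * IK * S ≤ CD * (S * IK) := by
      calc C₂ * IK * S = C₂ * (S * IK) := by ring
      _ ≤ CD * (S * IK) := mul_le_mul_of_nonneg_right hCDb1 (mul_nonneg hS.le hIKnn)
    have v2 : C₂ * I₁ * S ≤ CD * (I₁ * S) := by
      calc C₂ * I₁ * S = C₂ * (I₁ * S) := by ring
      _ ≤ CD * (I₁ * S) := mul_le_mul_of_nonneg_right hCDb1 (mul_nonneg hI₁nn hS.le)
    have v3 : K₅ * ((ε x)^2/β) ≤ CD * (ε x)^2 := by
      calc K₅ * ((ε x)^2/β) = (K₅/β) * (ε x)^2 := by ring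
      _ ≤ CD * (ε x)^2 := mul_le_mul_of_nonneg_right hCDb2 hP.le
    have v4 : 2*C₂*(deriv ε a) * S ≤ CD * (deriv ε a * S) := by
      calc 2*C₂*(deriv ε a) * S = (2*C₂) * (deriv ε a * S) := by ring
      _ ≤ CD * (deriv ε a * S) :=
          mul_le_mul_of_nonneg_right hCDb4 (mul_nonneg hε'a hS.le)
    have v5 : (2*C₂*B + B) * S + K₅ * (x-a) * S ≤ CD * S := by
      have w1 : K₅ * (x-a) ≤ K₅ * (1-a) := mul_le_mul_of_nonneg_left hxa1 hK₅pos.le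
      have w2 : 2*C₂*B + B + K₅*(x-a) ≤ CD := by linarith
      calc (2*C₂*B + B) * S + K₅ * (x-a) * S = (2*C₂*B + B + K₅*(x-a)) * S := by ring
      _ ≤ CD * S := mul_le_mul_of_nonneg_right w2 hS.le
    have hv := add_le_add (add_le_add (add_le_add (add_le_add v1 v2) v3) v4) v5
    calc (ε x)^2 * |y x| ≤ (2*C₂*(deriv ε a) + 2*C₂*B + B) * S
          + (C₂ * IK * S + C₂ * I₁ * S + K₅ * (x - a) * S) + K₅ * ((ε x)^2 / β) := hmain
    _ = C₂ * IK * S + C₂ * I₁ * S + K₅ * ((ε x)^2/β) + 2*C₂*(deriv ε a) * S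
          + ((2*C₂*B + B) * S + K₅ * (x-a) * S) := by ring
    _ ≤ CD * (S * IK) + CD * (I₁ * S) + CD * (ε x)^2 + CD * (deriv ε a * S) + CD * S := hv
    _ = CD * ((ε x)^2 + S * IK + (1 + deriv ε a + I₁) * S) := by ring
  have hgoal_eq : CD * (1 + 1/(ε x)^2 * S * IK + 1/(ε x)^2 * (1 + deriv ε a + I₁) * S)
      = CD * ((ε x)^2 + S * IK + (1 + deriv ε a + I₁) * S) / (ε x)^2 := by
    field_simp
    try ring
  show |y x| ≤ CD * (1 + 1/(ε x)^2 * S * IK + 1/(ε x)^2 * (1 + deriv ε a + I₁) * S)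
  rw [hgoal_eq, le_div_iff₀ hP]
  calc |y x| * (ε x)^2 = (ε x)^2 * |y x| := by ring
  _ ≤ CD * ((ε x)^2 + S * IK + (1 + deriv ε a + I₁) * S) := hkey2


theorem cs_interval (a x : ℝ) (hax : a ≤ x) (u v : ℝ → ℝ)
    (hu : ContinuousOn u (Icc a x)) (hv : ContinuousOn v (Icc a x)) :
    ∫ t in a..x, u t * v t ≤
      Real.sqrt (∫ t in a..x, u t ^ 2) * Real.sqrt (∫ t in a..x, v t ^ 2) := by
  have hU : uIcc a x ⊆ Icc a x := by rw [uIcc_of_le hax]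
  have hiu2 : IntervalIntegrable (fun t => u t ^ 2) volume a x :=
    ((hu.pow 2).mono hU).intervalIntegrable
  have hiv2 : IntervalIntegrable (fun t => v t ^ 2) volume a x :=
    ((hv.pow 2).mono hU).intervalIntegrable
  have hiuv : IntervalIntegrable (fun t => u t * v t) volume a x :=
    ((hu.mul hv).mono hU).intervalIntegrable
  set A : ℝ := ∫ t in a..x, u t ^ 2 with hA
  set Bc : ℝ := ∫ t in a..x, u t * v t with hBc
  set Cc : ℝ := ∫ t in a..x, v t ^ 2 with hCc
  have hAnn : 0 ≤ A := integral_nonneg hax (fun t _ => sq_nonneg _)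
  have hCnn : 0 ≤ Cc := integral_nonneg hax (fun t _ => sq_nonneg _)
  have hqd : ∀ l : ℝ, 0 ≤ A - 2*l*Bc + l^2*Cc := by
    intro l
    have h1 : (0:ℝ) ≤ ∫ t in a..x, (u t - l * v t)^2 :=
      integral_nonneg hax (fun t _ => sq_nonneg _)
    have h2 : ∫ t in a..x, (u t - l * v t)^2 = A - 2*l*Bc + l^2*Cc := by
      have hfun : (fun t => (u t - l * v t)^2)
          = fun t => u t ^ 2 - (2*l) * (u t * v t) + l^2 * v t ^ 2 := by
        funext t; ring
      rw [hfun]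
      rw [integral_add (hiu2.sub (hiuv.const_mul (2*l))) (hiv2.const_mul (l^2)),
        integral_sub hiu2 (hiuv.const_mul (2*l)), intervalIntegral.integral_const_mul, intervalIntegral.integral_const_mul]
      try ring
    linarith [h2 ▸ h1]
  have key : Bc ≤ Real.sqrt A * Real.sqrt Cc := by
    rcases eq_or_lt_of_le hCnn with hC0 | hCpos
    · -- Cc = 0
      by_contra hgt
      push_neg at hgt
      have hBpos : 0 < Bc := lt_of_le_of_lt (by positivity) hgt
      have := hqd ((A+1)/(2*Bc))
      rw [← hC0] at this
      have h3 : 2*((A+1)/(2*Bc))*Bc = A + 1 := by field_simp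
      nlinarith
    · have := hqd (Bc/Cc)
      have hBc2 : Bc^2 ≤ A * Cc := by
        have h3 : 2*(Bc/Cc)*Bc = 2*(Bc^2/Cc) := by
          field_simp
        have h4 : (Bc/Cc)^2*Cc = Bc^2/Cc := by field_simp
        rw [h3, h4] at this
        have h6 : Bc^2/Cc ≤ A := by linarith
        calc Bc^2 = (Bc^2/Cc) * Cc := by field_simp
        _ ≤ A * Cc := mul_le_mul_of_nonneg_right h6 hCnn
      calc Bc ≤ |Bc| := le_abs_self _
      _ = Real.sqrt (Bc^2) := (Real.sqrt_sq_eq_abs _).symm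
      _ ≤ Real.sqrt (A * Cc) := Real.sqrt_le_sqrt hBc2
      _ = Real.sqrt A * Real.sqrt Cc := Real.sqrt_mul hAnn _
  exact key

set_option maxHeartbeats 1000000 in
theorem K4_min_bound (a β : ℝ) (ha : a ≤ 0) (hβ : 0 < β)
    (ε E : ℝ → ℝ)
    (hεd : Differentiable ℝ ε) (hεddc : Continuous (deriv (deriv ε)))
    (hεb : ∀ t ∈ Icc a 1, 0 < ε t ∧ ε t ≤ 1)
    (hεmono : MonotoneOn ε (Icc a 1))
    (hE : ∀ t ∈ Icc a 1, HasDerivAt E (1 / ε t) t) :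
    ∀ x ∈ Icc a 1,
      (1/(ε x)^2) * Real.exp (-β * E x) *
        (∫ t in a..x, |deriv (deriv ε) t| * ε t * Real.exp (β * E t))
      ≤ (1/β + 1/Real.sqrt (2*β)) *
        min (sSup ((fun t => |deriv (deriv ε) t|) '' Icc a x))
            ((1/Real.sqrt (ε x)) * Real.sqrt (∫ t in a..x, (deriv (deriv ε) t)^2)) := by
  intro x hx
  have hax : a ≤ x := hx.1
  have hsub : Icc a x ⊆ Icc a 1 := Icc_subset_Icc (le_refl a) hx.2
  have hεx : 0 < ε x := (hεb x hx).1
  have hU : uIcc a x ⊆ Icc a x := by rw [uIcc_of_le hax]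
  have hEc : ContinuousOn E (Icc a 1) := fun t ht => (hE t ht).continuousAt.continuousWithinAt
  have hexpEc : ContinuousOn (fun t => Real.exp (β * E t)) (Icc a x) :=
    (Real.continuous_exp.comp_continuousOn (continuousOn_const.mul (hEc.mono hsub)))
  have hSe : Real.exp (-β * E x) * Real.exp (β * E x) = 1 := by
    rw [← Real.exp_add]; ring_nf; exact Real.exp_zero
  have hS : (0:ℝ) < Real.exp (-β * E x) := Real.exp_pos _
  set I : ℝ := ∫ t in a..x, |deriv (deriv ε) t| * ε t * Real.exp (β * E t) with hIdef
  set M : ℝ := sSup ((fun t => |deriv (deriv ε) t|) '' Icc a x) with hMdef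
  set m₂ : ℝ := (1/Real.sqrt (ε x)) * Real.sqrt (∫ t in a..x, (deriv (deriv ε) t)^2) with hm₂def
  have hMbdd : BddAbove ((fun t => |deriv (deriv ε) t|) '' Icc a x) :=
    isCompact_Icc.bddAbove_image (hεddc.abs.continuousOn)
  have hMle : ∀ t ∈ Icc a x, |deriv (deriv ε) t| ≤ M :=
    fun t ht => le_csSup hMbdd ⟨t, ht, rfl⟩
  have hMnn : 0 ≤ M := le_trans (abs_nonneg _) (hMle a ⟨le_refl a, hax⟩)
  have hIεexp : ∫ t in a..x, ε t * Real.exp (β * E t)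
      ≤ (ε x)^2 / β * Real.exp (β * E x) := by
    apply expint a x β ((ε x)^2) hax hβ (by positivity) ε ε (fun t => β * E t)
      (fun t => β * (1 / ε t))
      (fun t ht => (hεb t (hsub ht)).1)
      (fun t ht => le_of_eq (div_eq_mul_one_div β (ε t)))
      (fun t ht => (hE t (hsub ht)).const_mul β)
      (continuousOn_const.mul ((continuousOn_const.div
        (hεd.continuous.continuousOn.mono hsub)
        (fun t ht => ne_of_gt (hεb t (hsub ht)).1))))
      (hεd.continuous.continuousOn.mono hsub)
      (fun t ht => ⟨(hεb t (hsub ht)).1.le, by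
        have hm := hεmono (hsub ht) hx ht.2
        have h5 := (hεb t (hsub ht)).1
        show ε t * ε t ≤ (ε x)^2
        nlinarith⟩)
  have hInn : 0 ≤ I := by
    rw [hIdef]
    apply intervalIntegral.integral_nonneg hax
    intro t ht
    have h5 := (hεb t (hsub ht)).1
    positivity
  -- bound 1
  have hbound1 : (1/(ε x)^2) * Real.exp (-β * E x) * I ≤ (1/β) * M := by
    have h1 : I ≤ M * ((ε x)^2/β * Real.exp (β * E x)) := by
      have h2 : I ≤ ∫ t in a..x, M * (ε t * Real.exp (β * E t)) := by
        rw [hIdef]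
        apply integral_mono_on hax
        · exact (((hεddc.abs.continuousOn.mono hsub).mul
            ((hεd.continuous.continuousOn.mono hsub))).mul hexpEc |>.mono hU).intervalIntegrable
        · exact ((continuousOn_const.mul ((hεd.continuous.continuousOn.mono hsub).mul
            hexpEc)).mono hU).intervalIntegrable
        · intro t ht
          have h5 := (hεb t (hsub ht)).1
          calc |deriv (deriv ε) t| * ε t * Real.exp (β * E t)
              = |deriv (deriv ε) t| * (ε t * Real.exp (β * E t)) := by ring
          _ ≤ M * (ε t * Real.exp (β * E t)) := by
              apply mul_le_mul_of_nonneg_right (hMle t ht) (by positivity)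
      rw [intervalIntegral.integral_const_mul] at h2
      calc I ≤ M * ∫ t in a..x, ε t * Real.exp (β * E t) := h2
      _ ≤ M * ((ε x)^2/β * Real.exp (β * E x)) :=
          mul_le_mul_of_nonneg_left hIεexp hMnn
    calc (1/(ε x)^2) * Real.exp (-β * E x) * I
        ≤ (1/(ε x)^2) * Real.exp (-β * E x) * (M * ((ε x)^2/β * Real.exp (β * E x))) := by
          apply mul_le_mul_of_nonneg_left h1 (by positivity)
    _ = (1/β) * M * (Real.exp (-β * E x) * Real.exp (β * E x)) * ((ε x)^2/(ε x)^2) := by ring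
    _ = (1/β) * M := by
          rw [hSe, div_self (by positivity : ((ε x)^2 : ℝ) ≠ 0)]
          ring
  -- bound 2
  have hbound2 : (1/(ε x)^2) * Real.exp (-β * E x) * I ≤ (1/Real.sqrt (2*β)) * m₂ := by
    have hCS : I ≤ Real.sqrt (∫ t in a..x, (deriv (deriv ε) t)^2) *
        Real.sqrt (∫ t in a..x, (ε t * Real.exp (β * E t))^2) := by
      have h1 : I = ∫ t in a..x, |deriv (deriv ε) t| * (ε t * Real.exp (β * E t)) := by
        rw [hIdef]
        apply intervalIntegral.integral_congr
        intro t _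
        ring
      have h2 := cs_interval a x hax (fun t => |deriv (deriv ε) t|)
        (fun t => ε t * Real.exp (β * E t))
        (hεddc.abs.continuousOn.mono hsub)
        ((hεd.continuous.continuousOn.mono hsub).mul hexpEc)
      have h3 : (∫ t in a..x, |deriv (deriv ε) t| ^ 2)
          = ∫ t in a..x, (deriv (deriv ε) t)^2 := by
        apply intervalIntegral.integral_congr
        intro t _
        exact sq_abs _
      rw [h3] at h2
      rw [h1]
      exact h2
    have hv2 : ∫ t in a..x, (ε t * Real.exp (β * E t))^2
        ≤ (ε x)^3/(2*β) * Real.exp (β * E x + β * E x) := by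
      have h4 : ∀ t, (ε t * Real.exp (β * E t))^2
          = ε t^2 * Real.exp (β * E t + β * E t) := by
        intro t
        rw [mul_pow, pow_two (Real.exp (β * E t)), ← Real.exp_add]
      have h5 : (∫ t in a..x, (ε t * Real.exp (β * E t))^2)
          = ∫ t in a..x, ε t^2 * Real.exp (β * E t + β * E t) := by
        apply intervalIntegral.integral_congr
        intro t _
        exact h4 t
      rw [h5]
      apply expint a x (2*β) ((ε x)^3) hax (by positivity) (by positivity)
        ε (fun t => ε t^2) (fun t => β * E t + β * E t)
        (fun t => β * (1/ε t) + β * (1/ε t))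
        (fun t ht => (hεb t (hsub ht)).1)
        (fun t ht => by
          have h5 := (hεb t (hsub ht)).1
          rw [div_le_iff₀ h5]
          field_simp
          linarith)
        (fun t ht => ((hE t (hsub ht)).const_mul β).add ((hE t (hsub ht)).const_mul β))
        (((continuousOn_const.mul ((continuousOn_const.div
            (hεd.continuous.continuousOn.mono hsub)
            (fun t ht => ne_of_gt (hεb t (hsub ht)).1))))).add
          ((continuousOn_const.mul ((continuousOn_const.div
            (hεd.continuous.continuousOn.mono hsub)
            (fun t ht => ne_of_gt (hεb t (hsub ht)).1))))))
        ((hεd.continuous.continuousOn.mono hsub).pow 2)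
        (fun t ht => ⟨by positivity, by
          have hm := hεmono (hsub ht) hx ht.2
          have h5 := (hεb t (hsub ht)).1
          calc ε t^2 * ε t = ε t^3 := by ring
          _ ≤ (ε x)^3 := pow_le_pow_left₀ h5.le hm 3⟩)
    have hsqv : Real.sqrt (∫ t in a..x, (ε t * Real.exp (β * E t))^2)
        ≤ ε x * Real.sqrt (ε x) * Real.exp (β * E x) / Real.sqrt (2*β) := by
      have h6 : (ε x)^3/(2*β) * Real.exp (β * E x + β * E x)
          = (ε x * Real.sqrt (ε x) * Real.exp (β * E x) / Real.sqrt (2*β))^2 := by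
        rw [Real.exp_add, div_pow, mul_pow, mul_pow,
          Real.sq_sqrt hεx.le, Real.sq_sqrt (by positivity : (0:ℝ) ≤ 2*β)]
        ring
      calc Real.sqrt (∫ t in a..x, (ε t * Real.exp (β * E t))^2)
          ≤ Real.sqrt ((ε x)^3/(2*β) * Real.exp (β * E x + β * E x)) :=
            Real.sqrt_le_sqrt hv2
      _ = ε x * Real.sqrt (ε x) * Real.exp (β * E x) / Real.sqrt (2*β) := by
            rw [h6, Real.sqrt_sq (by positivity)]
    have hJnn : 0 ≤ Real.sqrt (∫ t in a..x, (deriv (deriv ε) t)^2) := Real.sqrt_nonneg _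
    have hfin : I ≤ Real.sqrt (∫ t in a..x, (deriv (deriv ε) t)^2) *
        (ε x * Real.sqrt (ε x) * Real.exp (β * E x) / Real.sqrt (2*β)) :=
      le_trans hCS (mul_le_mul_of_nonneg_left hsqv hJnn)
    have halg : (1/(ε x)^2) * Real.exp (-β * E x) *
        (Real.sqrt (∫ t in a..x, (deriv (deriv ε) t)^2) *
          (ε x * Real.sqrt (ε x) * Real.exp (β * E x) / Real.sqrt (2*β)))
        = (1/Real.sqrt (2*β)) * m₂ * (Real.exp (-β * E x) * Real.exp (β * E x)) := by
      rw [hm₂def]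
      have hεx_eq : ε x = Real.sqrt (ε x)^2 := (Real.sq_sqrt hεx.le).symm
      have hsx : (0:ℝ) < Real.sqrt (ε x) := Real.sqrt_pos.mpr hεx
      have hs2β : (0:ℝ) < Real.sqrt (2*β) := Real.sqrt_pos.mpr (by positivity)
      rw [hεx_eq]
      field_simp
      ring_nf
      rw [Real.sq_sqrt hεx.le]
      try ring
      rw [Real.sq_sqrt hεx.le]
    calc (1/(ε x)^2) * Real.exp (-β * E x) * I
        ≤ (1/(ε x)^2) * Real.exp (-β * E x) *
          (Real.sqrt (∫ t in a..x, (deriv (deriv ε) t)^2) *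
            (ε x * Real.sqrt (ε x) * Real.exp (β * E x) / Real.sqrt (2*β))) := by
          apply mul_le_mul_of_nonneg_left hfin (by positivity)
    _ = (1/Real.sqrt (2*β)) * m₂ * (Real.exp (-β * E x) * Real.exp (β * E x)) := halg
    _ = (1/Real.sqrt (2*β)) * m₂ := by rw [hSe, mul_one]
  -- combine
  have hm₂nn : 0 ≤ m₂ := by
    rw [hm₂def]
    positivity
  have h2β : (0:ℝ) < 1/Real.sqrt (2*β) := by
    have : (0:ℝ) < Real.sqrt (2*β) := Real.sqrt_pos.mpr (by positivity)
    positivity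
  have h1β : (0:ℝ) < 1/β := by positivity
  rcases le_total M m₂ with hmm | hmm
  · rw [min_eq_left hmm]
    calc (1/(ε x)^2) * Real.exp (-β * E x) * I ≤ (1/β) * M := hbound1
    _ ≤ (1/β + 1/Real.sqrt (2*β)) * M := by nlinarith
  · rw [min_eq_right hmm]
    calc (1/(ε x)^2) * Real.exp (-β * E x) * I ≤ (1/Real.sqrt (2*β)) * m₂ := hbound2
    _ ≤ (1/β + 1/Real.sqrt (2*β)) * m₂ := by nlinarith

noncomputable def cC0 (a β B u₁ : ℝ) : ℝ := |u₁| + ((B+1)/β) * (1 - a)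
noncomputable def cC1 (a β B u₁ : ℝ) : ℝ :=
  |u₁| + 2 * ((2*B*(cC0 a β B u₁) + B) * (1-a) + B*(cC0 a β B u₁))
noncomputable def cC2 (a β B u₁ : ℝ) : ℝ := cC1 a β B u₁ + (B*(cC0 a β B u₁) + B)/β
noncomputable def cCD (a β B u₁ : ℝ) : ℝ :=
  cC2 a β B u₁ + (2*B*(cC2 a β B u₁) + B*(cC0 a β B u₁) + B)/β
    + (2*B*(cC2 a β B u₁) + B*(cC0 a β B u₁) + B)*(1-a)
    + 2*(cC2 a β B u₁)*B + B + 2*(cC2 a β B u₁)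
noncomputable def cCE (β : ℝ) : ℝ := 1/β + 1/Real.sqrt (2*β)

lemma cC0_nonneg (a β B u₁ : ℝ) (ha : a ≤ 0) (hβ : 0 < β) (hB : 0 < B) :
    0 ≤ cC0 a β B u₁ := by
  have h1a : (0:ℝ) < 1 - a := by linarith
  exact add_nonneg (abs_nonneg _) (mul_nonneg (by positivity) h1a.le)

lemma cC1_nonneg (a β B u₁ : ℝ) (ha : a ≤ 0) (hβ : 0 < β) (hB : 0 < B) :
    0 ≤ cC1 a β B u₁ := by
  have h1a : (0:ℝ) < 1 - a := by linarith
  have h0 := cC0_nonneg a β B u₁ ha hβ hB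
  unfold cC1
  have : 0 ≤ (2*B*(cC0 a β B u₁) + B) * (1-a) := by
    apply mul_nonneg (by positivity) h1a.le
  have : 0 ≤ B*(cC0 a β B u₁) := by positivity
  have := abs_nonneg u₁
  linarith

lemma cC2_nonneg (a β B u₁ : ℝ) (ha : a ≤ 0) (hβ : 0 < β) (hB : 0 < B) :
    0 ≤ cC2 a β B u₁ := by
  have h0 := cC0_nonneg a β B u₁ ha hβ hB
  have h1 := cC1_nonneg a β B u₁ ha hβ hB
  unfold cC2
  have : 0 ≤ (B*(cC0 a β B u₁) + B)/β := by positivity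
  linarith

lemma cCD_nonneg (a β B u₁ : ℝ) (ha : a ≤ 0) (hβ : 0 < β) (hB : 0 < B) :
    0 ≤ cCD a β B u₁ := by
  have h1a : (0:ℝ) < 1 - a := by linarith
  have h0 := cC0_nonneg a β B u₁ ha hβ hB
  have h2 := cC2_nonneg a β B u₁ ha hβ hB
  unfold cCD
  have e1 : 0 ≤ (2*B*(cC2 a β B u₁) + B*(cC0 a β B u₁) + B)/β := by positivity
  have e2 : 0 ≤ (2*B*(cC2 a β B u₁) + B*(cC0 a β B u₁) + B)*(1-a) :=
    mul_nonneg (by positivity) h1a.le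
  have e3 : 0 ≤ 2*(cC2 a β B u₁)*B := by positivity
  linarith

lemma cCE_pos (β : ℝ) (hβ : 0 < β) : 0 < cCE β := by
  unfold cCE
  have : (0:ℝ) < Real.sqrt (2*β) := Real.sqrt_pos.mpr (by positivity)
  positivity

lemma c2_unpack (f : ℝ → ℝ) (h : ContDiff ℝ 2 f) :
    Differentiable ℝ f ∧ Differentiable ℝ (deriv f) ∧ Continuous (deriv (deriv f)) := by
  rw [show (2 : WithTop ℕ∞) = 1+1 from rfl, contDiff_succ_iff_deriv] at h
  have h2 := h.2.2
  rw [show (1 : WithTop ℕ∞) = 0+1 from rfl, contDiff_succ_iff_deriv] at h2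
  exact ⟨h.1, h2.1, h2.2.2.continuous⟩


set_option maxHeartbeats 1000000 in
/-- Refined second-derivative bound on the extended domain (Lemma 7 of the paper):
if `(ε*)' ≥ 0` on `[a,1]`, `e_a(t) = ∫ₐᵗ 1/ε*(z) dz` and
`K₄(x) = ε*(x)^{−2} e^{−β e_a(x)} ∫ₐˣ |(ε*)''(t)| ε*(t) e^{β e_a(t)} dt`, then
(i) the solution `w` of `−(ε* w')' − b* w' + c* w = f*` on `(a,1)`, `w(a) = 0`,
`w(1) = u₁`, satisfies
`|w''(x)| ≤ C (1 + K₄(x) + ε*(x)^{−2} (1 + (ε*)'(a) + ‖(ε*)''‖_{L¹(a,x)}) e^{−β e_a(x)})`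
and (ii) `K₄(x) ≤ C min{‖(ε*)''‖_{L^∞(a,x)}, ε*(x)^{−1/2} ‖(ε*)''‖_{L²(a,x)}}`,
for all `x ∈ [a,1]`, with `C` independent of `ε*`. -/
theorem refined_second_derivative_bound_on_extended_domain
    (a β B u₁ : ℝ) (ha : a ≤ 0) (hβ : 0 < β) (hB : 0 < B) :
    ∃ C : ℝ, 0 < C ∧
      ∀ (εs bs cs fs w ea K4 : ℝ → ℝ) (epsLow epsHigh : ℝ),
        0 < epsLow → epsHigh < 1 →
        ContDiff ℝ (⊤ : ℕ∞) εs → ContDiff ℝ (⊤ : ℕ∞) bs → ContDiff ℝ (⊤ : ℕ∞) cs → ContDiff ℝ (⊤ : ℕ∞) fs →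
        (∀ x ∈ Set.Icc a 1, epsLow ≤ εs x ∧ εs x ≤ epsHigh) →
        (∀ x ∈ Set.Icc a 1, β ≤ bs x ∧ 0 ≤ cs x) →
        (∀ x ∈ Set.Icc a 1, |bs x| ≤ B ∧ |cs x| ≤ B ∧ |fs x| ≤ B) →
        (∀ x ∈ Set.Icc a 1, |deriv bs x| ≤ B ∧ |deriv cs x| ≤ B ∧ |deriv fs x| ≤ B) →
        (∀ x ∈ Set.Icc a 1, 0 ≤ deriv εs x) →
        (∀ t, ea t = ∫ z in a..t, 1 / εs z) →
        (∀ x, K4 x = (1 / (εs x) ^ 2) * Real.exp (-β * ea x) *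
          ∫ t in a..x, |iteratedDeriv 2 εs t| * εs t * Real.exp (β * ea t)) →
        ContDiff ℝ 2 w →
        (∀ x ∈ Set.Ioo a 1,
          -(deriv (fun t => εs t * deriv w t) x) - bs x * deriv w x + cs x * w x
            = fs x) →
        w a = 0 → w 1 = u₁ →
        (∀ x ∈ Set.Icc a 1,
          |iteratedDeriv 2 w x| ≤ C * (1 + K4 x +
            (1 / (εs x) ^ 2) *
              (1 + deriv εs a + ∫ t in a..x, |iteratedDeriv 2 εs t|) *
              Real.exp (-β * ea x))) ∧
        (∀ x ∈ Set.Icc a 1,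
          K4 x ≤ C * min (sSup ((fun t => |iteratedDeriv 2 εs t|) '' Set.Icc a x))
            ((1 / Real.sqrt (εs x)) *
              Real.sqrt (∫ t in a..x, (iteratedDeriv 2 εs t) ^ 2))) := by
  have ha1 : a < 1 := lt_of_le_of_lt ha one_pos
  have h1a : (0:ℝ) < 1 - a := by linarith
  refine ⟨cCD a β B u₁ + cCE β, by
    have := cCD_nonneg a β B u₁ ha hβ hB
    have := cCE_pos β hβ
    linarith, ?_⟩
  intro εs bs cs fs w ea K4 epsLow epsHigh hlow hhigh hεs hbs hcs hfs heps hbcs hbnd hdbnd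
    hε' hea hK4 hw hEq hwa hw1
  have haIcc : a ∈ Icc a 1 := ⟨le_refl a, ha1.le⟩
  obtain ⟨hεd, hεd2, hεddc⟩ := c2_unpack εs (hεs.of_le (WithTop.coe_le_coe.mpr le_top))
  obtain ⟨hbd, hbd2, _⟩ := c2_unpack bs (hbs.of_le (WithTop.coe_le_coe.mpr le_top))
  obtain ⟨hcd, hcd2, _⟩ := c2_unpack cs (hcs.of_le (WithTop.coe_le_coe.mpr le_top))
  obtain ⟨hfd, hfd2, _⟩ := c2_unpack fs (hfs.of_le (WithTop.coe_le_coe.mpr le_top))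
  obtain ⟨hwd, hwd2, hwddc⟩ := c2_unpack w hw
  have hεb : ∀ x ∈ Icc a 1, 0 < εs x ∧ εs x ≤ 1 := fun x hx =>
    ⟨lt_of_lt_of_le hlow (heps x hx).1, le_trans (heps x hx).2 hhigh.le⟩
  have hbβ : ∀ x ∈ Icc a 1, β ≤ bs x := fun x hx => (hbcs x hx).1
  have hcnn : ∀ x ∈ Icc a 1, 0 ≤ cs x := fun x hx => (hbcs x hx).2
  have hbB : ∀ x ∈ Icc a 1, |bs x| ≤ B := fun x hx => (hbnd x hx).1
  have hcB : ∀ x ∈ Icc a 1, |cs x| ≤ B := fun x hx => (hbnd x hx).2.1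
  have hfB : ∀ x ∈ Icc a 1, |fs x| ≤ B := fun x hx => (hbnd x hx).2.2
  have hbdB : ∀ x ∈ Icc a 1, |deriv bs x| ≤ B := fun x hx => (hdbnd x hx).1
  have hcdB : ∀ x ∈ Icc a 1, |deriv cs x| ≤ B := fun x hx => (hdbnd x hx).2.1
  have hfdB : ∀ x ∈ Icc a 1, |deriv fs x| ≤ B := fun x hx => (hdbnd x hx).2.2
  have hεmono : MonotoneOn εs (Icc a 1) := by
    apply monotoneOn_of_deriv_nonneg (convex_Icc a 1) hεd.continuous.continuousOn
      (hεd.differentiableOn.mono interior_subset)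
    intro x hx
    rw [interior_Icc] at hx
    exact hε' x (Ioo_subset_Icc_self hx)
  -- derivative facts for ea
  have heafun : ea = fun t => ∫ z in a..t, 1 / εs z := funext hea
  have hea0 : ea a = 0 := by rw [hea a, integral_same]
  have hE : ∀ t ∈ Icc a 1, HasDerivAt ea (1 / εs t) t := by
    intro t ht
    rw [heafun]
    have hsubt : Icc a t ⊆ Icc a 1 := Icc_subset_Icc (le_refl a) ht.2
    have hione : ContinuousOn (fun z => 1 / εs z) (Icc a t) :=
      continuousOn_const.div (hεd.continuous.continuousOn.mono hsubt)
        (fun z hz => ne_of_gt (hεb z (hsubt hz)).1)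
    apply intervalIntegral.integral_hasDerivAt_right
      ((hione.mono (by rw [uIcc_of_le ht.1])).intervalIntegrable)
    · exact ((measurable_const.div hεd.continuous.measurable).stronglyMeasurable).stronglyMeasurableAtFilter
    · exact ContinuousAt.div continuousAt_const hεd.continuous.continuousAt
        (ne_of_gt (hεb t ht).1)
  set φf : ℝ → ℝ := fun t => ∫ z in a..t, bs z / εs z with hφdef
  have hφ0 : φf a = 0 := integral_same
  have hφ : ∀ t ∈ Icc a 1, HasDerivAt φf (bs t / εs t) t := by
    intro t ht
    have hsubt : Icc a t ⊆ Icc a 1 := Icc_subset_Icc (le_refl a) ht.2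
    have hione : ContinuousOn (fun z => bs z / εs z) (Icc a t) :=
      (hbd.continuous.continuousOn).div (hεd.continuous.continuousOn.mono hsubt)
        (fun z hz => ne_of_gt (hεb z (hsubt hz)).1)
    apply intervalIntegral.integral_hasDerivAt_right
      ((hione.mono (by rw [uIcc_of_le ht.1])).intervalIntegrable)
    · exact ((hbd.continuous.measurable.div hεd.continuous.measurable).stronglyMeasurable).stronglyMeasurableAtFilter
    · exact ContinuousAt.div hbd.continuous.continuousAt hεd.continuous.continuousAt
        (ne_of_gt (hεb t ht).1)
  have hcomp : MonotoneOn (fun t => φf t - β * ea t) (Icc a 1) := by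
    apply monotoneOn_of_deriv_nonneg (convex_Icc a 1)
    · intro t ht
      exact (((hφ t ht).sub ((hE t ht).const_mul β)).continuousAt).continuousWithinAt
    · intro t ht
      rw [interior_Icc] at ht
      exact (((hφ t (Ioo_subset_Icc_self ht)).sub
        ((hE t (Ioo_subset_Icc_self ht)).const_mul β)).differentiableAt).differentiableWithinAt
    · intro t ht
      rw [interior_Icc] at ht
      have ht' := Ioo_subset_Icc_self ht
      have hd := ((hφ t ht').fun_sub ((hE t ht').const_mul β)).deriv
      rw [hd]
      have hεt := (hεb t ht').1
      have hbt := hbβ t ht'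
      rw [mul_one_div]
      rw [sub_nonneg]
      exact (div_le_div_iff_of_pos_right hεt).mpr hbt
  -- sup bound
  have hwsup : ∀ x ∈ Icc a 1, |w x| ≤ cC0 a β B u₁ := by
    have := w_sup_bound a β B u₁ ha1 hβ hB εs bs cs fs w hεd hwd hwd2 hwd.continuous
      (fun x hx => (hεb x (Ioo_subset_Icc_self hx)).1)
      (fun x hx => hε' x (Ioo_subset_Icc_self hx))
      (fun x hx => hbβ x (Ioo_subset_Icc_self hx))
      (fun x hx => hcnn x (Ioo_subset_Icc_self hx))
      (fun x hx => hfB x (Ioo_subset_Icc_self hx))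
      hEq hwa hw1
    intro x hx
    exact this x hx
  have hC0nn := cC0_nonneg a β B u₁ ha hβ hB
  have hC1nn := cC1_nonneg a β B u₁ ha hβ hB
  have hC2nn := cC2_nonneg a β B u₁ ha hβ hB
  -- crude gradient bound
  have hG1 : ∀ x ∈ Icc a 1, |εs x * deriv w x| ≤ cC1 a β B u₁ := by
    have := grad_bound_crude a β B (cC0 a β B u₁) u₁ ha hβ hB hC0nn εs bs cs fs w
      hεd hbd hbd2.continuous hcd.continuous hfd.continuous hwd hwd2
      hεb hbB hbdB hcB hfB hwsup hEq hwa hw1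
    intro x hx
    exact this x hx
  -- refined gradient bound
  have hG2 : ∀ x ∈ Icc a 1, |εs x * deriv w x| ≤
      cC2 a β B u₁ * (Real.exp (-β * ea x) + εs x) := by
    have hx0 := grad_bound_refined a β B (cC0 a β B u₁) (cC1 a β B u₁) ha hβ hB hC0nn hC1nn
      εs bs cs fs w ea φf hεd hbd.continuous hcd.continuous hfd.continuous hwd hwd2
      hεb hbβ hcB hfB hwsup hεmono hE hea0 hφ hφ0 hEq hG1 hcomp
    intro x hx
    have h1 := hx0 x hx
    have he : (0:ℝ) ≤ Real.exp (-β * ea x) := (Real.exp_pos _).le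
    have hεnn : (0:ℝ) ≤ εs x := (hεb x hx).1.le
    have hq : (0:ℝ) ≤ (B * cC0 a β B u₁ + B)/β := by positivity
    have e1 : cC1 a β B u₁ * Real.exp (-β * ea x) ≤ cC2 a β B u₁ * Real.exp (-β * ea x) := by
      apply mul_le_mul_of_nonneg_right _ he
      unfold cC2; linarith
    have e2 : ((B * cC0 a β B u₁ + B)/β) * εs x ≤ cC2 a β B u₁ * εs x := by
      apply mul_le_mul_of_nonneg_right _ hεnn
      unfold cC2; linarith
    calc |εs x * deriv w x| ≤ cC1 a β B u₁ * Real.exp (-β * ea x)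
          + ((B * cC0 a β B u₁ + B)/β) * εs x := h1
    _ ≤ cC2 a β B u₁ * Real.exp (-β * ea x) + cC2 a β B u₁ * εs x := by linarith
    _ = cC2 a β B u₁ * (Real.exp (-β * ea x) + εs x) := by ring
  -- second derivative bound
  have hD := second_deriv_bound a β B (cC0 a β B u₁) (cC2 a β B u₁) ha hβ hB hC0nn hC2nn
    εs bs cs fs w ea φf hεd hεd2 hεddc hbd hbd2.continuous hcd hcd2.continuous
    hfd hfd2.continuous hwd hwd2 hwddc hεb hbβ hbB hcB hfB hbdB hcdB hfdB hε'
    hεmono hE hea0 hφ hφ0 hcomp hEq hwa hwsup hG2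
  have hε2 : iteratedDeriv 2 εs = deriv (deriv εs) := by
    rw [show (2:ℕ) = 1+1 from rfl, iteratedDeriv_succ, iteratedDeriv_one]
  have hw2 : iteratedDeriv 2 w = deriv (deriv w) := by
    rw [show (2:ℕ) = 1+1 from rfl, iteratedDeriv_succ, iteratedDeriv_one]
  constructor
  · -- part (i)
    intro x hx
    have hax : a ≤ x := hx.1
    have hsub : Icc a x ⊆ Icc a 1 := Icc_subset_Icc (le_refl a) hx.2
    rw [hw2, hε2, hK4 x, hε2]
    have hbr1 : (0:ℝ) ≤ (1 / (εs x) ^ 2) * Real.exp (-β * ea x) *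
        ∫ t in a..x, |deriv (deriv εs) t| * εs t * Real.exp (β * ea t) := by
      have hεx := (hεb x hx).1
      have hint : (0:ℝ) ≤ ∫ t in a..x, |deriv (deriv εs) t| * εs t * Real.exp (β * ea t) := by
        apply intervalIntegral.integral_nonneg hax
        intro t ht
        have := (hεb t (hsub ht)).1
        positivity
      positivity
    have hbr2 : (0:ℝ) ≤ (1 / (εs x) ^ 2) *
        (1 + deriv εs a + ∫ t in a..x, |deriv (deriv εs) t|) * Real.exp (-β * ea x) := by
      have hεx := (hεb x hx).1
      have hint : (0:ℝ) ≤ ∫ t in a..x, |deriv (deriv εs) t| :=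
        intervalIntegral.integral_nonneg hax (fun t _ => abs_nonneg _)
      have hda := hε' a haIcc
      have h9 : (0:ℝ) ≤ 1 + deriv εs a + ∫ t in a..x, |deriv (deriv εs) t| := by linarith
      positivity
    have hbr : (0:ℝ) ≤ 1 + ((1 / (εs x) ^ 2) * Real.exp (-β * ea x) *
          ∫ t in a..x, |deriv (deriv εs) t| * εs t * Real.exp (β * ea t)) +
        (1 / (εs x) ^ 2) * (1 + deriv εs a + ∫ t in a..x, |deriv (deriv εs) t|) *
          Real.exp (-β * ea x) := by linarith
    have h10 := hD x hx
    have hCE := (cCE_pos β hβ).le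
    calc |deriv (deriv w) x| ≤ cCD a β B u₁ * (1 + ((1 / (εs x) ^ 2) * Real.exp (-β * ea x) *
          ∫ t in a..x, |deriv (deriv εs) t| * εs t * Real.exp (β * ea t)) +
        (1 / (εs x) ^ 2) * (1 + deriv εs a + ∫ t in a..x, |deriv (deriv εs) t|) *
          Real.exp (-β * ea x)) := h10
    _ ≤ (cCD a β B u₁ + cCE β) * (1 + ((1 / (εs x) ^ 2) * Real.exp (-β * ea x) *
          ∫ t in a..x, |deriv (deriv εs) t| * εs t * Real.exp (β * ea t)) +
        (1 / (εs x) ^ 2) * (1 + deriv εs a + ∫ t in a..x, |deriv (deriv εs) t|) *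
          Real.exp (-β * ea x)) := by
        apply mul_le_mul_of_nonneg_right (by linarith) hbr
  · -- part (ii)
    intro x hx
    have hax : a ≤ x := hx.1
    rw [hK4 x, hε2]
    have h11 := K4_min_bound a β ha hβ εs ea hεd hεddc hεb hεmono hE x hx
    have hMbdd : BddAbove ((fun t => |deriv (deriv εs) t|) '' Icc a x) :=
      isCompact_Icc.bddAbove_image (hεddc.abs.continuousOn)
    have hMnn : 0 ≤ sSup ((fun t => |deriv (deriv εs) t|) '' Icc a x) :=
      le_trans (abs_nonneg _) (le_csSup hMbdd ⟨a, ⟨le_refl a, hax⟩, rfl⟩)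
    have hm2nn : (0:ℝ) ≤ (1 / Real.sqrt (εs x)) *
        Real.sqrt (∫ t in a..x, (deriv (deriv εs) t) ^ 2) := by positivity
    have hminnn : (0:ℝ) ≤ min (sSup ((fun t => |deriv (deriv εs) t|) '' Icc a x))
        ((1 / Real.sqrt (εs x)) * Real.sqrt (∫ t in a..x, (deriv (deriv εs) t) ^ 2)) :=
      le_min hMnn hm2nn
    have hCDnn := cCD_nonneg a β B u₁ ha hβ hB
    calc (1 / (εs x) ^ 2) * Real.exp (-β * ea x) *
          ∫ t in a..x, |deriv (deriv εs) t| * εs t * Real.exp (β * ea t)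
        ≤ (1/β + 1/Real.sqrt (2*β)) *
          min (sSup ((fun t => |deriv (deriv εs) t|) '' Icc a x))
            ((1/Real.sqrt (εs x)) * Real.sqrt (∫ t in a..x, (deriv (deriv εs) t)^2)) := h11
    _ ≤ (cCD a β B u₁ + cCE β) *
          min (sSup ((fun t => |deriv (deriv εs) t|) '' Icc a x))
            ((1/Real.sqrt (εs x)) * Real.sqrt (∫ t in a..x, (deriv (deriv εs) t)^2)) := by
        apply mul_le_mul_of_nonneg_right _ hminnn
        unfold cCE
        linarith
end

section
/- Exponential-decay barrier bound for the layer part: suppose b(x) ≥ β > 0 and c(x) ≥ 0 on [0,1], set e(x) = ∫₀ˣ 1/ε(t) dt, and let E be a C² solution of −(ε E')' − b E' + c E = 0 on (0,1) with E(1) = 0. Then |E(x)| ≤ |E(0)| e^{−β e(x)} for all x ∈ [0,1]. -/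
open Set Filter MeasureTheory intervalIntegral Topology

set_option maxHeartbeats 1000000

/-- Auxiliary barrier lemma with a strict barrier: for any `β' < β` and `K > |E 0|`,
the function `K e^{-β' e(x)} + s E(x)` (with `s = ±1`) is nonnegative on `[0,1]`. -/
theorem layer_aux_barrier
    (ε b c E : ℝ → ℝ) (β : ℝ)
    (hε : ContDiff ℝ (⊤ : ℕ∞) ε)
    (hbnd : ∀ x ∈ Set.Icc (0:ℝ) 1, 0 < ε x ∧ β ≤ b x ∧ 0 ≤ c x)
    (hE : ContDiff ℝ 2 E)
    (hode : ∀ x ∈ Set.Ioo (0:ℝ) 1,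
      -(deriv (fun t => ε t * deriv E t) x) - b x * deriv E x + c x * E x = 0)
    (hE1 : E 1 = 0)
    (s : ℝ) (hs : s = 1 ∨ s = -1)
    (β' K : ℝ) (hβ'0 : 0 < β') (hβ'β : β' < β) (hK : |E 0| < K) :
    ∀ x ∈ Set.Icc (0:ℝ) 1,
      0 ≤ K * Real.exp (-β' * ∫ t in (0:ℝ)..x, 1 / ε t) + s * E x := by
  have hKpos : 0 < K := lt_of_le_of_lt (abs_nonneg _) hK
  -- positivity of ε on a slightly larger interval
  have h0ev : ∀ᶠ y in 𝓝 (0:ℝ), 0 < ε y :=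
    (hε.continuous.continuousAt).eventually_mem (Ioi_mem_nhds (hbnd 0 ⟨le_rfl, zero_le_one⟩).1)
  have h1ev : ∀ᶠ y in 𝓝 (1:ℝ), 0 < ε y :=
    (hε.continuous.continuousAt).eventually_mem (Ioi_mem_nhds (hbnd 1 ⟨zero_le_one, le_rfl⟩).1)
  obtain ⟨δ₀, hδ₀, H0⟩ := Metric.eventually_nhds_iff.1 h0ev
  obtain ⟨δ₁, hδ₁, H1⟩ := Metric.eventually_nhds_iff.1 h1ev
  obtain ⟨a, d, ha0, hd1, ha_def, hd_def⟩ :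
      ∃ a d : ℝ, a < 0 ∧ (1:ℝ) < d ∧ a = -(δ₀/2) ∧ d = 1 + δ₁/2 :=
    ⟨-(δ₀/2), 1 + δ₁/2, by linarith, by linarith, rfl, rfl⟩
  have hεpos : ∀ x ∈ Icc a d, 0 < ε x := by
    intro x hx
    rcases lt_or_ge x 0 with h | h
    · exact H0 (by rw [Real.dist_eq, sub_zero, abs_of_neg h]; linarith [hx.1, ha_def.le, ha_def.ge])
    · rcases le_or_gt x 1 with h' | h'
      · exact (hbnd x ⟨h, h'⟩).1
      · refine H1 ?_
        rw [Real.dist_eq, abs_of_pos (by linarith : (0:ℝ) < x - 1)]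
        linarith [hx.2, hd_def.le, hd_def.ge]
  -- the function e and its derivative
  set e : ℝ → ℝ := fun y => ∫ t in (0:ℝ)..y, 1 / ε t with he_def
  have hcont_inv : ContinuousOn (fun t => 1 / ε t) (Icc a d) :=
    continuousOn_const.div hε.continuous.continuousOn
      (fun x hx => (hεpos x hx).ne')
  have he : ∀ x ∈ Ioo a d, HasDerivAt e (1 / ε x) x := by
    intro x hx
    have hsub : uIcc (0:ℝ) x ⊆ Icc a d :=
      uIcc_subset_Icc ⟨ha0.le, by linarith⟩ ⟨hx.1.le, hx.2.le⟩
    refine intervalIntegral.integral_hasDerivAt_right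
      ((hcont_inv.mono hsub).intervalIntegrable)
      (ContinuousOn.stronglyMeasurableAtFilter isOpen_Ioo
        (hcont_inv.mono Ioo_subset_Icc_self) x hx)
      (continuousAt_const.div hε.continuous.continuousAt
        (hεpos x (Ioo_subset_Icc_self hx)).ne')
  -- differentiability of E
  have hE2 : Differentiable ℝ E ∧ ContDiff ℝ 1 (deriv E) := by
    have h := (contDiff_succ_iff_deriv (n := 1)).1 (by exact_mod_cast hE)
    exact ⟨h.1, h.2.2⟩
  have hεE' : Differentiable ℝ (fun t => ε t * deriv E t) :=
    (hε.differentiable (by simp)).mul (hE2.2.differentiable one_ne_zero)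
  -- the barrier function w
  set w : ℝ → ℝ := fun y => K * Real.exp (-β' * e y) + s * E y with hw_def
  set g : ℝ → ℝ := fun x => K * (Real.exp (-β' * e x) * (-β' * (1 / ε x))) + s * deriv E x
    with hg_def
  have hw' : ∀ x ∈ Ioo a d, HasDerivAt w (g x) x := by
    intro x hx
    exact ((((he x hx).const_mul (-β')).exp.const_mul K).add
      ((hE2.1.differentiableAt.hasDerivAt).const_mul s))
  have hwc : ∀ x ∈ Ioo a d, ContinuousAt w x := fun x hx => (hw' x hx).continuousAt
  have hIccsub : Icc (0:ℝ) 1 ⊆ Ioo a d := fun x hx => ⟨by linarith [hx.1], by linarith [hx.2]⟩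
  -- minimum of w on [0,1]
  obtain ⟨x₀, hx₀, hmin⟩ := isCompact_Icc.exists_isMinOn (nonempty_Icc.2 zero_le_one)
    (fun x hx => (hwc x (hIccsub hx)).continuousWithinAt)
  suffices hfin : 0 ≤ w x₀ by
    intro x hx
    exact le_trans hfin (hmin hx)
  by_contra hneg
  push_neg at hneg
  have habs : -|E 0| ≤ s * E 0 := by
    rcases hs with rfl | rfl
    · simpa using neg_abs_le (E 0)
    · rw [neg_one_mul]; exact neg_le_neg (le_abs_self (E 0))
  have hw0 : 0 < w 0 := by
    have : e 0 = 0 := intervalIntegral.integral_same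
    simp only [hw_def, this, mul_zero, Real.exp_zero, mul_one]
    linarith
  have hw1 : 0 < w 1 := by
    simp only [hw_def, hE1, mul_zero, add_zero]
    positivity
  have hx₀I : x₀ ∈ Ioo (0:ℝ) 1 := by
    refine ⟨hx₀.1.lt_of_ne (fun h => ?_), hx₀.2.lt_of_ne' (fun h => ?_)⟩
    · rw [← h] at hneg; linarith
    · rw [← h] at hneg; linarith
  have hx₀ad : x₀ ∈ Ioo a d := hIccsub hx₀
  -- derivative vanishes at interior minimum
  have hg0 : g x₀ = 0 := by
    have hloc : IsLocalMin w x₀ := hmin.isLocalMin (Icc_mem_nhds hx₀I.1 hx₀I.2)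
    have := hloc.hasDerivAt_eq_zero (hw' x₀ hx₀ad)
    exact this
  -- ψ = ε * w'
  set ψ : ℝ → ℝ := fun x => -β' * K * Real.exp (-β' * e x) + s * (ε x * deriv E x) with hψ_def
  have hφψ : ∀ x ∈ Ioo a d, ε x * deriv w x = ψ x := by
    intro x hx
    have hne : ε x ≠ 0 := (hεpos x (Ioo_subset_Icc_self hx)).ne'
    rw [(hw' x hx).deriv]
    simp only [hψ_def, hg_def]
    field_simp
  set D : ℝ := deriv (fun t => ε t * deriv E t) x₀ with hD_def
  have hψ' : HasDerivAt ψ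
      (-β' * K * (Real.exp (-β' * e x₀) * (-β' * (1 / ε x₀))) + s * D) x₀ := by
    exact ((((he x₀ hx₀ad).const_mul (-β')).exp.const_mul (-β' * K)).add
      ((hεE'.differentiableAt.hasDerivAt).const_mul s))
  -- the ODE at x₀
  have hDval : D = c x₀ * E x₀ - b x₀ * deriv E x₀ := by
    have := hode x₀ hx₀I
    rw [hD_def]; linarith
  have hε₀ : 0 < ε x₀ := hεpos x₀ (Ioo_subset_Icc_self hx₀ad)
  set P : ℝ := Real.exp (-β' * e x₀) with hP_def
  have hPpos : 0 < P := Real.exp_pos _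
  have hsE' : s * deriv E x₀ = β' * K * P * (1 / ε x₀) := by
    have := hg0
    simp only [hg_def, ← hP_def] at this
    nlinarith [this]
  have hsE : s * E x₀ = w x₀ - K * P := by
    have hwx : w x₀ = K * P + s * E x₀ := by simp only [hw_def, hP_def]
    linarith
  have hb₀ : β ≤ b x₀ := (hbnd x₀ (Ioo_subset_Icc_self hx₀I)).2.1
  have hc₀ : 0 ≤ c x₀ := (hbnd x₀ (Ioo_subset_Icc_self hx₀I)).2.2
  have hψ'neg : -β' * K * (Real.exp (-β' * e x₀) * (-β' * (1 / ε x₀))) + s * D < 0 := by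
    rw [hDval]
    have h1 : s * (c x₀ * E x₀ - b x₀ * deriv E x₀)
        = c x₀ * (s * E x₀) - b x₀ * (s * deriv E x₀) := by ring
    rw [h1, hsE, hsE', ← hP_def]
    have hinv : 0 < 1 / ε x₀ := by positivity
    have hKP : 0 < K * P * (1 / ε x₀) := by positivity
    nlinarith [mul_nonneg hc₀ (le_of_lt (neg_pos.2 hneg)), mul_nonneg hc₀ (mul_pos hKpos hPpos).le,
      mul_pos (mul_pos hβ'0 hKP) (sub_pos.2 (lt_of_lt_of_le hβ'β hb₀))]
  have hψx₀ : ψ x₀ = 0 := by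
    rw [← hφψ x₀ hx₀ad, (hw' x₀ hx₀ad).deriv, hg0, mul_zero]
  -- ψ is negative just to the right of x₀
  have hev : ∀ᶠ x in 𝓝[>] x₀, ψ x < 0 := by
    have hslope : Tendsto (slope ψ x₀) (𝓝[>] x₀)
        (𝓝 (-β' * K * (Real.exp (-β' * e x₀) * (-β' * (1 / ε x₀))) + s * D)) :=
      (hasDerivAt_iff_tendsto_slope.1 hψ').mono_left
        (nhdsWithin_mono _ (fun y hy => ne_of_gt hy))
    have h2 : ∀ᶠ x in 𝓝[>] x₀, slope ψ x₀ x < 0 :=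
      hslope.eventually (eventually_lt_nhds hψ'neg)
    filter_upwards [h2, self_mem_nhdsWithin] with x hx hx'
    have hxx : (0:ℝ) < x - x₀ := sub_pos.2 hx'
    have := hx
    rw [slope_def_field, div_lt_iff₀ hxx] at this
    · rw [hψx₀] at this; linarith [this]
  obtain ⟨u, hu, husub⟩ := mem_nhdsGT_iff_exists_Ioo_subset.1 hev
  set u' : ℝ := min u (min 1 d) with hu'_def
  have hu'x₀ : x₀ < u' := lt_min hu (lt_min hx₀I.2 (lt_trans hx₀I.2 hd1))
  have hu'1 : u' ≤ 1 := le_trans (min_le_right _ _) (min_le_left _ _)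
  have hsubad : Icc x₀ u' ⊆ Ioo a d := by
    intro x hx
    exact ⟨lt_of_lt_of_le hx₀ad.1 hx.1, lt_of_le_of_lt hx.2 (lt_of_le_of_lt hu'1 hd1)⟩
  have hanti : StrictAntiOn w (Icc x₀ u') := by
    apply strictAntiOn_of_deriv_neg (convex_Icc _ _)
      (fun x hx => (hwc x (hsubad hx)).continuousWithinAt)
    intro x hx
    rw [interior_Icc] at hx
    have hxad : x ∈ Ioo a d := hsubad ⟨hx.1.le, hx.2.le⟩
    have hψx : ψ x < 0 := husub ⟨hx.1, lt_of_lt_of_le hx.2 (le_trans (min_le_left _ _) le_rfl)⟩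
    have := hφψ x hxad
    have hεx : 0 < ε x := hεpos x (Ioo_subset_Icc_self hxad)
    nlinarith [this]
  have hcontr : w u' < w x₀ :=
    hanti (left_mem_Icc.2 hu'x₀.le) (right_mem_Icc.2 hu'x₀.le) hu'x₀
  have : w x₀ ≤ w u' := hmin ⟨le_trans hx₀I.1.le hu'x₀.le, hu'1⟩
  linarith

/-- Exponential-decay barrier bound for the layer part: if `b ≥ β > 0` and `c ≥ 0`
on `[0,1]` and `E` is a C² solution of `−(ε E')' − b E' + c E = 0` on `(0,1)` with
`E(1) = 0`, then `|E(x)| ≤ |E(0)| e^{−β e(x)}` for all `x ∈ [0,1]`, where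
`e(x) = ∫₀ˣ 1/ε(t) dt`. -/
theorem layer_part_barrier_bound
    (ε b c E : ℝ → ℝ) (β : ℝ) (hβ : 0 < β)
    (hε : ContDiff ℝ (⊤ : ℕ∞) ε) (hb : ContDiff ℝ (⊤ : ℕ∞) b) (hc : ContDiff ℝ (⊤ : ℕ∞) c)
    (hbnd : ∀ x ∈ Set.Icc (0:ℝ) 1, 0 < ε x ∧ β ≤ b x ∧ 0 ≤ c x)
    (hE : ContDiff ℝ 2 E)
    (hode : ∀ x ∈ Set.Ioo (0:ℝ) 1,
      -(deriv (fun t => ε t * deriv E t) x) - b x * deriv E x + c x * E x = 0)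
    (hE1 : E 1 = 0) :
    ∀ x ∈ Set.Icc (0:ℝ) 1,
      |E x| ≤ |E 0| * Real.exp (-β * ∫ t in (0:ℝ)..x, 1 / ε t) := by
  intro x hx
  set I : ℝ := ∫ t in (0:ℝ)..x, 1 / ε t with hI_def
  have key : ∀ t ∈ Ioo (0:ℝ) β, |E x| ≤ (|E 0| + t) * Real.exp (-(β - t) * I) := by
    intro t ht
    have h1 := layer_aux_barrier ε b c E β hε hbnd hE hode hE1 1 (Or.inl rfl)
      (β - t) (|E 0| + t) (by linarith [ht.2]) (by linarith [ht.1]) (by linarith [ht.1]) x hx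
    have h2 := layer_aux_barrier ε b c E β hε hbnd hE hode hE1 (-1) (Or.inr rfl)
      (β - t) (|E 0| + t) (by linarith [ht.2]) (by linarith [ht.1]) (by linarith [ht.1]) x hx
    rw [← hI_def] at h1 h2
    rw [abs_le]
    constructor <;> nlinarith [h1, h2]
  have hlim : Tendsto (fun t : ℝ => (|E 0| + t) * Real.exp (-(β - t) * I)) (𝓝[>] 0)
      (𝓝 ((|E 0| + 0) * Real.exp (-(β - 0) * I))) := by
    apply Tendsto.mono_left _ nhdsWithin_le_nhds
    exact (Continuous.tendsto (by continuity) 0)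
  have hle : |E x| ≤ (|E 0| + 0) * Real.exp (-(β - 0) * I) := by
    refine ge_of_tendsto hlim ?_
    filter_upwards [Ioo_mem_nhdsGT_of_mem ⟨le_rfl, hβ⟩] with t ht
    exact key t ht
  simpa using hle
end
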